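/- arXiv:2509.08564 — 9 statements merged into one kernel-verified Lean document; each statement's English description precedes it below -/
import Mathlib

section
/- Let m be a positive integer and let f_1, …, f_m : ℝ^m → ℝ be smooth functions, regarded as the components of the vector field ξ = Σ_{j=1}^m f_j ∂/∂x_j on Euclidean space. Then the pure second partial derivatives of all components vanish identically, i.e. ∂²f_j/∂x_k²(x) = 0 for all j, k ∈ {1,…,m} and all x ∈ ℝ^m, if and only if for every j ∈ {1,…,m} there exists a family of real constants (c_{j,P}) indexed by the subsets P ⊆ {1,…,m} such that f_j(x) = Σ_{P ⊆ {1,…,m}} c_{j,P} ∏_{i∈P} x_i for all x ∈ ℝ^m, where the empty product (for P = ∅) is by convention equal to 1. -/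
open Finset Function

namespace RoughAux

variable {m : ℕ}

/-- Directional derivative along coordinate `k`. -/
noncomputable def D (k : Fin m) (f : (Fin m → ℝ) → ℝ) : (Fin m → ℝ) → ℝ :=
  fun x => fderiv ℝ f x (Pi.single k 1)

/-- The continuous linear map zeroing out coordinate `k`. -/
noncomputable def Z (k : Fin m) : (Fin m → ℝ) →L[ℝ] (Fin m → ℝ) :=
  ContinuousLinearMap.id ℝ _ - (ContinuousLinearMap.proj k).smulRight (Pi.single k 1)

lemma Z_apply (k : Fin m) (x : Fin m → ℝ) : Z k x = Function.update x k 0 := by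
  funext i
  by_cases h : i = k
  · subst h
    simp [Z, ContinuousLinearMap.smulRight_apply]
  · simp [Z, ContinuousLinearMap.smulRight_apply, Function.update_of_ne h,
      Pi.single_eq_of_ne h]

lemma Z_single_self (k : Fin m) : Z k (Pi.single k 1) = 0 := by
  rw [Z_apply]
  funext i
  by_cases h : i = k
  · subst h; simp
  · simp [Function.update_of_ne h, Pi.single_eq_of_ne h]

lemma Z_single_ne (k j : Fin m) (h : j ≠ k) : Z k (Pi.single j 1) = Pi.single j 1 := by
  rw [Z_apply]
  funext i
  by_cases hik : i = k
  · subst hik; simp [Pi.single_eq_of_ne (Ne.symm h)]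
  · simp [Function.update_of_ne hik]

lemma D_contDiff {f : (Fin m → ℝ) → ℝ} (hf : ContDiff ℝ (⊤ : ℕ∞) f) (k : Fin m) :
    ContDiff ℝ (⊤ : ℕ∞) (D k f) :=
  (hf.fderiv_right (by simp)).clm_apply contDiff_const

lemma fderiv_comp_clm {f : (Fin m → ℝ) → ℝ} (hf : Differentiable ℝ f)
    (L : (Fin m → ℝ) →L[ℝ] (Fin m → ℝ)) (x v : Fin m → ℝ) :
    fderiv ℝ (fun y => f (L y)) x v = fderiv ℝ f (L x) (L v) := by
  rw [show (fun y => f (L y)) = f ∘ L from rfl,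
    fderiv_comp x (hf _) L.differentiableAt, L.fderiv]
  rfl


/-- If `f` doesn't depend on coordinate `i`, then `D j f` doesn't either, and `D i f = 0`. -/
lemma D_indep {f : (Fin m → ℝ) → ℝ} (hf : Differentiable ℝ f) {i : Fin m}
    (hind : ∀ x t, f (Function.update x i t) = f x) (j : Fin m) (x : Fin m → ℝ) (t : ℝ) :
    D j f (Function.update x i t) = D j f x := by
  have hF : f = fun y => f (Z i y) := by
    funext y; rw [Z_apply]; exact (hind y 0).symm
  have key : ∀ y, D j f y = fderiv ℝ f (Z i y) (Z i (Pi.single j 1)) := by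
    intro y
    conv_lhs => rw [D, hF]
    exact fderiv_comp_clm hf _ y _
  rw [key, key x]
  congr 2
  rw [Z_apply, Z_apply, Function.update_idem]

lemma D_zero_of_indep {f : (Fin m → ℝ) → ℝ} (hf : Differentiable ℝ f) {i : Fin m}
    (hind : ∀ x t, f (Function.update x i t) = f x) (x : Fin m → ℝ) :
    D i f x = 0 := by
  have hF : f = fun y => f (Z i y) := by
    funext y; rw [Z_apply]; exact (hind y 0).symm
  conv_lhs => rw [D, hF]
  rw [fderiv_comp_clm hf _ x _, Z_single_self]
  simp

/-- Symmetry of second derivatives. -/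
lemma D_symm {f : (Fin m → ℝ) → ℝ} (hf : ContDiff ℝ (⊤ : ℕ∞) f) (j k : Fin m) (x : Fin m → ℝ) :
    D j (D k f) x = D k (D j f) x := by
  have hd : Differentiable ℝ f := hf.differentiable (by simp)
  have hd1 : DifferentiableAt ℝ (fderiv ℝ f) x :=
    ((hf.fderiv_right (m := (⊤ : ℕ∞)) (by simp)).differentiable (by simp)) x
  have h1 : ∀ (v w : Fin m → ℝ),
      fderiv ℝ (fun y => fderiv ℝ f y v) x w = fderiv ℝ (fderiv ℝ f) x w v := by
    intro v w
    rw [fderiv_clm_apply hd1 (differentiableAt_const v)]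
    simp
  have hsymm := second_derivative_symmetric (f := f) (f' := fderiv ℝ f)
    (f'' := fderiv ℝ (fderiv ℝ f) x) (fun y => (hd y).hasFDerivAt) hd1.hasFDerivAt
    (Pi.single k 1) (Pi.single j 1)
  show fderiv ℝ (fun y => fderiv ℝ f y (Pi.single k 1)) x (Pi.single j 1)
      = fderiv ℝ (fun y => fderiv ℝ f y (Pi.single j 1)) x (Pi.single k 1)
  rw [h1, h1, hsymm]

lemma Dsq_D {f : (Fin m → ℝ) → ℝ} (hf : ContDiff ℝ (⊤ : ℕ∞) f) (k a : Fin m)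
    (h0 : ∀ x, D k (D k f) x = 0) (x : Fin m → ℝ) :
    D k (D k (D a f)) x = 0 := by
  have h1 : D k (D a f) = D a (D k f) := funext (D_symm hf k a)
  have h2 : D k (D a (D k f)) = D a (D k (D k f)) := funext (D_symm (D_contDiff hf k) k a)
  have h3 : D k (D k f) = fun _ => (0:ℝ) := funext h0
  rw [h1, h2, h3]
  simp [D]

lemma D_comp_Z_self {f : (Fin m → ℝ) → ℝ} (hf : Differentiable ℝ f) (a : Fin m) :
    D a (fun x => f (Z a x)) = fun _ => 0 := by
  funext x
  show fderiv ℝ (fun y => f (Z a y)) x (Pi.single a 1) = 0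
  rw [fderiv_comp_clm hf _ x _, Z_single_self]
  simp

lemma D_comp_Z_ne {f : (Fin m → ℝ) → ℝ} (hf : Differentiable ℝ f) {a k : Fin m}
    (h : k ≠ a) : D k (fun x => f (Z a x)) = fun x => D k f (Z a x) := by
  funext x
  show fderiv ℝ (fun y => f (Z a y)) x (Pi.single k 1) = _
  rw [fderiv_comp_clm hf _ x _, Z_single_ne a k h]
  rfl

lemma Dsq_comp_Z {f : (Fin m → ℝ) → ℝ} (hf : ContDiff ℝ (⊤ : ℕ∞) f) (k a : Fin m)
    (h0 : ∀ x, D k (D k f) x = 0) (x : Fin m → ℝ) :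
    D k (D k (fun y => f (Z a y))) x = 0 := by
  by_cases h : k = a
  · subst h
    rw [D_comp_Z_self (hf.differentiable (by simp))]
    simp [D]
  · rw [D_comp_Z_ne (hf.differentiable (by simp)) h,
      D_comp_Z_ne ((D_contDiff hf k).differentiable (by simp)) h]
    exact h0 _

/-- Affine structure in coordinate `k`. -/
lemma affine_in_coord {f : (Fin m → ℝ) → ℝ} (hf : ContDiff ℝ (⊤ : ℕ∞) f) (k : Fin m)
    (h0 : ∀ x, D k (D k f) x = 0) (x : Fin m → ℝ) :
    f x = f (Function.update x k 0) + x k * D k f (Function.update x k 0) := by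
  have hd : Differentiable ℝ f := hf.differentiable (by simp)
  have hd' : Differentiable ℝ (D k f) := (D_contDiff hf k).differentiable (by simp)
  set e : Fin m → ℝ := Pi.single k 1 with he
  set ℓ : ℝ → (Fin m → ℝ) := fun t => Function.update x k t with hℓ
  have hℓeq : ∀ t, ℓ t = Function.update x k 0 + t • e := by
    intro t; funext i
    by_cases h : i = k
    · subst h; simp [hℓ, he]
    · simp [hℓ, he, Function.update_of_ne h, Pi.single_eq_of_ne h]
  have hℓd : ∀ t : ℝ, HasDerivAt ℓ e t := by
    intro t
    have : HasDerivAt (fun t : ℝ => Function.update x k 0 + t • e) ((1:ℝ) • e) t :=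
      ((hasDerivAt_id t).smul_const e).const_add _
    rw [one_smul] at this
    exact this.congr_of_eventuallyEq
      (Filter.Eventually.of_forall fun s => hℓeq s)
  -- u = D k f ∘ ℓ is constant
  have hu : ∀ t : ℝ, HasDerivAt (fun s => D k f (ℓ s)) (D k (D k f) (ℓ t)) t := by
    intro t
    exact (hd' (ℓ t)).hasFDerivAt.comp_hasDerivAt t (hℓd t)
  have huconst : ∀ t : ℝ, D k f (ℓ t) = D k f (ℓ 0) := by
    intro t
    have : ∀ s, deriv (fun s => D k f (ℓ s)) s = 0 := by
      intro s; rw [(hu s).deriv, h0]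
    exact is_const_of_deriv_eq_zero (fun s => (hu s).differentiableAt) this t 0
  -- g = f ∘ ℓ has constant derivative c
  set c : ℝ := D k f (Function.update x k 0) with hc
  have hg : ∀ t : ℝ, HasDerivAt (fun s => f (ℓ s)) c t := by
    intro t
    have h1 : HasDerivAt (fun s => f (ℓ s)) (fderiv ℝ f (ℓ t) e) t :=
      (hd (ℓ t)).hasFDerivAt.comp_hasDerivAt t (hℓd t)
    have h2 : fderiv ℝ f (ℓ t) e = c := by
      have := huconst t
      simpa [D, hc, hℓ] using this
    rwa [h2] at h1
  have hφ : ∀ t : ℝ, f (ℓ t) - t * c = f (ℓ 0) - 0 * c := by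
    intro t
    have hder : ∀ s : ℝ, HasDerivAt (fun t : ℝ => f (ℓ t) - t * c) 0 s := by
      intro s
      have := (hg s).fun_sub (hasDerivAt_mul_const (x := s) c)
      simpa using this
    exact is_const_of_deriv_eq_zero (fun s => (hder s).differentiableAt)
      (fun s => (hder s).deriv) t 0
  have := hφ (x k)
  have hx : ℓ (x k) = x := Function.update_eq_self k x
  have h0' : ℓ 0 = Function.update x k 0 := rfl
  rw [hx, h0'] at this
  linarith [this]

lemma const_of_indep_all {f : (Fin m → ℝ) → ℝ}
    (hind : ∀ (i : Fin m) (x : Fin m → ℝ) (t : ℝ), f (Function.update x i t) = f x)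
    (x : Fin m → ℝ) : f x = f 0 := by
  have key : ∀ S : Finset (Fin m), f x = f (fun i => if i ∈ S then 0 else x i) := by
    intro S
    induction S using Finset.induction_on with
    | empty => simp
    | @insert a S ha ih =>
      have heq : (fun i => if i ∈ insert a S then (0:ℝ) else x i)
          = Function.update (fun i => if i ∈ S then 0 else x i) a 0 := by
        funext i
        by_cases h : i = a
        · subst h; simp
        · simp [Function.update_of_ne h, h, Finset.mem_insert]
      rw [heq, hind a _ 0, ← ih]
  have h := key Finset.univ
  simpa [Pi.zero_def] using h

lemma main_decomp (S : Finset (Fin m)) (f : (Fin m → ℝ) → ℝ) (hf : ContDiff ℝ (⊤ : ℕ∞) f)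
    (h0 : ∀ (k : Fin m) (x : Fin m → ℝ), D k (D k f) x = 0) :
    ∃ g : Finset (Fin m) → ((Fin m → ℝ) → ℝ),
      (∀ P, ContDiff ℝ (⊤ : ℕ∞) (g P)) ∧
      (∀ P (k : Fin m) (x : Fin m → ℝ), D k (D k (g P)) x = 0) ∧
      (∀ P, ∀ i ∈ S, ∀ (x : Fin m → ℝ) (t : ℝ),
        g P (Function.update x i t) = g P x) ∧
      (∀ x : Fin m → ℝ, f x = ∑ P ∈ S.powerset, (∏ i ∈ P, x i) * g P x) := by
  induction S using Finset.induction_on with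
  | empty =>
    refine ⟨fun _ => f, fun _ => hf, fun _ => h0, by simp, by simp⟩
  | @insert a S ha ih =>
    obtain ⟨g, hg1, hg2, hg3, hg4⟩ := ih
    classical
    refine ⟨fun Q => if a ∈ Q then (fun x => D a (g (Q.erase a)) (Z a x))
        else (fun x => g Q (Z a x)), ?_, ?_, ?_, ?_⟩
    · intro Q
      by_cases h : a ∈ Q <;> simp only [h, if_pos, if_neg, ite_true, ite_false]
      · exact (D_contDiff (hg1 _) a).comp (Z a).contDiff
      · exact (hg1 _).comp (Z a).contDiff
    · intro Q k x
      by_cases h : a ∈ Q <;> simp only [h, ite_true, ite_false]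
      · exact Dsq_comp_Z (D_contDiff (hg1 _) a) k a
          (Dsq_D (hg1 _) k a (fun y => hg2 _ k y)) x
      · exact Dsq_comp_Z (hg1 _) k a (fun y => hg2 _ k y) x
    · intro Q i hi x t
      rcases Finset.mem_insert.mp hi with hia | hiS
      · subst hia
        by_cases h : i ∈ Q <;> simp only [h, ite_true, ite_false] <;>
          rw [Z_apply, Z_apply, Function.update_idem]
      · have hine : i ≠ a := fun hcon => ha (hcon ▸ hiS)
        have hcomm : Z a (Function.update x i t) = Function.update (Z a x) i t := by
          rw [Z_apply, Z_apply, Function.update_comm hine]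
        by_cases h : a ∈ Q <;> simp only [h, ite_true, ite_false] <;> rw [hcomm]
        · exact D_indep ((hg1 _).differentiable (by simp)) (fun y s => hg3 _ i hiS y s) a _ t
        · exact hg3 _ i hiS _ t
    · intro x
      have hterm : ∀ P ∈ S.powerset, (∏ i ∈ P, x i) * g P x
          = (∏ i ∈ P, x i) * (if a ∈ P then (fun y => D a (g (P.erase a)) (Z a y))
              else (fun y => g P (Z a y))) x
            + (∏ i ∈ insert a P, x i) *
              (if a ∈ insert a P then (fun y => D a (g ((insert a P).erase a)) (Z a y))
              else (fun y => g (insert a P) (Z a y))) x := by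
        intro P hP
        have haP : a ∉ P := fun h => ha (Finset.mem_powerset.mp hP h)
        rw [if_neg haP, if_pos (Finset.mem_insert_self a P), Finset.erase_insert haP,
          Finset.prod_insert haP]
        have := affine_in_coord (hg1 P) a (fun y => hg2 P a y) x
        rw [Z_apply]
        rw [this]
        ring
      calc f x = ∑ P ∈ S.powerset, (∏ i ∈ P, x i) * g P x := hg4 x
        _ = ∑ P ∈ S.powerset, ((∏ i ∈ P, x i) *
              (if a ∈ P then (fun y => D a (g (P.erase a)) (Z a y))
                else (fun y => g P (Z a y))) x
            + (∏ i ∈ insert a P, x i) *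
              (if a ∈ insert a P then (fun y => D a (g ((insert a P).erase a)) (Z a y))
                else (fun y => g (insert a P) (Z a y))) x) :=
          Finset.sum_congr rfl hterm
        _ = _ := by
          rw [Finset.sum_add_distrib, Finset.sum_powerset_insert ha]

lemma mono_contDiff (P : Finset (Fin m)) :
    ContDiff ℝ (⊤ : ℕ∞) (fun x : Fin m → ℝ => ∏ i ∈ P, x i) :=
  contDiff_prod fun i _ => (ContinuousLinearMap.proj i : (Fin m → ℝ) →L[ℝ] ℝ).contDiff

lemma mono_indep {P : Finset (Fin m)} {k : Fin m} (hk : k ∉ P) (x : Fin m → ℝ) (t : ℝ) :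
    (∏ i ∈ P, Function.update x k t i) = ∏ i ∈ P, x i :=
  Finset.prod_congr rfl fun j hj =>
    Function.update_of_ne (by rintro rfl; exact hk hj) _ _

lemma D_mono {P : Finset (Fin m)} {k : Fin m} (hk : k ∈ P) (x : Fin m → ℝ) :
    D k (fun y => ∏ i ∈ P, y i) x = ∏ i ∈ P.erase k, x i := by
  have hrw : (fun y : Fin m → ℝ => ∏ i ∈ P, y i)
      = fun y => y k * ∏ i ∈ P.erase k, y i := by
    funext y
    rw [Finset.mul_prod_erase P _ hk]
  rw [D, hrw]
  have hdm : DifferentiableAt ℝ (fun y : Fin m → ℝ => ∏ i ∈ P.erase k, y i) x :=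
    ((mono_contDiff (P.erase k)).differentiable (by simp)) x
  have hdp : DifferentiableAt ℝ (fun y : Fin m → ℝ => y k) x :=
    (ContinuousLinearMap.proj k : (Fin m → ℝ) →L[ℝ] ℝ).differentiableAt
  rw [fderiv_fun_mul hdp hdm]
  have h1 : fderiv ℝ (fun y : Fin m → ℝ => ∏ i ∈ P.erase k, y i) x (Pi.single k 1) = 0 :=
    D_zero_of_indep ((mono_contDiff (P.erase k)).differentiable (by simp))
      (fun y t => mono_indep (Finset.notMem_erase k P) y t) x
  have h2 : fderiv ℝ (fun y : Fin m → ℝ => y k) x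
      = (ContinuousLinearMap.proj k : (Fin m → ℝ) →L[ℝ] ℝ) :=
    (ContinuousLinearMap.proj k : (Fin m → ℝ) →L[ℝ] ℝ).fderiv
  simp [h1, h2]

lemma D_mono_zero {P : Finset (Fin m)} {k : Fin m} (hk : k ∉ P) (x : Fin m → ℝ) :
    D k (fun y => ∏ i ∈ P, y i) x = 0 :=
  D_zero_of_indep ((mono_contDiff P).differentiable (by simp))
    (fun y t => mono_indep hk y t) x

lemma reverse_dir (c : Finset (Fin m) → ℝ) (k : Fin m) (x : Fin m → ℝ) :
    D k (D k (fun y => ∑ P : Finset (Fin m), c P * ∏ i ∈ P, y i)) x = 0 := by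
  classical
  have hdiff : ∀ (P : Finset (Fin m)) (y : Fin m → ℝ),
      DifferentiableAt ℝ (fun z : Fin m → ℝ => c P * ∏ i ∈ P, z i) y :=
    fun P y => (((mono_contDiff P).differentiable (by simp)) y).const_mul _
  have hDk : D k (fun y => ∑ P : Finset (Fin m), c P * ∏ i ∈ P, y i)
      = fun y => ∑ P : Finset (Fin m), c P * (if k ∈ P then ∏ i ∈ P.erase k, y i else 0) := by
    funext y
    show fderiv ℝ (fun z => ∑ P ∈ Finset.univ, c P * ∏ i ∈ P, z i) y (Pi.single k 1) = _
    rw [fderiv_fun_sum (fun P _ => hdiff P y)]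
    rw [ContinuousLinearMap.sum_apply]
    refine Finset.sum_congr rfl fun P _ => ?_
    rw [fderiv_const_mul (((mono_contDiff P).differentiable (by simp)) y)]
    by_cases hk : k ∈ P
    · rw [if_pos hk]
      simp only [ContinuousLinearMap.smul_apply, smul_eq_mul]
      congr 1
      exact D_mono hk y
    · rw [if_neg hk]
      simp only [ContinuousLinearMap.smul_apply, smul_eq_mul]
      rw [show fderiv ℝ (fun z : Fin m → ℝ => ∏ i ∈ P, z i) y (Pi.single k 1)
        = D k (fun z : Fin m → ℝ => ∏ i ∈ P, z i) y from rfl, D_mono_zero hk]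
  rw [hDk]
  refine D_zero_of_indep ?_ ?_ x
  · refine Differentiable.fun_sum fun P _ => ?_
    by_cases hk : k ∈ P
    · simp only [if_pos hk]
      exact (((mono_contDiff (P.erase k)).differentiable (by simp)).const_mul _)
    · simp only [if_neg hk]
      simp only [mul_zero]
      exact differentiable_const 0
  · intro y t
    refine Finset.sum_congr rfl fun P _ => ?_
    by_cases hk : k ∈ P
    · simp only [if_pos hk]
      rw [mono_indep (Finset.notMem_erase k P) y t]
    · simp [if_neg hk]

end RoughAux

open RoughAux in
/-- A smooth vector field `ξ = Σ_j f_j ∂/∂x_j` on `ℝ^m` is of rough-type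
(i.e. all pure second partial derivatives of all components vanish identically) iff each
component is a linear combination of square-free monomials `∏_{i ∈ P} x_i`, `P ⊆ {1,…,m}`. -/
theorem rough_type_iff_multilinear_poly (m : ℕ) (hm : 0 < m)
    (f : Fin m → (Fin m → ℝ) → ℝ) (hf : ∀ j, ContDiff ℝ (⊤ : ℕ∞) (f j)) :
    (∀ (j k : Fin m) (x : Fin m → ℝ),
        fderiv ℝ (fun y => fderiv ℝ (f j) y (Pi.single k 1)) x (Pi.single k 1) = 0)
      ↔ (∀ j : Fin m, ∃ c : Finset (Fin m) → ℝ,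
          ∀ x : Fin m → ℝ, f j x = ∑ P : Finset (Fin m), c P * ∏ i ∈ P, x i) := by
  constructor
  · intro h j
    have h0 : ∀ (k : Fin m) (x : Fin m → ℝ), D k (D k (f j)) x = 0 := fun k x => h j k x
    obtain ⟨g, hg1, hg2, hg3, hg4⟩ := main_decomp Finset.univ (f j) (hf j) h0
    refine ⟨fun P => g P 0, fun x => ?_⟩
    calc f j x = ∑ P ∈ Finset.univ.powerset, (∏ i ∈ P, x i) * g P x := hg4 x
      _ = ∑ P : Finset (Fin m), g P 0 * ∏ i ∈ P, x i := by
          rw [Finset.powerset_univ]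
          refine Finset.sum_congr rfl fun P _ => ?_
          rw [const_of_indep_all (fun i y t => hg3 P i (Finset.mem_univ i) y t) x]
          ring
  · intro h j k x
    obtain ⟨c, hc⟩ := h j
    have hfg : f j = fun y => ∑ P : Finset (Fin m), c P * ∏ i ∈ P, y i := funext hc
    rw [hfg]
    exact reverse_dir c k x
end

section
/- Let m be a positive integer and let f : ℝ^m → ℝ be a smooth function. Then ∂²f/∂x_k²(x) = 0 for every k ∈ {1,…,m} and every x ∈ ℝ^m if and only if there exists a family of real constants (c_P) indexed by the subsets P ⊆ {1,…,m} such that f(x) = Σ_{P ⊆ {1,…,m}} c_P ∏_{i∈P} x_i for all x ∈ ℝ^m, where the empty product (for P = ∅) is by convention equal to 1. -/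
set_option linter.unusedVariables false

lemma affine_of_deriv2 (g g' : ℝ → ℝ) (hg : ∀ t, HasDerivAt g (g' t) t)
    (hg' : ∀ t, HasDerivAt g' 0 t) (t : ℝ) : g t = g 0 + t * g' 0 := by
  have hconst : ∀ s, g' s = g' 0 := fun s =>
    is_const_of_deriv_eq_zero (fun u => (hg' u).differentiableAt)
      (fun u => (hg' u).deriv) s 0
  have h : ∀ s, HasDerivAt (fun u => g u - u * g' 0) 0 s := by
    intro s
    have := (hg s).fun_sub ((hasDerivAt_id s).mul_const (g' 0))
    simpa [hconst s] using this
  have := is_const_of_deriv_eq_zero (fun u => (h u).differentiableAt)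
    (fun u => (h u).deriv) t 0
  simp at this
  linarith

noncomputable section
open Function

variable {m : ℕ}

lemma curve_hasDerivAt (x : Fin m → ℝ) (k : Fin m) (t : ℝ) :
    HasDerivAt (fun s => Function.update x k s) (Pi.single k 1) t := by
  rw [hasDerivAt_pi]
  intro i
  rcases eq_or_ne i k with rfl | hik
  · simpa using (hasDerivAt_id' t)
  · simpa [Function.update_apply, hik, Pi.single_apply, hik] using (hasDerivAt_const t (x i))

lemma one_var_decomp (f : (Fin m → ℝ) → ℝ) (hf : ContDiff ℝ (⊤ : ℕ∞) f) (k : Fin m)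
    (h2 : ∀ x, fderiv ℝ (fun y => fderiv ℝ f y (Pi.single k 1)) x (Pi.single k 1) = 0)
    (x : Fin m → ℝ) :
    f x = f (Function.update x k 0) + x k * fderiv ℝ f (Function.update x k 0) (Pi.single k 1) := by
  have hfd : Differentiable ℝ f := hf.differentiable (by simp)
  have hfd2 : Differentiable ℝ (fun y => fderiv ℝ f y (Pi.single k 1)) := by
    exact (hf.fderiv_right (m := ((⊤:ℕ∞) : WithTop ℕ∞)) (by simp)).differentiable (by simp) |>.clm_apply
      (differentiable_const _)
  set g : ℝ → ℝ := fun t => f (Function.update x k t) with hgdef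
  set g' : ℝ → ℝ := fun t => fderiv ℝ f (Function.update x k t) (Pi.single k 1) with hg'def
  have hg : ∀ t, HasDerivAt g (g' t) t := fun t =>
    (hfd _).hasFDerivAt.comp_hasDerivAt t (curve_hasDerivAt x k t)
  have hg' : ∀ t, HasDerivAt g' 0 t := by
    intro t
    have := (hfd2 _).hasFDerivAt.comp_hasDerivAt t (curve_hasDerivAt x k t)
    simpa [h2, Function.comp_def] using this
  have key := affine_of_deriv2 g g' hg hg' (x k)
  simpa [hgdef, hg'def, Function.update_eq_self] using key

lemma pderiv_smooth {f : (Fin m → ℝ) → ℝ} (hf : ContDiff ℝ (⊤ : ℕ∞) f) (w : Fin m → ℝ) :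
    ContDiff ℝ (⊤ : ℕ∞) (fun z => fderiv ℝ f z w) :=
  ((hf.fderiv_right (m := ((⊤:ℕ∞) : WithTop ℕ∞)) (by simp)).clm_apply contDiff_const)

lemma fderiv_pderiv {f : (Fin m → ℝ) → ℝ} (hf : ContDiff ℝ (⊤ : ℕ∞) f)
    (w v x : Fin m → ℝ) :
    fderiv ℝ (fun y => fderiv ℝ f y w) x v = fderiv ℝ (fderiv ℝ f) x v w := by
  rw [fderiv_clm_apply (((hf.fderiv_right (m := ((⊤:ℕ∞) : WithTop ℕ∞)) (by simp)).differentiable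
      (by simp)) x) (differentiableAt_const w)]
  simp

lemma pderiv_comm {f : (Fin m → ℝ) → ℝ} (hf : ContDiff ℝ (⊤ : ℕ∞) f)
    (w v x : Fin m → ℝ) :
    fderiv ℝ (fun y => fderiv ℝ f y w) x v = fderiv ℝ (fun y => fderiv ℝ f y v) x w := by
  rw [fderiv_pderiv hf, fderiv_pderiv hf]
  exact hf.contDiffAt.isSymmSndFDerivAt (by rw [minSmoothness_of_isRCLikeNormedField]; norm_cast) v w

lemma pderiv_D2_zero {f : (Fin m → ℝ) → ℝ} (hf : ContDiff ℝ (⊤ : ℕ∞) f) {v : Fin m → ℝ}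
    (h2 : ∀ x, fderiv ℝ (fun y => fderiv ℝ f y v) x v = 0) (w : Fin m → ℝ) (x : Fin m → ℝ) :
    fderiv ℝ (fun y => fderiv ℝ (fun z => fderiv ℝ f z w) y v) x v = 0 := by
  set H : (Fin m → ℝ) → ℝ := fun z => fderiv ℝ f z v with hH
  have hHs : ContDiff ℝ (⊤ : ℕ∞) H := pderiv_smooth hf v
  have e1 : (fun y => fderiv ℝ (fun z => fderiv ℝ f z w) y v) = fun y => fderiv ℝ H y w := by
    funext y
    exact pderiv_comm hf w v y
  rw [e1, pderiv_comm hHs w v x]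
  have e2 : (fun y => fderiv ℝ H y v) = fun _ => (0:ℝ) := funext h2
  rw [e2]
  simp

lemma fderiv_comp_clm {f : (Fin m → ℝ) → ℝ} (hf : ContDiff ℝ (⊤ : ℕ∞) f)
    (L : (Fin m → ℝ) →L[ℝ] (Fin m → ℝ)) (x v : Fin m → ℝ) :
    fderiv ℝ (fun y => f (L y)) x v = fderiv ℝ f (L x) (L v) := by
  have h := ((hf.differentiable (by simp) (L x)).hasFDerivAt.comp x L.hasFDerivAt).fderiv
  rw [show (fun y => f (L y)) = f ∘ L from rfl, h]
  rfl

lemma D2_comp_clm {f : (Fin m → ℝ) → ℝ} (hf : ContDiff ℝ (⊤ : ℕ∞) f)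
    (L : (Fin m → ℝ) →L[ℝ] (Fin m → ℝ)) {v : Fin m → ℝ} (hLv : L v = v) (x : Fin m → ℝ) :
    fderiv ℝ (fun y => fderiv ℝ (fun z => f (L z)) y v) x v
      = fderiv ℝ (fun z => fderiv ℝ f z v) (L x) v := by
  have e1 : (fun y => fderiv ℝ (fun z => f (L z)) y v) = fun y => (fun z => fderiv ℝ f z v) (L y) := by
    funext y
    rw [fderiv_comp_clm hf L y v, hLv]
  rw [e1, fderiv_comp_clm (pderiv_smooth hf v) L x v, hLv]

def maskL (S : Finset (Fin m)) : (Fin m → ℝ) →L[ℝ] (Fin m → ℝ) :=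
  ContinuousLinearMap.pi (fun i => if i ∈ S then ContinuousLinearMap.proj i else 0)

lemma maskL_apply (S : Finset (Fin m)) (x : Fin m → ℝ) (i : Fin m) :
    maskL S x i = if i ∈ S then x i else 0 := by
  simp only [maskL, ContinuousLinearMap.pi_apply]
  split <;> simp_all

lemma maskL_single {S : Finset (Fin m)} {k : Fin m} (hk : k ∈ S) :
    maskL S (Pi.single k (1:ℝ)) = Pi.single k 1 := by
  funext i
  rw [maskL_apply]
  rcases eq_or_ne i k with rfl | h
  · simp [hk]
  · simp [Pi.single_apply, h]

lemma dep_pderiv {f : (Fin m → ℝ) → ℝ} (hf : ContDiff ℝ (⊤ : ℕ∞) f) {S : Finset (Fin m)}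
    (hdep : ∀ x, f x = f (maskL S x)) {k : Fin m} (hk : k ∈ S) (y : Fin m → ℝ) :
    fderiv ℝ f y (Pi.single k 1) = fderiv ℝ f (maskL S y) (Pi.single k 1) := by
  have : f = fun z => f (maskL S z) := funext hdep
  conv_lhs => rw [this]
  rw [fderiv_comp_clm hf (maskL S) y _, maskL_single hk]

lemma maskL_update (k : Fin m) (x : Fin m → ℝ) :
    maskL (Finset.univ.erase k) x = Function.update x k 0 := by
  funext i
  rw [maskL_apply, Function.update_apply]
  rcases eq_or_ne i k with rfl | h
  · simp
  · simp [h]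

lemma mask_comm (T : Finset (Fin m)) (k : Fin m) (x : Fin m → ℝ) :
    maskL (insert k T) (maskL (Finset.univ.erase k) x)
      = maskL (Finset.univ.erase k) (maskL T x) := by
  funext i
  simp only [maskL_apply]
  rcases eq_or_ne i k with rfl | h
  · simp
  · simp [h, Finset.mem_insert]

lemma main_ind (S : Finset (Fin m)) :
    ∀ f : (Fin m → ℝ) → ℝ, ContDiff ℝ (⊤ : ℕ∞) f →
    (∀ k ∈ S, ∀ x, fderiv ℝ (fun y => fderiv ℝ f y (Pi.single k 1)) x (Pi.single k 1) = 0) →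
    (∀ x, f x = f (maskL S x)) →
    ∃ c : Finset (Fin m) → ℝ, ∀ x, f x = ∑ P ∈ S.powerset, c P * ∏ i ∈ P, x i := by
  induction S using Finset.induction_on with
  | empty =>
    intro f hf h2 hdep
    refine ⟨fun _ => f 0, fun x => ?_⟩
    have : maskL (∅ : Finset (Fin m)) x = 0 := by
      funext i; simp [maskL_apply]
    rw [hdep x, this]
    simp
  | @insert k T hk ih =>
    intro f hf h2 hdep
    set L := maskL (Finset.univ.erase k) with hL
    set A : (Fin m → ℝ) → ℝ := fun x => f (L x) with hA
    set F : (Fin m → ℝ) → ℝ := fun z => fderiv ℝ f z (Pi.single k 1) with hF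
    set B : (Fin m → ℝ) → ℝ := fun x => F (L x) with hB
    have hAs : ContDiff ℝ (⊤ : ℕ∞) A := hf.comp L.contDiff
    have hFs : ContDiff ℝ (⊤ : ℕ∞) F := pderiv_smooth hf _
    have hBs : ContDiff ℝ (⊤ : ℕ∞) B := hFs.comp L.contDiff
    have hLsingle : ∀ j ∈ T, L (Pi.single j (1:ℝ)) = Pi.single j 1 := by
      intro j hj
      exact maskL_single (Finset.mem_erase.2 ⟨fun hjk => hk (hjk ▸ hj), Finset.mem_univ j⟩)
    have hLx : ∀ x, L x = Function.update x k 0 := maskL_update k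
    -- decomposition
    have hdec : ∀ x, f x = A x + x k * B x := by
      intro x
      have h0 := one_var_decomp f hf k (h2 k (Finset.mem_insert_self k T)) x
      rw [← hLx x] at h0
      exact h0
    -- second partials of A
    have h2A : ∀ j ∈ T, ∀ x,
        fderiv ℝ (fun y => fderiv ℝ A y (Pi.single j 1)) x (Pi.single j 1) = 0 := by
      intro j hj x
      rw [hA, D2_comp_clm hf L (hLsingle j hj) x]
      exact h2 j (Finset.mem_insert_of_mem hj) (L x)
    -- second partials of B
    have h2B : ∀ j ∈ T, ∀ x,
        fderiv ℝ (fun y => fderiv ℝ B y (Pi.single j 1)) x (Pi.single j 1) = 0 := by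
      intro j hj x
      rw [hB, D2_comp_clm hFs L (hLsingle j hj) x]
      exact pderiv_D2_zero hf (h2 j (Finset.mem_insert_of_mem hj)) (Pi.single k 1) (L x)
    -- dependence of A
    have hdepA : ∀ x, A x = A (maskL T x) := by
      intro x
      calc A x = f (L x) := rfl
        _ = f (maskL (insert k T) (L x)) := hdep (L x)
        _ = f (L (maskL T x)) := by rw [hL, mask_comm]
        _ = A (maskL T x) := rfl
    -- dependence of B
    have hdepB : ∀ x, B x = B (maskL T x) := by
      intro x
      calc B x = fderiv ℝ f (L x) (Pi.single k 1) := rfl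
        _ = fderiv ℝ f (maskL (insert k T) (L x)) (Pi.single k 1) :=
            dep_pderiv hf hdep (Finset.mem_insert_self k T) (L x)
        _ = fderiv ℝ f (L (maskL T x)) (Pi.single k 1) := by rw [hL, mask_comm]
        _ = B (maskL T x) := rfl
    obtain ⟨a, ha⟩ := ih A hAs h2A hdepA
    obtain ⟨b, hb⟩ := ih B hBs h2B hdepB
    refine ⟨fun P => if k ∈ P then b (P.erase k) else a P, fun x => ?_⟩
    rw [hdec x, ha x, hb x, Finset.powerset_insert, Finset.sum_union]
    · congr 1
      · apply Finset.sum_congr rfl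
        intro P hP
        have : k ∉ P := fun h => hk (Finset.mem_powerset.1 hP h)
        simp [this]
      · rw [Finset.sum_image (fun P hP Q hQ h => by
          have hkP : k ∉ P := fun h' => hk (Finset.mem_powerset.1 hP h')
          have hkQ : k ∉ Q := fun h' => hk (Finset.mem_powerset.1 hQ h')
          rw [← Finset.erase_insert hkP, ← Finset.erase_insert hkQ, h]),
          Finset.mul_sum]
        apply Finset.sum_congr rfl
        intro P hP
        have hkP : k ∉ P := fun h' => hk (Finset.mem_powerset.1 hP h')
        rw [Finset.prod_insert hkP]
        simp [hkP, Finset.erase_insert hkP]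
        ring
    · rw [Finset.disjoint_left]
      intro P hP hP'
      obtain ⟨Q, hQ, rfl⟩ := Finset.mem_image.1 hP'
      exact hk (Finset.mem_powerset.1 hP (Finset.mem_insert_self k Q))

lemma poly_hasFDeriv (d : Finset (Fin m) → ℝ) (y : Fin m → ℝ) :
    HasFDerivAt (fun x : Fin m → ℝ => ∑ P : Finset (Fin m), d P * ∏ i ∈ P, x i)
      (∑ P : Finset (Fin m), d P • ∑ i ∈ P, (∏ j ∈ P.erase i, y j) •
        (ContinuousLinearMap.proj i : (Fin m → ℝ) →L[ℝ] ℝ)) y := by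
  apply HasFDerivAt.fun_sum
  intro P _
  exact (HasFDerivAt.finset_prod (fun i _ => (ContinuousLinearMap.proj i :
    (Fin m → ℝ) →L[ℝ] ℝ).hasFDerivAt)).const_mul (d P)

lemma poly_pderiv (d : Finset (Fin m) → ℝ) (k : Fin m) (y : Fin m → ℝ) :
    fderiv ℝ (fun x : Fin m → ℝ => ∑ P : Finset (Fin m), d P * ∏ i ∈ P, x i) y (Pi.single k 1)
      = ∑ P : Finset (Fin m), (if k ∈ P then d P * ∏ j ∈ P.erase k, y j else 0) := by
  rw [(poly_hasFDeriv d y).fderiv]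
  simp only [ContinuousLinearMap.coe_sum', Finset.sum_apply, ContinuousLinearMap.coe_smul',
    Pi.smul_apply, ContinuousLinearMap.proj_apply, Pi.single_apply, smul_eq_mul, mul_ite,
    mul_one, mul_zero, Finset.sum_ite_eq']

lemma reindex (d : Finset (Fin m) → ℝ) (k : Fin m) (y : Fin m → ℝ) :
    ∑ P : Finset (Fin m), (if k ∈ P then d P * ∏ j ∈ P.erase k, y j else 0)
      = ∑ P : Finset (Fin m), (if k ∈ P then 0 else d (insert k P)) * ∏ i ∈ P, y i := by
  rw [← Finset.sum_filter]
  have hrhs : ∀ P : Finset (Fin m), (if k ∈ P then 0 else d (insert k P)) * ∏ i ∈ P, y i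
      = if k ∉ P then d (insert k P) * ∏ i ∈ P, y i else 0 := by
    intro P
    by_cases h : k ∈ P <;> simp [h]
  simp_rw [hrhs]
  rw [← Finset.sum_filter]
  apply Finset.sum_nbij' (fun P => P.erase k) (fun Q => insert k Q)
  · intro P hP
    simp only [Finset.mem_filter, Finset.mem_univ, true_and] at hP ⊢
    exact Finset.notMem_erase k P
  · intro Q hQ
    simp only [Finset.mem_filter, Finset.mem_univ, true_and] at hQ ⊢
    exact Finset.mem_insert_self k Q
  · intro P hP
    simp only [Finset.mem_filter, Finset.mem_univ, true_and] at hP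
    exact Finset.insert_erase hP
  · intro Q hQ
    simp only [Finset.mem_filter, Finset.mem_univ, true_and] at hQ
    exact Finset.erase_insert hQ
  · intro P hP
    simp only [Finset.mem_filter, Finset.mem_univ, true_and] at hP
    rw [Finset.insert_erase hP]

end

/-- A smooth function `f : ℝ^m → ℝ` satisfies `∂²f/∂x_k² = 0` for all
`k ∈ {1,…,m}` everywhere iff `f` is a linear combination of the square-free monomials
`∏_{i ∈ P} x_i` over subsets `P ⊆ {1,…,m}` (empty product equal to `1`). -/
theorem pure_second_partials_vanish_iff_multilinear_poly (m : ℕ) (hm : 0 < m)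
    (f : (Fin m → ℝ) → ℝ) (hf : ContDiff ℝ (⊤ : ℕ∞) f) :
    (∀ (k : Fin m) (x : Fin m → ℝ),
        fderiv ℝ (fun y => fderiv ℝ f y (Pi.single k 1)) x (Pi.single k 1) = 0)
      ↔ (∃ c : Finset (Fin m) → ℝ,
          ∀ x : Fin m → ℝ, f x = ∑ P : Finset (Fin m), c P * ∏ i ∈ P, x i) := by
  constructor
  · intro h2
    have hf' : ContDiff ℝ (⊤ : ℕ∞) f := hf.of_le (by simp)
    have hmask : ∀ x : Fin m → ℝ, maskL Finset.univ x = x := by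
      intro x; funext i; simp [maskL_apply]
    obtain ⟨c, hc⟩ := main_ind Finset.univ f hf' (fun k _ => h2 k)
      (fun x => by rw [hmask x])
    refine ⟨c, fun x => ?_⟩
    rw [hc x, Finset.powerset_univ]
  · rintro ⟨c, hc⟩ k x
    have hfe : f = fun x => ∑ P : Finset (Fin m), c P * ∏ i ∈ P, x i := funext hc
    have h1 : (fun y => fderiv ℝ f y (Pi.single k 1))
        = fun y => ∑ P : Finset (Fin m),
            (if k ∈ P then 0 else c (insert k P)) * ∏ i ∈ P, y i := by
      funext y
      rw [hfe, poly_pderiv, reindex]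
    rw [h1, poly_pderiv]
    apply Finset.sum_eq_zero
    intro P _
    by_cases h : k ∈ P <;> simp [h]
end

section
/- Let m be a positive integer and l a real number, and let ψ : ℝ^m ∖ {0} → ℝ^m be the Kelvin-type map ψ(x) = ‖x‖^{−l} x. Then for every x ∈ ℝ^m with x ≠ 0, the componentwise Laplacian of ψ satisfies (Δψ)(x) = l(l−m) ‖x‖^{−l−2} x. -/
open scoped BigOperators
open scoped RealInnerProductSpace

/-- The componentwise (rough) Laplacian `Δf = Σ_i ∂²f/∂x_i²` of a map defined on
Euclidean space, computed via iterated Fréchet derivatives in the coordinate directions. -/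
noncomputable def euclLaplacian {m : ℕ} {F : Type*} [NormedAddCommGroup F]
    [NormedSpace ℝ F] (f : EuclideanSpace ℝ (Fin m) → F)
    (x : EuclideanSpace ℝ (Fin m)) : F :=
  ∑ i : Fin m,
    fderiv ℝ (fun y => fderiv ℝ f y (EuclideanSpace.single i 1)) x (EuclideanSpace.single i 1)

lemma kelvin_aux1 (m : ℕ) (p : ℝ) {x : EuclideanSpace ℝ (Fin m)} (hx : x ≠ 0) :
    ∃ D : EuclideanSpace ℝ (Fin m) →L[ℝ] EuclideanSpace ℝ (Fin m),
      HasFDerivAt (fun y : EuclideanSpace ℝ (Fin m) => (⟪y, y⟫) ^ p • y) D x ∧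
      ∀ v, D v = (p * ⟪x, x⟫ ^ (p - 1) * (2 * ⟪x, v⟫)) • x + (⟪x, x⟫ ^ p) • v := by
  have hne : ⟪x, x⟫ ≠ 0 := inner_self_ne_zero.mpr hx
  have hq : HasFDerivAt (fun y : EuclideanSpace ℝ (Fin m) => ⟪y, y⟫) _ x :=
    (hasFDerivAt_id x).inner ℝ (hasFDerivAt_id x)
  have hqp := hq.rpow_const (p := p) (Or.inl hne)
  have h := hqp.smul (hasFDerivAt_id x)
  refine ⟨_, h, fun v => ?_⟩
  simp only [ContinuousLinearMap.add_apply, ContinuousLinearMap.smul_apply,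
    ContinuousLinearMap.smulRight_apply, ContinuousLinearMap.coe_id', id_eq,
    ContinuousLinearMap.coe_comp', Function.comp_apply, ContinuousLinearMap.prod_apply,
    fderivInnerCLM_apply, real_inner_comm v x, smul_eq_mul]
  rw [add_comm]
  ring_nf

lemma kelvin_aux2 (m : ℕ) (p : ℝ) (e : EuclideanSpace ℝ (Fin m))
    {x : EuclideanSpace ℝ (Fin m)} (hx : x ≠ 0) :
    ∃ D : EuclideanSpace ℝ (Fin m) →L[ℝ] EuclideanSpace ℝ (Fin m),
      HasFDerivAt (fun y : EuclideanSpace ℝ (Fin m) =>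
        (p * ⟪y, y⟫ ^ (p - 1) * (2 * ⟪y, e⟫)) • y + (⟪y, y⟫ ^ p) • e) D x ∧
      ∀ v, D v =
        (4*p*(p-1) * ⟪x, x⟫ ^ (p-2) * ⟪x, v⟫ * ⟪x, e⟫ + 2*p * ⟪x, x⟫ ^ (p-1) * ⟪v, e⟫) • x
        + (2*p * ⟪x, x⟫ ^ (p-1) * ⟪x, e⟫) • v
        + (2*p * ⟪x, x⟫ ^ (p-1) * ⟪x, v⟫) • e := by
  have hne : ⟪x, x⟫ ≠ 0 := inner_self_ne_zero.mpr hx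
  have hq : HasFDerivAt (fun y : EuclideanSpace ℝ (Fin m) => ⟪y, y⟫) _ x :=
    (hasFDerivAt_id x).inner ℝ (hasFDerivAt_id x)
  have hc1 := (hq.rpow_const (p := p - 1) (Or.inl hne)).const_mul p
  have hc2 := (((hasFDerivAt_id x).inner ℝ (hasFDerivAt_const e x)).const_mul 2)
  have h1 := (hc1.mul hc2).smul (hasFDerivAt_id x)
  have h2 := (hq.rpow_const (p := p) (Or.inl hne)).smul_const e
  refine ⟨_, h1.add h2, fun v => ?_⟩
  simp only [ContinuousLinearMap.add_apply, ContinuousLinearMap.smul_apply,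
    ContinuousLinearMap.smulRight_apply, ContinuousLinearMap.coe_id', id_eq,
    ContinuousLinearMap.coe_comp', Function.comp_apply, ContinuousLinearMap.prod_apply,
    fderivInnerCLM_apply, real_inner_comm v x, real_inner_comm e x, smul_eq_mul,
    inner_zero_left, inner_zero_right, mul_zero, zero_mul, add_zero, zero_add,
    ContinuousLinearMap.zero_apply]
  have h21 : p - 1 - 1 = p - 2 := by ring
  rw [h21]
  simp only [Pi.mul_apply, real_inner_comm e x]
  module

lemma kelvin_sum_single {m : ℕ} (x : EuclideanSpace ℝ (Fin m)) :
    ∑ i : Fin m, x i • EuclideanSpace.single i (1 : ℝ) = x := by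
  ext j
  rw [WithLp.ofLp_sum, Finset.sum_apply]
  simp [EuclideanSpace.single_apply]

/-- For the Kelvin-type map `ψ(x) = ‖x‖^{-l} x` on `ℝ^m \ {0}`, one has
`Δψ(x) = l(l-m)‖x‖^{-l-2} x` for every `x ≠ 0`. -/
theorem kelvin_laplacian (m : ℕ) (hm : 0 < m) (l : ℝ)
    (ψ : EuclideanSpace ℝ (Fin m) → EuclideanSpace ℝ (Fin m))
    (hψ : ∀ x, ψ x = ‖x‖ ^ (-l) • x) :
    ∀ x : EuclideanSpace ℝ (Fin m), x ≠ 0 →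
      euclLaplacian ψ x = (l * (l - m) * ‖x‖ ^ (-l - 2)) • x := by
  intro x hx
  have hne : ⟪x, x⟫ ≠ 0 := inner_self_ne_zero.mpr hx
  have hψ' : ψ = fun y : EuclideanSpace ℝ (Fin m) => (⟪y, y⟫) ^ (-l/2) • y := by
    funext y
    rw [hψ y]
    congr 1
    rw [real_inner_self_eq_norm_sq, ← Real.rpow_natCast ‖y‖ 2,
      ← Real.rpow_mul (norm_nonneg y)]
    congr 1
    ring
  have key : ∀ i : Fin m,
      fderiv ℝ (fun y => fderiv ℝ ψ y (EuclideanSpace.single i 1)) x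
        (EuclideanSpace.single i 1)
      = (4*(-l/2)*((-l/2)-1) * ⟪x, x⟫ ^ ((-l/2)-2) * (x i * x i)
          + 2*(-l/2) * ⟪x, x⟫ ^ ((-l/2)-1)) • x
        + (4*(-l/2) * ⟪x, x⟫ ^ ((-l/2)-1) * x i) • EuclideanSpace.single i (1:ℝ) := by
    intro i
    obtain ⟨D2, hD2, hD2v⟩ := kelvin_aux2 m (-l/2) (EuclideanSpace.single i (1:ℝ)) hx
    have hev : (fun y => fderiv ℝ ψ y (EuclideanSpace.single i (1:ℝ)))
        =ᶠ[nhds x] (fun y =>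
          ((-l/2) * ⟪y, y⟫ ^ ((-l/2) - 1) * (2 * ⟪y, EuclideanSpace.single i (1:ℝ)⟫)) • y
            + (⟪y, y⟫ ^ (-l/2)) • EuclideanSpace.single i (1:ℝ)) := by
      filter_upwards [IsOpen.mem_nhds isOpen_compl_singleton hx] with y hy
      obtain ⟨D, hD, hDv⟩ := kelvin_aux1 m (-l/2) (hy : y ≠ 0)
      rw [hψ', hD.fderiv]
      exact hDv _
    rw [hev.fderiv_eq, hD2.fderiv, hD2v _]
    simp only [EuclideanSpace.inner_single_right, RCLike.inner_apply, conj_trivial, mul_one,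
      EuclideanSpace.single_apply, if_pos rfl, eq_self_iff_true, if_true]
    module
  simp only [euclLaplacian, key]
  rw [Finset.sum_add_distrib, ← Finset.sum_smul]
  have hx2 : ∑ i : Fin m, x i * x i = ⟪x, x⟫ := by
    simp [PiLp.inner_apply, RCLike.inner_apply, conj_trivial]
    rw [EuclideanSpace.norm_sq_eq]
    congr 1
    funext i
    rw [Real.norm_eq_abs, sq_abs, sq]
  have hsum2 : ∑ i : Fin m,
      (4*(-l/2) * ⟪x, x⟫ ^ ((-l/2)-1) * x i) • EuclideanSpace.single i (1:ℝ)
      = (4*(-l/2) * ⟪x, x⟫ ^ ((-l/2)-1)) • x := by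
    rw [← kelvin_sum_single x, Finset.smul_sum]
    simp [mul_smul, kelvin_sum_single]
  rw [hsum2]
  have hsum1 : ∑ i : Fin m,
      (4*(-l/2)*((-l/2)-1) * ⟪x, x⟫ ^ ((-l/2)-2) * (x i * x i)
        + 2*(-l/2) * ⟪x, x⟫ ^ ((-l/2)-1))
      = 4*(-l/2)*((-l/2)-1) * ⟪x, x⟫ ^ ((-l/2)-2) * ⟪x, x⟫
        + m * (2*(-l/2) * ⟪x, x⟫ ^ ((-l/2)-1)) := by
    rw [Finset.sum_add_distrib, ← Finset.mul_sum, hx2, Finset.sum_const, Finset.card_univ,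
      Fintype.card_fin, nsmul_eq_mul]
  rw [hsum1, ← add_smul]
  congr 1
  have h1 : ⟪x, x⟫ ^ ((-l/2) - 1) = ‖x‖ ^ (-l - 2) := by
    rw [real_inner_self_eq_norm_sq, ← Real.rpow_natCast ‖x‖ 2,
      ← Real.rpow_mul (norm_nonneg x)]
    norm_num
    ring_nf
  have h2 : ⟪x, x⟫ ^ ((-l/2) - 2) * ⟪x, x⟫ = ⟪x, x⟫ ^ ((-l/2) - 1) := by
    rw [← Real.rpow_add_one hne]
    ring_nf
  linear_combination (4*(-l/2)*((-l/2)-1)) * h2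
    + (2*(-l/2)*(m:ℝ) + 4*(-l/2) + 4*(-l/2)*((-l/2)-1)) * h1
end

section
/- Let m be a positive integer and l a real number, and let ψ : ℝ^m ∖ {0} → ℝ^m be the Kelvin-type map ψ(x) = ‖x‖^{−l} x. Then for every x ∈ ℝ^m with x ≠ 0, the iterated componentwise Laplacian satisfies (Δ(Δψ))(x) = l(l−m)(l+2)(l+2−m) ‖x‖^{−l−4} x. -/
open scoped BigOperators

section Helpers

open scoped RealInnerProductSpace

variable {F : Type*} [NormedAddCommGroup F] [InnerProductSpace ℝ F]

theorem myHasFDerivAt_norm_rpow (a : ℝ) {x : F} (hx : x ≠ 0) :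
    HasFDerivAt (fun y => ‖y‖ ^ a) ((a * ‖x‖ ^ (a - 2)) • innerSL ℝ x) x := by
  have hnorm : (0:ℝ) < ‖x‖ := norm_pos_iff.mpr hx
  have h2 : (0:ℝ) < ‖x‖ ^ 2 := by positivity
  have key : ∀ y : F, ‖y‖ ^ a = (‖y‖ ^ 2) ^ (a / 2) := by
    intro y
    rw [← Real.rpow_natCast ‖y‖ 2, ← Real.rpow_mul (norm_nonneg y)]
    congr 1; push_cast; ring
  have h1 : HasDerivAt (fun t : ℝ => t ^ (a / 2)) (a / 2 * (‖x‖ ^ 2) ^ (a / 2 - 1)) (‖x‖ ^ 2) :=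
    Real.hasDerivAt_rpow_const (Or.inl h2.ne')
  have h0 : HasFDerivAt (fun y : F => ‖y‖ ^ 2) (2 • innerSL ℝ x) x :=
    (hasStrictFDerivAt_norm_sq x).hasFDerivAt
  have hD := h1.comp_hasFDerivAt x h0
  have h4 : (‖x‖ ^ 2 : ℝ) ^ (a / 2 - 1) = ‖x‖ ^ (a - 2) := by
    rw [← Real.rpow_natCast ‖x‖ 2, ← Real.rpow_mul (norm_nonneg x)]
    congr 1; push_cast; ring
  have hcoef : (a * ‖x‖ ^ (a - 2)) • innerSL ℝ x
      = (a / 2 * (‖x‖ ^ 2) ^ (a / 2 - 1)) • 2 • innerSL ℝ x := by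
    ext v; simp [h4]; ring
  rw [funext key, hcoef]
  exact hD

theorem myHasFDerivAt_kelvin (c a : ℝ) {x : F} (hx : x ≠ 0) :
    HasFDerivAt (fun y => (c * ‖y‖ ^ a) • y)
      ((c * ‖x‖ ^ a) • ContinuousLinearMap.id ℝ F
        + ((c * a * ‖x‖ ^ (a - 2)) • innerSL ℝ x).smulRight x) x := by
  have hs : HasFDerivAt (fun y : F => c * ‖y‖ ^ a)
      ((c * a * ‖x‖ ^ (a - 2)) • innerSL ℝ x) x := by
    have := (myHasFDerivAt_norm_rpow a hx).const_mul c
    rw [show (c * a * ‖x‖ ^ (a - 2)) • innerSL ℝ x = c • (a * ‖x‖ ^ (a - 2)) • innerSL ℝ x by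
      rw [smul_smul]; ring_nf]
    exact this
  exact hs.smul (hasFDerivAt_id x)

theorem myScalarDeriv (c a : ℝ) {x : F} (hx : x ≠ 0) :
    HasFDerivAt (fun y : F => c * ‖y‖ ^ a) ((c * a * ‖x‖ ^ (a - 2)) • innerSL ℝ x) x := by
  have := (myHasFDerivAt_norm_rpow a hx).const_mul c
  rw [show (c * a * ‖x‖ ^ (a - 2)) • innerSL ℝ x = c • (a * ‖x‖ ^ (a - 2)) • innerSL ℝ x by
    rw [smul_smul]; ring_nf]
  exact this

theorem myLapKelvin (m : ℕ) (c a : ℝ) {x : EuclideanSpace ℝ (Fin m)} (hx : x ≠ 0) :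
    euclLaplacian (fun y => (c * ‖y‖ ^ a) • y) x = (c * a * (a + m) * ‖x‖ ^ (a - 2)) • x := by
  have hnorm : (0:ℝ) < ‖x‖ := norm_pos_iff.mpr hx
  have hstep : ∀ i : Fin m,
      fderiv ℝ (fun y => fderiv ℝ (fun z => (c * ‖z‖ ^ a) • z) y
          (EuclideanSpace.single i 1)) x (EuclideanSpace.single i 1)
      = ((c * a * (a - 2) * ‖x‖ ^ (a - 4)) * (x i) ^ 2 + c * a * ‖x‖ ^ (a - 2)) • x
        + ((2 * (c * a * ‖x‖ ^ (a - 2))) * x i) • (EuclideanSpace.single i 1) := by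
    intro i
    set v : EuclideanSpace ℝ (Fin m) := EuclideanSpace.single i 1 with hv
    have hmem : ({0}ᶜ : Set (EuclideanSpace ℝ (Fin m))) ∈ nhds x :=
      isOpen_compl_singleton.mem_nhds hx
    have heq : (fun y => fderiv ℝ (fun z => (c * ‖z‖ ^ a) • z) y v)
        =ᶠ[nhds x] (fun y => (c * ‖y‖ ^ a) • v
            + ((c * a * ‖y‖ ^ (a - 2)) * (innerSL ℝ v y)) • y) := by
      filter_upwards [hmem] with y hy
      rw [(myHasFDerivAt_kelvin c a hy).fderiv]
      simp [real_inner_comm, mul_comm]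
    have hA : HasFDerivAt (fun y : EuclideanSpace ℝ (Fin m) => (c * ‖y‖ ^ a) • v)
        (((c * a * ‖x‖ ^ (a - 2)) • innerSL ℝ x).smulRight v) x :=
      (myScalarDeriv c a hx).smul_const v
    have hs2 : HasFDerivAt (fun y : EuclideanSpace ℝ (Fin m) => (c * a) * ‖y‖ ^ (a - 2))
        ((c * a * (a - 2) * ‖x‖ ^ (a - 4)) • innerSL ℝ x) x := by
      have := myScalarDeriv (c * a) (a - 2) hx
      have h42 : a - 2 - 2 = a - 4 := by ring
      rw [h42] at this
      exact this
    have hmul := hs2.mul ((innerSL ℝ v).hasFDerivAt (x := x))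
    have hB := hmul.smul (hasFDerivAt_id x)
    simp only [id_eq] at hB
    have hD := hA.add hB
    rw [heq.fderiv_eq, (show HasFDerivAt (fun y => (c * ‖y‖ ^ a) • v
      + (c * a * ‖y‖ ^ (a - 2) * (innerSL ℝ v) y) • y) _ x from hD).fderiv]
    have h1 : (innerSL ℝ v) x = x i := by
      simp [hv, EuclideanSpace.inner_single_left]
    have h2 : (innerSL ℝ x) v = x i := by
      simp [hv, EuclideanSpace.inner_single_right]
    have h3 : (innerSL ℝ v) v = 1 := by
      simp [hv, EuclideanSpace.inner_single_left, EuclideanSpace.single_apply]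
    simp only [ContinuousLinearMap.add_apply, ContinuousLinearMap.smulRight_apply,
      ContinuousLinearMap.smul_apply, ContinuousLinearMap.coe_smul',
      ContinuousLinearMap.id_apply, Pi.smul_apply, Pi.mul_apply, h1, h2, h3, smul_eq_mul]
    module
  unfold euclLaplacian
  refine (Finset.sum_congr rfl fun i _ => hstep i).trans ?_
  rw [Finset.sum_add_distrib]
  have hsum1 : ∑ i : Fin m, (x i) ^ 2 = ‖x‖ ^ 2 := by
    rw [EuclideanSpace.norm_eq, Real.sq_sqrt (by positivity)]
    simp [Real.norm_eq_abs, sq_abs]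
  have hsum2 : ∑ i : Fin m, ((2 * (c * a * ‖x‖ ^ (a - 2))) * x i) •
      (EuclideanSpace.single i (1:ℝ) : EuclideanSpace ℝ (Fin m))
      = (2 * (c * a * ‖x‖ ^ (a - 2))) • x := by
    have : ∀ i : Fin m, ((2 * (c * a * ‖x‖ ^ (a - 2))) * x i) •
        (EuclideanSpace.single i (1:ℝ) : EuclideanSpace ℝ (Fin m))
        = (2 * (c * a * ‖x‖ ^ (a - 2))) • (x i) •
          (EuclideanSpace.single i (1:ℝ) : EuclideanSpace ℝ (Fin m)) := by
      intro i; rw [smul_smul]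
    rw [Finset.sum_congr rfl fun i _ => this i, ← Finset.smul_sum]
    congr 1
    have hb := (EuclideanSpace.basisFun (Fin m) ℝ).sum_repr x
    simpa [EuclideanSpace.basisFun_apply, EuclideanSpace.basisFun_repr] using hb
  rw [hsum2]
  have hsum3 : ∑ i : Fin m,
      (((c * a * (a - 2) * ‖x‖ ^ (a - 4)) * (x i) ^ 2 + c * a * ‖x‖ ^ (a - 2)) • x)
      = ((c * a * (a - 2) * ‖x‖ ^ (a - 4)) * ‖x‖ ^ 2 + m * (c * a * ‖x‖ ^ (a - 2))) • x := by
    rw [← Finset.sum_smul]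
    congr 1
    rw [Finset.sum_add_distrib, ← Finset.mul_sum, hsum1]
    simp [mul_comm]
  rw [hsum3]
  have hpow : ‖x‖ ^ (a - 4) * ‖x‖ ^ 2 = ‖x‖ ^ (a - 2) := by
    rw [← Real.rpow_natCast ‖x‖ 2, ← Real.rpow_add hnorm]
    congr 1; push_cast; ring
  rw [← add_smul]
  congr 1
  rw [mul_assoc (c * a * (a - 2)), hpow]
  ring

theorem myLapCongr {m : ℕ} {f g : EuclideanSpace ℝ (Fin m) → EuclideanSpace ℝ (Fin m)}
    (h : ∀ y, y ≠ 0 → f y = g y) {x : EuclideanSpace ℝ (Fin m)} (hx : x ≠ 0) :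
    euclLaplacian f x = euclLaplacian g x := by
  unfold euclLaplacian
  refine Finset.sum_congr rfl fun i _ => ?_
  have h1 : (fun y => fderiv ℝ f y (EuclideanSpace.single i 1))
      =ᶠ[nhds x] (fun y => fderiv ℝ g y (EuclideanSpace.single i 1)) := by
    filter_upwards [isOpen_compl_singleton.mem_nhds hx] with y hy
    have hfg : f =ᶠ[nhds y] g := by
      filter_upwards [isOpen_compl_singleton.mem_nhds hy] with z hz
      exact h z hz
    rw [hfg.fderiv_eq]
  rw [h1.fderiv_eq]

end Helpers

/-- For the Kelvin-type map `ψ(x) = ‖x‖^{-l} x` on `ℝ^m \ {0}`, one has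
`Δ(Δψ)(x) = l(l-m)(l+2)(l+2-m)‖x‖^{-l-4} x` for every `x ≠ 0`. -/
theorem kelvin_bilaplacian (m : ℕ) (hm : 0 < m) (l : ℝ)
    (ψ : EuclideanSpace ℝ (Fin m) → EuclideanSpace ℝ (Fin m))
    (hψ : ∀ x, ψ x = ‖x‖ ^ (-l) • x) :
    ∀ x : EuclideanSpace ℝ (Fin m), x ≠ 0 →
      euclLaplacian (euclLaplacian ψ) x
        = (l * (l - m) * (l + 2) * (l + 2 - m) * ‖x‖ ^ (-l - 4)) • x := by
  intro x hx
  have hψ' : ψ = fun y => ((1:ℝ) * ‖y‖ ^ (-l)) • y := by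
    funext y; rw [hψ y, one_mul]
  have h1 : ∀ y : EuclideanSpace ℝ (Fin m), y ≠ 0 →
      euclLaplacian ψ y = (((1:ℝ) * (-l) * ((-l) + m) * ‖y‖ ^ (-l - 2))) • y := by
    intro y hy
    rw [hψ']
    have := myLapKelvin m 1 (-l) hy
    rwa [show (-l) - 2 = -l - 2 from rfl] at this
  have h2 := myLapCongr h1 hx
  rw [h2, myLapKelvin m ((1:ℝ) * (-l) * ((-l) + m)) (-l - 2) hx]
  have hexp : (-l - 2) - 2 = -l - 4 := by ring
  rw [hexp]
  congr 1
  ring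
end

section
/- Let m be a positive integer and l a real number with l(l−m) ≠ 0, and let ψ : ℝ^m ∖ {0} → ℝ^m be the Kelvin-type map ψ(x) = ‖x‖^{−l} x (so ψ is not harmonic). Then Δ(Δψ) vanishes identically on ℝ^m ∖ {0} if and only if m = l + 2 or l = −2. In other words, ψ is a nonharmonic HS-tensional map if and only if m = l + 2 or l = −2. -/
open scoped BigOperators

section Aux

open scoped RealInnerProductSpace

variable {m : ℕ}

local notation "E" => EuclideanSpace ℝ (Fin m)

private theorem normRpow_hasFDerivAt (a : ℝ) {x : E} (hx : x ≠ 0) :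
    HasFDerivAt (fun y : E => ‖y‖ ^ a) ((a * ‖x‖ ^ (a - 2)) • (innerSL ℝ x : E →L[ℝ] ℝ)) x := by
  have hn : ‖x‖ ≠ 0 := norm_ne_zero_iff.mpr hx
  have hn2 : (‖x‖ ^ 2 : ℝ) ≠ 0 := pow_ne_zero _ hn
  have key : HasFDerivAt (fun y : E => (‖y‖ ^ 2 : ℝ) ^ (a / 2))
      (((a/2) * (‖x‖ ^ 2 : ℝ) ^ (a/2 - 1)) • (2 • (innerSL ℝ x : E →L[ℝ] ℝ))) x := by
    exact (Real.hasDerivAt_rpow_const (Or.inl hn2)).comp_hasFDerivAt x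
      (hasStrictFDerivAt_norm_sq x).hasFDerivAt
  have e1 : ∀ y : E, (‖y‖ ^ 2 : ℝ) ^ (a / 2) = ‖y‖ ^ a := by
    intro y
    rw [← Real.rpow_natCast ‖y‖ 2, ← Real.rpow_mul (norm_nonneg y)]
    congr 1; ring
  have e2 : (‖x‖ ^ 2 : ℝ) ^ (a/2 - 1) = ‖x‖ ^ (a - 2) := by
    rw [← Real.rpow_natCast ‖x‖ 2, ← Real.rpow_mul (norm_nonneg x)]
    congr 1; ring
  have := key
  simp only [e1, e2] at this
  refine this.congr_fderiv ?_
  ext v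
  simp only [ContinuousLinearMap.smul_apply, smul_eq_mul, ContinuousLinearMap.coe_smul',
    Pi.smul_apply]
  ring

private theorem scalar_hasFDerivAt (c a : ℝ) {x : E} (hx : x ≠ 0) :
    HasFDerivAt (fun y : E => c * ‖y‖ ^ a)
      ((c * a * ‖x‖ ^ (a - 2)) • (innerSL ℝ x : E →L[ℝ] ℝ)) x := by
  have := (normRpow_hasFDerivAt a hx).const_mul c
  refine this.congr_fderiv ?_
  ext v
  simp only [ContinuousLinearMap.smul_apply, smul_eq_mul]
  ring

private theorem K_hasFDerivAt (c a : ℝ) {x : E} (hx : x ≠ 0) :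
    HasFDerivAt (fun y : E => (c * ‖y‖ ^ a) • y)
      ((c * ‖x‖ ^ a) • (ContinuousLinearMap.id ℝ E)
        + ((c * a * ‖x‖ ^ (a - 2)) • (innerSL ℝ x : E →L[ℝ] ℝ)).smulRight x) x :=
  (scalar_hasFDerivAt c a hx).smul (hasFDerivAt_id x)

private theorem K_fderiv_apply (c a : ℝ) {x : E} (hx : x ≠ 0) (v : E) :
    fderiv ℝ (fun y : E => (c * ‖y‖ ^ a) • y) x v
      = (c * ‖x‖ ^ a) • v + (c * a * ‖x‖ ^ (a - 2) * ⟪x, v⟫) • x := by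
  rw [(K_hasFDerivAt c a hx).fderiv]
  simp [smul_smul]

private theorem inner_single' (x : E) (i : Fin m) :
    ⟪x, EuclideanSpace.single i (1:ℝ)⟫ = x i := by
  simp [EuclideanSpace.inner_single_right]

private theorem g_fderiv (c a : ℝ) (i : Fin m) {x : E} (hx : x ≠ 0) :
    fderiv ℝ (fun y : E => fderiv ℝ (fun z : E => (c * ‖z‖ ^ a) • z) y
        (EuclideanSpace.single i 1)) x (EuclideanSpace.single i 1)
      = (2 * (c * a * ‖x‖ ^ (a - 2) * x i)) • EuclideanSpace.single i (1:ℝ)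
        + (c * a * (a - 2) * ‖x‖ ^ (a - 4) * (x i) ^ 2 + c * a * ‖x‖ ^ (a - 2)) • x := by
  have hmem : {y : E | y ≠ 0} ∈ nhds x := IsOpen.mem_nhds isOpen_compl_singleton hx
  have hev : (fun y : E => fderiv ℝ (fun z : E => (c * ‖z‖ ^ a) • z) y
        (EuclideanSpace.single i 1))
      =ᶠ[nhds x] (fun y : E => (c * ‖y‖ ^ a) • EuclideanSpace.single i (1:ℝ)
        + (c * a * ‖y‖ ^ (a - 2) * y i) • y) := by
    filter_upwards [hmem] with y hy
    rw [K_fderiv_apply c a hy, inner_single']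
  rw [hev.fderiv_eq]
  have h1 : HasFDerivAt (fun y : E => (c * ‖y‖ ^ a) • EuclideanSpace.single i (1:ℝ))
      (((c * a * ‖x‖ ^ (a - 2)) • (innerSL ℝ x : E →L[ℝ] ℝ)).smulRight
        (EuclideanSpace.single i 1)) x :=
    (scalar_hasFDerivAt c a hx).smul_const _
  have h2 : HasFDerivAt (fun y : E => (c * a) * ‖y‖ ^ (a - 2) * (y i))
      (((c * a) * ‖x‖ ^ (a - 2)) • (EuclideanSpace.proj i : E →L[ℝ] ℝ)
        + (x i) • (((c * a) * (a - 2) * ‖x‖ ^ (a - 2 - 2)) • (innerSL ℝ x : E →L[ℝ] ℝ))) x := by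
    have hp : HasFDerivAt (fun y : E => y i) (EuclideanSpace.proj i : E →L[ℝ] ℝ) x :=
      (EuclideanSpace.proj i : E →L[ℝ] ℝ).hasFDerivAt
    exact (scalar_hasFDerivAt (c * a) (a - 2) hx).mul hp
  have h3 : HasFDerivAt (fun y : E => ((c * a) * ‖y‖ ^ (a - 2) * (y i)) • y)
      (((c * a) * ‖x‖ ^ (a - 2) * (x i)) • (ContinuousLinearMap.id ℝ E)
        + (((c * a) * ‖x‖ ^ (a - 2)) • (EuclideanSpace.proj i : E →L[ℝ] ℝ)
          + (x i) • (((c * a) * (a - 2) * ‖x‖ ^ (a - 2 - 2)) • (innerSL ℝ x : E →L[ℝ] ℝ))).smulRight x) x :=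
    h2.smul (hasFDerivAt_id x)
  have h4 := (h1.add h3).fderiv
  rw [show (fun y : E => (c * ‖y‖ ^ a) • EuclideanSpace.single i (1:ℝ)
        + (c * a * ‖y‖ ^ (a - 2) * y i) • y)
      = (fun y : E => (c * ‖y‖ ^ a) • EuclideanSpace.single i (1:ℝ)
        + ((c * a) * ‖y‖ ^ (a - 2) * (y i)) • y) from by
    funext y; ring_nf]
  simp only [Pi.add_def] at h4
  rw [h4]
  simp only [ContinuousLinearMap.add_apply, ContinuousLinearMap.smulRight_apply,
    ContinuousLinearMap.smul_apply, ContinuousLinearMap.id_apply,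
    ContinuousLinearMap.coe_smul', Pi.smul_apply, smul_eq_mul,
    PiLp.proj_apply, EuclideanSpace.single_apply]
  simp only [innerSL_apply_apply, inner_single', if_true]
  have hfix : a - 2 - 2 = a - 4 := by ring
  rw [hfix]
  match_scalars <;> ring

private theorem sum_coord_smul_single (x : E) :
    ∑ i : Fin m, (x i) • EuclideanSpace.single i (1:ℝ) = x := by
  ext j
  rw [WithLp.ofLp_sum, Finset.sum_apply]
  simp [EuclideanSpace.single_apply]

private theorem sum_sq_coord (x : E) : ∑ i : Fin m, (x i) ^ 2 = ‖x‖ ^ (2:ℝ) := by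
  rw [show ((2:ℝ)) = ((2:ℕ):ℝ) by norm_num, Real.rpow_natCast]
  rw [EuclideanSpace.norm_eq, Real.sq_sqrt (by positivity)]
  simp [sq_abs]

private theorem lap_K (c a : ℝ) {x : E} (hx : x ≠ 0) :
    euclLaplacian (fun y : E => (c * ‖y‖ ^ a) • y) x
      = (c * a * (a + m) * ‖x‖ ^ (a - 2)) • x := by
  have hpos : (0:ℝ) < ‖x‖ := norm_pos_iff.mpr hx
  unfold euclLaplacian
  rw [Finset.sum_congr rfl (fun i _ => g_fderiv c a i hx), Finset.sum_add_distrib]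
  have h1 : ∑ i : Fin m, (2 * (c * a * ‖x‖ ^ (a - 2) * x i)) • EuclideanSpace.single i (1:ℝ)
      = (2 * (c * a * ‖x‖ ^ (a - 2))) • x := by
    have e : ∀ i : Fin m, (2 * (c * a * ‖x‖ ^ (a - 2) * x i))
        = (2 * (c * a * ‖x‖ ^ (a - 2))) * x i := fun i => by ring
    calc ∑ i : Fin m, (2 * (c * a * ‖x‖ ^ (a - 2) * x i)) • EuclideanSpace.single i (1:ℝ)
        = ∑ i : Fin m, (2 * (c * a * ‖x‖ ^ (a - 2))) • ((x i) • EuclideanSpace.single i (1:ℝ)) :=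
          Finset.sum_congr rfl fun i _ => by rw [e i, mul_smul]
      _ = (2 * (c * a * ‖x‖ ^ (a - 2))) • x := by
          rw [← Finset.smul_sum, sum_coord_smul_single]
  have h2 : ∑ i : Fin m,
        (c * a * (a - 2) * ‖x‖ ^ (a - 4) * (x i) ^ 2 + c * a * ‖x‖ ^ (a - 2)) • x
      = ((c * a * (a - 2) * ‖x‖ ^ (a - 4)) * ‖x‖ ^ (2:ℝ)
          + (m : ℝ) * (c * a * ‖x‖ ^ (a - 2))) • x := by
    rw [← Finset.sum_smul]
    congr 1
    rw [Finset.sum_add_distrib, ← Finset.sum_mul, Finset.sum_const, Finset.card_univ,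
      Fintype.card_fin, nsmul_eq_mul]
    rw [show (∑ i : Fin m, c * a * (a - 2) * ‖x‖ ^ (a - 4) * (x i) ^ 2)
        = c * a * (a - 2) * ‖x‖ ^ (a - 4) * ∑ i : Fin m, (x i) ^ 2 from by
      rw [Finset.mul_sum]]
    rw [sum_sq_coord]
    ring
  rw [h1, h2, ← add_smul]
  congr 1
  have hpow : ‖x‖ ^ (a - 4) * ‖x‖ ^ (2:ℝ) = ‖x‖ ^ (a - 2) := by
    rw [← Real.rpow_add hpos]; congr 1; ring
  rw [show (c * a * (a - 2) * ‖x‖ ^ (a - 4)) * ‖x‖ ^ (2:ℝ)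
      = c * a * (a - 2) * (‖x‖ ^ (a - 4) * ‖x‖ ^ (2:ℝ)) from by ring, hpow]
  ring

private theorem euclLaplacian_congr {F : Type*} [NormedAddCommGroup F] [NormedSpace ℝ F]
    {f g : E → F} {x : E} (h : f =ᶠ[nhds x] g) :
    euclLaplacian f x = euclLaplacian g x := by
  unfold euclLaplacian
  refine Finset.sum_congr rfl fun i _ => ?_
  have h1 : (fun y : E => fderiv ℝ f y (EuclideanSpace.single i 1))
      =ᶠ[nhds x] (fun y : E => fderiv ℝ g y (EuclideanSpace.single i 1)) :=
    (h.fderiv (𝕜 := ℝ)).mono fun y hy => by simp only [hy]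
  rw [h1.fderiv_eq]

end Aux

/-- For the Kelvin-type map `ψ(x) = ‖x‖^{-l} x` on `ℝ^m \ {0}` with
`l(l-m) ≠ 0` (so `ψ` is not harmonic), `Δ(Δψ)` vanishes identically on `ℝ^m \ {0}`
(i.e. `ψ` is a nonharmonic HS-tensional map) iff `m = l + 2` or `l = -2`. -/
theorem kelvin_nonharmonic_HS_tensional_iff (m : ℕ) (hm : 0 < m) (l : ℝ)
    (hl : l * (l - m) ≠ 0)
    (ψ : EuclideanSpace ℝ (Fin m) → EuclideanSpace ℝ (Fin m))
    (hψ : ∀ x, ψ x = ‖x‖ ^ (-l) • x) :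
    (∀ x : EuclideanSpace ℝ (Fin m), x ≠ 0 → euclLaplacian (euclLaplacian ψ) x = 0)
      ↔ ((m : ℝ) = l + 2 ∨ l = -2) := by
  set c₂ : ℝ := l * (l - m) with hc₂
  have hψK : ψ = fun y : EuclideanSpace ℝ (Fin m) => ((1:ℝ) * ‖y‖ ^ (-l)) • y := by
    funext y; rw [hψ y, one_mul]
  have lapψ : ∀ y : EuclideanSpace ℝ (Fin m), y ≠ 0 →
      euclLaplacian ψ y = (c₂ * ‖y‖ ^ (-l - 2)) • y := by
    intro y hy
    rw [hψK, lap_K 1 (-l) hy]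
    rw [show (-l) - 2 = -l - 2 from rfl]
    congr 1
    ring
  have key : ∀ x : EuclideanSpace ℝ (Fin m), x ≠ 0 →
      euclLaplacian (euclLaplacian ψ) x
        = (c₂ * (-l - 2) * ((-l - 2) + m) * ‖x‖ ^ (-l - 2 - 2)) • x := by
    intro x hx
    have hev : euclLaplacian ψ =ᶠ[nhds x]
        (fun y : EuclideanSpace ℝ (Fin m) => (c₂ * ‖y‖ ^ (-l - 2)) • y) := by
      filter_upwards [IsOpen.mem_nhds isOpen_compl_singleton hx] with y hy
      exact lapψ y hy
    rw [euclLaplacian_congr hev, lap_K c₂ (-l - 2) hx]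
  constructor
  · intro h
    set i0 : Fin m := ⟨0, hm⟩
    set x0 : EuclideanSpace ℝ (Fin m) := EuclideanSpace.single i0 (1:ℝ) with hx0def
    have hnx0 : ‖x0‖ = 1 := by simp [hx0def, EuclideanSpace.norm_single]
    have hx0 : x0 ≠ 0 := by
      intro h0
      rw [h0] at hnx0; simp at hnx0
    have := h x0 hx0
    rw [key x0 hx0, hnx0, Real.one_rpow, smul_eq_zero] at this
    rcases this with hcoef | hzero
    · rw [mul_one] at hcoef
      rcases mul_eq_zero.mp hcoef with h' | h'
      · rcases mul_eq_zero.mp h' with h'' | h''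
        · exact absurd h'' hl
        · right; linarith
      · left; linarith
    · exact absurd hzero hx0
  · intro h x hx
    rw [key x hx]
    rcases h with h | h
    · have : (-l - 2) + (m : ℝ) = 0 := by rw [h]; ring
      rw [show c₂ * (-l - 2) * ((-l - 2) + (m:ℝ)) = c₂ * (-l - 2) * 0 * 1 from by
        rw [this]; ring]
      simp
    · rw [show c₂ * (-l - 2) * ((-l - 2) + (m:ℝ)) * ‖x‖ ^ (-l - 2 - 2)
        = c₂ * (-(-2) - 2) * ((-l - 2) + (m:ℝ)) * ‖x‖ ^ (-l - 2 - 2) from by rw [h]]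
      norm_num
end

section
/- Let n be a positive integer and let γ : ℝ → ℝ^n be a smooth curve parametrized by arc length, i.e. ‖γ′(s)‖ = 1 for every s ∈ ℝ. If the fourth derivative of γ vanishes identically (γ⁗ ≡ 0), then the second derivative of γ vanishes identically (γ″ ≡ 0); that is, γ is a straight line, γ(s) = γ(0) + s·γ′(0). -/
set_option maxHeartbeats 1000000

section aux

variable {E : Type*} [NormedAddCommGroup E] [NormedSpace ℝ E] [CompleteSpace E]

lemma aff_of_deriv_const (f : ℝ → E) (k : E) (hf : Differentiable ℝ f)
    (h : ∀ s, deriv f s = k) : ∀ s, f s = f 0 + s • k := by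
  intro s
  have key : (fun u : ℝ => f u - u • k) s = (fun u : ℝ => f u - u • k) 0 := by
    refine is_const_of_deriv_eq_zero (𝕜 := ℝ)
      (f := fun u : ℝ => f u - u • k) ?_ ?_ s 0
    · exact hf.sub (differentiable_id.smul_const k)
    · intro x
      have h1 : HasDerivAt f k x := h x ▸ (hf x).hasDerivAt
      have h2 : HasDerivAt (fun u : ℝ => u • k) ((1:ℝ) • k) x :=
        (hasDerivAt_id x).smul_const k
      rw [one_smul] at h2
      rw [show (fun u : ℝ => f u - u • k) = (f - fun u : ℝ => u • k) from rfl, (h1.sub h2).deriv]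
      simp
  simp only [zero_smul, sub_zero] at key
  linear_combination (norm := abel) key

lemma quad_of_deriv_affine (f : ℝ → E) (b w : E) (hf : Differentiable ℝ f)
    (h : ∀ s, deriv f s = b + s • w) : ∀ s, f s = f 0 + s • b + (s ^ 2 / 2) • w := by
  intro s
  have key : (fun u : ℝ => f u - u • b - (u ^ 2 / 2) • w) s
      = (fun u : ℝ => f u - u • b - (u ^ 2 / 2) • w) 0 := by
    refine is_const_of_deriv_eq_zero (𝕜 := ℝ)
      (f := fun u : ℝ => f u - u • b - (u ^ 2 / 2) • w) ?_ ?_ s 0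
    · exact (hf.sub (differentiable_id.smul_const b)).sub
        (((differentiable_pow 2).div_const 2).smul_const w)
    · intro x
      have h1 : HasDerivAt f (b + x • w) x := h x ▸ (hf x).hasDerivAt
      have h2 : HasDerivAt (fun u : ℝ => u • b) ((1:ℝ) • b) x :=
        (hasDerivAt_id x).smul_const b
      have h3 : HasDerivAt (fun u : ℝ => (u ^ 2 / 2) • w)
          ((↑2 * x ^ 1 / 2) • w) x :=
        ((hasDerivAt_pow 2 x).div_const 2).smul_const w
      rw [show (fun u : ℝ => f u - u • b - (u ^ 2 / 2) • w) =
          ((f - fun u : ℝ => u • b) - fun u : ℝ => (u ^ 2 / 2) • w) from rfl,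
        ((h1.sub h2).sub h3).deriv]
      simp
  simp only [ne_eq, OfNat.ofNat_ne_zero, not_false_eq_true, zero_pow, zero_smul, sub_zero,
    zero_div] at key
  linear_combination (norm := abel) key

end aux

/-- A smooth unit-speed curve `γ : ℝ → ℝ^n` with vanishing fourth derivative
(i.e. an HS-tensional curve) has vanishing second derivative, i.e. it is a geodesic:
the straight line `γ(s) = γ(0) + s • γ'(0)`. -/
theorem HS_tensional_curve_is_geodesic (n : ℕ) (hn : 0 < n)
    (γ : ℝ → EuclideanSpace ℝ (Fin n)) (hγ : ContDiff ℝ (⊤ : ℕ∞) γ)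
    (harc : ∀ s : ℝ, ‖deriv γ s‖ = 1)
    (h4 : ∀ s : ℝ, iteratedDeriv 4 γ s = 0) :
    (∀ s : ℝ, iteratedDeriv 2 γ s = 0) ∧
      (∀ s : ℝ, γ s = γ 0 + s • deriv γ 0) := by
  have hsm : ∀ m : ℕ, ContDiff ℝ (⊤ : ℕ∞) (iteratedDeriv m γ) := by
    intro m
    induction m with
    | zero => simpa [iteratedDeriv_zero] using hγ.of_le (by simp)
    | succ k ih =>
      rw [iteratedDeriv_succ]
      exact (contDiff_infty_iff_deriv.1 ih).2
  have hdiff : ∀ m : ℕ, Differentiable ℝ (iteratedDeriv m γ) := fun m =>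
    (contDiff_infty_iff_deriv.1 (hsm m)).1
  set v : EuclideanSpace ℝ (Fin n) := iteratedDeriv 3 γ 0 with hv
  have h3 : ∀ s, iteratedDeriv 3 γ s = v := by
    intro s
    have := aff_of_deriv_const (iteratedDeriv 3 γ) 0 (hdiff 3)
      (fun s => by rw [← iteratedDeriv_succ]; exact h4 s) s
    simpa using this
  set b : EuclideanSpace ℝ (Fin n) := iteratedDeriv 2 γ 0 with hb
  have h2 : ∀ s, iteratedDeriv 2 γ s = b + s • v := by
    intro s
    exact aff_of_deriv_const (iteratedDeriv 2 γ) v (hdiff 2)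
      (fun s => by rw [← iteratedDeriv_succ]; exact h3 s) s
  have hd1 : deriv γ = iteratedDeriv 1 γ := by rw [iteratedDeriv_succ, iteratedDeriv_zero]
  set a : EuclideanSpace ℝ (Fin n) := deriv γ 0 with ha
  have h1 : ∀ s, deriv γ s = a + s • b + (s ^ 2 / 2) • v := by
    intro s
    rw [hd1]
    have := quad_of_deriv_affine (iteratedDeriv 1 γ) b v (hdiff 1)
      (fun s => by rw [← iteratedDeriv_succ]; exact h2 s) s
    rw [this, ← hd1]
  have hP : ∀ s : ℝ, (inner ℝ (deriv γ s) (deriv γ s) : ℝ) = 1 := by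
    intro s
    rw [real_inner_self_eq_norm_sq, harc s, one_pow]
  set A : ℝ := inner ℝ a a with hA
  set B : ℝ := inner ℝ a b with hB
  set C : ℝ := inner ℝ a v with hC
  set D : ℝ := inner ℝ b b with hD
  set Ee : ℝ := inner ℝ b v with hE
  set F : ℝ := inner ℝ v v with hF
  have hPoly : ∀ s : ℝ,
      A + 2 * s * B + s ^ 2 * D + s ^ 2 * C + s ^ 3 * Ee + (s ^ 2 / 2) ^ 2 * F = 1 := by
    intro s
    have hp := hP s
    rw [h1 s] at hp
    simp only [inner_add_left, inner_add_right, real_inner_smul_left,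
      real_inner_smul_right] at hp
    have c1 : (inner ℝ b a : ℝ) = B := by rw [hB, real_inner_comm]
    have c2 : (inner ℝ v a : ℝ) = C := by rw [hC, real_inner_comm]
    have c3 : (inner ℝ v b : ℝ) = Ee := by rw [hE, real_inner_comm]
    have c4 : (inner ℝ a b : ℝ) = B := hB.symm
    have c5 : (inner ℝ a v : ℝ) = C := hC.symm
    have c6 : (inner ℝ b v : ℝ) = Ee := hE.symm
    have c7 : (inner ℝ a a : ℝ) = A := hA.symm
    have c8 : (inner ℝ b b : ℝ) = D := hD.symm
    have c9 : (inner ℝ v v : ℝ) = F := hF.symm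
    rw [c1, c2, c3] at hp <;> skip
    rw [c7, c8, c9] at hp <;> skip
    first
    | (rw [c4] at hp; skip)
    | skip
    first
    | (rw [c5] at hp; skip)
    | skip
    first
    | (rw [c6] at hp; skip)
    | skip
    linear_combination hp
  have e0 := hPoly 0
  have e1 := hPoly 1
  have e1' := hPoly (-1)
  have e2 := hPoly 2
  have e2' := hPoly (-2)
  have hFpos : (0:ℝ) ≤ F := hF ▸ real_inner_self_nonneg
  have hF0 : F = 0 := by nlinarith
  have hv0 : v = 0 := by
    have : (inner ℝ v v : ℝ) = 0 := by rw [← hF]; exact hF0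
    exact inner_self_eq_zero.1 this
  have hC0 : C = 0 := by rw [hC, hv0, inner_zero_right]
  have hD0 : D = 0 := by nlinarith
  have hb0 : b = 0 := by
    have : (inner ℝ b b : ℝ) = 0 := by rw [← hD]; exact hD0
    exact inner_self_eq_zero.1 this
  have h2z : ∀ s : ℝ, iteratedDeriv 2 γ s = 0 := by
    intro s; rw [h2 s, hb0, hv0]; simp
  refine ⟨h2z, ?_⟩
  have hd1c : ∀ s, deriv γ s = a := by
    intro s; rw [h1 s, hb0, hv0]; simp
  intro s
  rw [aff_of_deriv_const γ a (hγ.differentiable (by simp)) hd1c s]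
end

section
/- Let m, n be positive integers and let q be a real number with 2 ≤ q < ∞. Let ψ : ℝ^m → ℝ^n be a smooth map such that Δ(Δψ) = 0 everywhere on ℝ^m and ∫_{ℝ^m} ‖(Δψ)(x)‖^q dx < ∞. Then Δψ = 0 everywhere, i.e. ψ is harmonic. -/
open MeasureTheory

open MeasureTheory Real Set Filter Topology
open scoped ContDiff

set_option maxHeartbeats 2000000
set_option linter.unusedVariables false
namespace HSAux

variable {m n : ℕ}

local notation "E" => EuclideanSpace ℝ (Fin m)
local notation "F" => EuclideanSpace ℝ (Fin n)

noncomputable def ee (i : Fin m) : E := EuclideanSpace.single i 1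
noncomputable def DD (φ : E → F) (i : Fin m) (x : E) : F := fderiv ℝ φ x (ee i)
noncomputable def UU (φ : E → F) (x : E) : ℝ := inner ℝ (φ x) (φ x)
noncomputable def GG (φ : E → F) (x : E) : ℝ := ∑ i : Fin m, (inner ℝ (DD φ i x) (DD φ i x) : ℝ)
noncomputable def NGr (η : E → ℝ) (x : E) : ℝ := ∑ i : Fin m, (fderiv ℝ η x (ee i))^2
noncomputable def WW (φ : E → F) (η : E → ℝ) (x : E) : ℝ :=
  ∑ i : Fin m, fderiv ℝ η x (ee i) * (inner ℝ (DD φ i x) (φ x) : ℝ)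
noncomputable def PP (φ : E → F) (x : E) : ℝ := ∑ i : Fin m, (inner ℝ (DD φ i x) (φ x) : ℝ)^2

lemma contDiff_fderiv_apply {F' : Type*} [NormedAddCommGroup F'] [NormedSpace ℝ F']
    {f : E → F'} (hf : ContDiff ℝ ∞ f) (v : E) :
    ContDiff ℝ ∞ (fun x => fderiv ℝ f x v) :=
  (hf.fderiv_right (by simp)).clm_apply contDiff_const

lemma contDiff_DD {φ : E → F} (hφ : ContDiff ℝ ∞ φ) (i : Fin m) :
    ContDiff ℝ ∞ (DD φ i) := contDiff_fderiv_apply hφ _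

lemma contDiff_UU {φ : E → F} (hφ : ContDiff ℝ ∞ φ) : ContDiff ℝ ∞ (UU φ) :=
  hφ.inner ℝ hφ

lemma UU_nonneg (φ : E → F) (x : E) : 0 ≤ UU φ x := real_inner_self_nonneg
lemma GG_nonneg (φ : E → F) (x : E) : 0 ≤ GG φ x :=
  Finset.sum_nonneg fun i _ => real_inner_self_nonneg
lemma NGr_nonneg (η : E → ℝ) (x : E) : 0 ≤ NGr η x :=
  Finset.sum_nonneg fun i _ => sq_nonneg _

lemma fderiv_UU_apply {φ : E → F} (hφ : ContDiff ℝ ∞ φ) (x : E) (i : Fin m) :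
    fderiv ℝ (UU φ) x (ee i) = 2 * inner ℝ (φ x) (DD φ i x) := by
  have h := fderiv_inner_apply (𝕜 := ℝ) (x := x)
    ((hφ.differentiable (by simp)).differentiableAt)
    ((hφ.differentiable (by simp)).differentiableAt) (ee i)
  show fderiv ℝ (fun y => (inner ℝ (φ y) (φ y) : ℝ)) x (ee i) = _
  rw [h, real_inner_comm ((fderiv ℝ φ x) (ee i)) (φ x), DD]; ring_nf
  rw [real_inner_comm]

lemma integral_identity {φ : E → F} (hφ : ContDiff ℝ ∞ φ)
    (hharm : ∀ x, euclLaplacian φ x = 0)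
    {ρ : E → ℝ} (hρcd : ContDiff ℝ ∞ ρ) (hρc : HasCompactSupport ρ) :
    ∫ x : E, (ρ x * GG φ x
      + ∑ i : Fin m, fderiv ℝ ρ x (ee i) * (inner ℝ (DD φ i x) (φ x) : ℝ)) = 0 := by
  classical
  set w : E → F := fun x => ρ x • φ x with hw_def
  have hφd : Differentiable ℝ φ := hφ.differentiable (by simp)
  have hwcd : ContDiff ℝ ∞ w := hρcd.smul hφ
  have hwc : HasCompactSupport w := hρc.smul_right
  have hDcd : ∀ i, ContDiff ℝ ∞ (DD φ i) := contDiff_DD hφ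
  -- derivative of w
  have hw_fderiv : ∀ x, fderiv ℝ w x =
      ρ x • fderiv ℝ φ x + (fderiv ℝ ρ x).smulRight (φ x) := by
    intro x
    exact (((hρcd.differentiable (by simp) x).hasFDerivAt).smul
      ((hφd x).hasFDerivAt)).fderiv
  -- compact support facts
  have hfw : HasCompactSupport (fderiv ℝ w) := hwc.fderiv (𝕜 := ℝ)
  -- integrability of the three integrands, for each i
  have hcontDDi : ∀ i, Continuous (fun x => fderiv ℝ (DD φ i) x (ee i)) := fun i =>
    (contDiff_fderiv_apply (hDcd i) (ee i)).continuous
  have hint1 : ∀ i : Fin m, Integrable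
      (fun x : E => (inner ℝ (fderiv ℝ (DD φ i) x (ee i)) (w x) : ℝ)) volume := by
    intro i
    apply Continuous.integrable_of_hasCompactSupport
    · exact (hcontDDi i).inner hwcd.continuous
    · apply hwc.mono'
      intro x hx
      have : w x ≠ 0 := by
        intro h; apply hx; simp [h, inner_zero_right]
      exact subset_tsupport w this
  have hint2 : ∀ i : Fin m, Integrable
      (fun x : E => (inner ℝ (DD φ i x) (fderiv ℝ w x (ee i)) : ℝ)) volume := by
    intro i
    apply Continuous.integrable_of_hasCompactSupport
    · exact (hDcd i).continuous.inner (contDiff_fderiv_apply hwcd (ee i)).continuous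
    · apply hfw.mono'
      intro x hx
      have : fderiv ℝ w x ≠ 0 := by
        intro h
        apply hx
        simp only [Function.mem_support]
        rw [h]
        simp
      exact subset_tsupport _ this
  have hint3 : ∀ i : Fin m, Integrable
      (fun x : E => (inner ℝ (DD φ i x) (w x) : ℝ)) volume := by
    intro i
    apply Continuous.integrable_of_hasCompactSupport
    · exact (hDcd i).continuous.inner hwcd.continuous
    · apply hwc.mono'
      intro x hx
      have : w x ≠ 0 := by intro h; apply hx; simp [h, inner_zero_right]
      exact subset_tsupport w this
  -- integration by parts in each direction
  have hibp : ∀ i : Fin m,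
      ∫ x : E, (inner ℝ (DD φ i x) (fderiv ℝ w x (ee i)) : ℝ)
        = - ∫ x : E, (inner ℝ (fderiv ℝ (DD φ i) x (ee i)) (w x) : ℝ) := by
    intro i
    exact integral_bilinear_fderiv_right_eq_neg_left_of_integrable (B := innerSL ℝ)
      (hint1 i) (hint2 i) (hint3 i) (fun x _ => (hDcd i).differentiable (by simp) x)
      (fun x _ => hwcd.differentiable (by simp) x)
  -- sum over i
  have hsum : ∑ i : Fin m, ∫ x : E, (inner ℝ (DD φ i x) (fderiv ℝ w x (ee i)) : ℝ)
      = - ∫ x : E, (inner ℝ (euclLaplacian φ x) (w x) : ℝ) := by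
    rw [Finset.sum_congr rfl (fun i _ => hibp i), Finset.sum_neg_distrib]
    rw [← integral_finset_sum _ (fun i _ => hint1 i)]
    congr 1
    congr 1
    funext x
    have : (inner ℝ (euclLaplacian φ x) (w x) : ℝ)
        = ∑ i : Fin m, (inner ℝ (fderiv ℝ (DD φ i) x (ee i)) (w x) : ℝ) := by
      rw [euclLaplacian, sum_inner]
      rfl
    rw [this]
  have hzero : ∑ i : Fin m, ∫ x : E, (inner ℝ (DD φ i x) (fderiv ℝ w x (ee i)) : ℝ) = 0 := by
    rw [hsum]
    simp only [hharm, inner_zero_left]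
    simp
  rw [← integral_finset_sum _ (fun i _ => hint2 i)] at hzero
  rw [← hzero]
  congr 1
  funext x
  -- pointwise algebra
  rw [GG, Finset.mul_sum, ← Finset.sum_add_distrib]
  apply Finset.sum_congr rfl
  intro i _
  rw [hw_fderiv x]
  simp only [ContinuousLinearMap.add_apply, ContinuousLinearMap.coe_smul',
    Pi.smul_apply, ContinuousLinearMap.smulRight_apply]
  rw [inner_add_right, real_inner_smul_right, real_inner_smul_right]
  rw [DD]


lemma contDiff_V {φ : E → F} (hφ : ContDiff ℝ ∞ φ) {ε s : ℝ} (hε : 0 < ε) :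
    ContDiff ℝ ∞ (fun x : E => (ε + UU φ x) ^ s) := by
  rw [contDiff_iff_contDiffAt]
  intro x
  refine ContDiffAt.rpow_const_of_ne ?_ ?_
  · exact (contDiff_const.add (contDiff_UU hφ)).contDiffAt
  · have : 0 ≤ UU φ x := real_inner_self_nonneg
    positivity

lemma fderiv_rho {φ : E → F} (hφ : ContDiff ℝ ∞ φ)
    {η : E → ℝ} (hη : ContDiff ℝ ∞ η) {ε s : ℝ} (hε : 0 < ε) (x : E) (i : Fin m) :
    fderiv ℝ (fun y => (η y * η y) * (ε + UU φ y) ^ s) x (ee i)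
      = (η x * fderiv ℝ η x (ee i) + η x * fderiv ℝ η x (ee i)) * (ε + UU φ x) ^ s
        + (η x * η x) * (s * (ε + UU φ x) ^ (s - 1) * (2 * inner ℝ (φ x) (DD φ i x))) := by
  have hpos : 0 < ε + UU φ x := by
    have : 0 ≤ UU φ x := real_inner_self_nonneg
    linarith
  have hUd : HasFDerivAt (UU φ) (fderiv ℝ (UU φ) x) x :=
    (((contDiff_UU hφ).differentiable (by simp)) x).hasFDerivAt
  have h1 : HasDerivAt (fun t : ℝ => ε + t) 1 (UU φ x) := by
    simpa using (hasDerivAt_id (UU φ x)).const_add ε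
  have h2 : HasDerivAt (fun y : ℝ => y ^ s) (s * (ε + UU φ x) ^ (s - 1)) (ε + UU φ x) :=
    Real.hasDerivAt_rpow_const (Or.inl (ne_of_gt hpos))
  have h3 : HasDerivAt (fun t : ℝ => (ε + t) ^ s) (s * (ε + UU φ x) ^ (s - 1) * 1) (UU φ x) :=
    h2.comp (UU φ x) h1
  have hV : HasFDerivAt (fun y : E => (ε + UU φ y) ^ s)
      ((s * (ε + UU φ x) ^ (s - 1) * 1) • fderiv ℝ (UU φ) x) x :=
    h3.comp_hasFDerivAt x hUd
  have hηd : HasFDerivAt η (fderiv ℝ η x) x := ((hη.differentiable (by simp)) x).hasFDerivAt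
  have hη2 : HasFDerivAt (fun y => η y * η y)
      (η x • fderiv ℝ η x + η x • fderiv ℝ η x) x := hηd.mul hηd
  have hρ : HasFDerivAt (fun y => (η y * η y) * (ε + UU φ y) ^ s) _ x := hη2.mul hV
  rw [hρ.fderiv]
  simp only [ContinuousLinearMap.add_apply, ContinuousLinearMap.coe_smul', Pi.smul_apply,
    smul_eq_mul]
  rw [fderiv_UU_apply hφ x i]
  ring



lemma ptB (a v g u ng W : ℝ) (ha : 0 ≤ a) (hv : 0 ≤ v) (hg : 0 ≤ g) (hu : 0 ≤ u)
    (hng : 0 ≤ ng) (hW : W ^ 2 ≤ ng * (g * u)) :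
    |2 * a * v * W| ≤ (1 / 2) * (a * a * v * g) + 2 * (v * ng * u) := by
  have hd2 : Real.sqrt (ng * u) ^ 2 = ng * u := Real.sq_sqrt (by positivity)
  have hg2 : Real.sqrt g ^ 2 = g := Real.sq_sqrt hg
  have habs : |W| ≤ Real.sqrt (ng * u) * Real.sqrt g := by
    have h1 : |W| = Real.sqrt (W ^ 2) := (Real.sqrt_sq_eq_abs W).symm
    rw [h1, ← Real.sqrt_mul (by positivity : (0:ℝ) ≤ ng * u) g]
    apply Real.sqrt_le_sqrt
    calc W ^ 2 ≤ ng * (g * u) := hW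
    _ = ng * u * g := by ring
  have key : |2 * a * v * W| = 2 * a * v * |W| := by
    rw [abs_mul]
    congr 1
    rw [abs_of_nonneg (by positivity)]
  rw [key]
  have h2 : 2 * a * v * |W| ≤ 2 * a * v * (Real.sqrt (ng * u) * Real.sqrt g) :=
    mul_le_mul_of_nonneg_left habs (by positivity)
  have e1 : v * (a * Real.sqrt g - 2 * Real.sqrt (ng * u)) ^ 2
      = a * a * v * (Real.sqrt g) ^ 2 - 4 * (a * v * (Real.sqrt (ng * u) * Real.sqrt g))
        + 4 * (v * (Real.sqrt (ng * u)) ^ 2) := by ring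
  rw [hd2, hg2] at e1
  have e2 : 0 ≤ v * (a * Real.sqrt g - 2 * Real.sqrt (ng * u)) ^ 2 := by positivity
  rw [e1] at e2
  linarith

lemma cacc {φ : E → F} (hφ : ContDiff ℝ ∞ φ) (hharm : ∀ x, euclLaplacian φ x = 0)
    {η : E → ℝ} (hη : ContDiff ℝ ∞ η) (hηc : HasCompactSupport η) (hη0 : ∀ x, 0 ≤ η x)
    {ε s : ℝ} (hε : 0 < ε) (hs : 0 ≤ s) :
    ∫ x : E, (η x * η x) * (ε + UU φ x) ^ s * GG φ x
      ≤ 4 * ∫ x : E, (ε + UU φ x) ^ s * NGr η x * UU φ x := by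
  classical
  set V : E → ℝ := fun x => (ε + UU φ x) ^ s with hV_def
  have hVnn : ∀ x, 0 ≤ V x := fun x => Real.rpow_nonneg (by
    have := UU_nonneg φ x; linarith) s
  have hVcd : ContDiff ℝ ∞ V := contDiff_V hφ hε
  have hηcont := hη.continuous
  have hUcont := (contDiff_UU hφ).continuous
  have hGcont : Continuous (GG φ) :=
    continuous_finset_sum _ fun i _ => ((contDiff_DD hφ i).continuous.inner
      (contDiff_DD hφ i).continuous)
  have hDηcont : ∀ i : Fin m, Continuous (fun x => fderiv ℝ η x (ee i)) := fun i =>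
    (contDiff_fderiv_apply hη (ee i)).continuous
  have hNcont : Continuous (NGr η) := continuous_finset_sum _ fun i _ => (hDηcont i).pow 2
  have hWcont : Continuous (WW φ η) := continuous_finset_sum _ fun i _ =>
    (hDηcont i).mul ((contDiff_DD hφ i).continuous.inner hφ.continuous)
  have hPcont : Continuous (PP φ) := continuous_finset_sum _ fun i _ =>
    ((contDiff_DD hφ i).continuous.inner hφ.continuous).pow 2
  have hVε1cont : Continuous (fun x => (ε + UU φ x) ^ (s - 1)) := by
    rw [continuous_iff_continuousAt]
    intro x
    apply ContinuousAt.rpow_const (by fun_prop) (Or.inl ?_)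
    have := UU_nonneg φ x; positivity
  -- compact support facts
  have hsupp_of_η : ∀ f : E → ℝ, (∀ x, η x = 0 → f x = 0) → HasCompactSupport f := by
    intro f hf
    apply hηc.mono'
    intro x hx
    apply subset_tsupport η
    simp only [Function.mem_support]
    intro h0
    exact hx (by simpa using hf x h0)
  -- the three pieces
  set T₁ : E → ℝ := fun x => (η x * η x) * V x * GG φ x with hT₁_def
  set T₂ : E → ℝ := fun x => 2 * s * (η x * η x) * ((ε + UU φ x) ^ (s - 1)) * PP φ x
    with hT₂_def
  set T₃ : E → ℝ := fun x => 2 * η x * V x * WW φ η x with hT₃_def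
  have hVcont : Continuous V := hVcd.continuous
  have hT₁cont : Continuous T₁ := ((hηcont.mul hηcont).mul hVcont).mul hGcont
  have hT₂cont : Continuous T₂ := by
    apply Continuous.mul ?_ hPcont
    apply Continuous.mul (by fun_prop) hVε1cont
  have hT₃cont : Continuous T₃ := ((continuous_const.mul hηcont).mul hVcont).mul hWcont
  have hT₁c : HasCompactSupport T₁ := hsupp_of_η _ (by intro x h; simp [hT₁_def, h])
  have hT₂c : HasCompactSupport T₂ := hsupp_of_η _ (by intro x h; simp [hT₂_def, h])
  have hT₃c : HasCompactSupport T₃ := hsupp_of_η _ (by intro x h; simp [hT₃_def, h])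
  have hT₁int : Integrable T₁ volume := hT₁cont.integrable_of_hasCompactSupport hT₁c
  have hT₂int : Integrable T₂ volume := hT₂cont.integrable_of_hasCompactSupport hT₂c
  have hT₃int : Integrable T₃ volume := hT₃cont.integrable_of_hasCompactSupport hT₃c
  -- the RHS integrand and the pointwise bound
  set Rhs : E → ℝ := fun x => V x * NGr η x * UU φ x with hRhs_def
  have hRhscont : Continuous Rhs := (hVcont.mul hNcont).mul hUcont
  have hRhsc : HasCompactSupport Rhs := by
    have hNc : HasCompactSupport (NGr η) := by
      have : HasCompactSupport (fderiv ℝ η) := hηc.fderiv (𝕜 := ℝ)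
      apply this.mono'
      intro x hx
      apply subset_tsupport _
      simp only [Function.mem_support]
      intro h0
      apply hx
      simp [NGr, h0]
    apply hNc.mono'
    intro x hx
    apply subset_tsupport _
    simp only [Function.mem_support]
    intro h0
    exact hx (by simp [hRhs_def, h0])
  have hRhsint : Integrable Rhs volume := hRhscont.integrable_of_hasCompactSupport hRhsc
  -- identity
  have hρcd : ContDiff ℝ ∞ (fun y => (η y * η y) * V y) := (hη.mul hη).mul hVcd
  have hρc : HasCompactSupport (fun y => (η y * η y) * V y) :=
    hsupp_of_η _ (by intro x h; simp [h])
  have hid := integral_identity hφ hharm hρcd hρc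
  have hpt : (fun x : E => ((η x * η x) * V x) * GG φ x
      + ∑ i : Fin m, fderiv ℝ (fun y => (η y * η y) * V y) x (ee i)
          * (inner ℝ (DD φ i x) (φ x) : ℝ)) = fun x => T₁ x + (T₂ x + T₃ x) := by
    funext x
    have hrw : ∀ i : Fin m, fderiv ℝ (fun y => (η y * η y) * V y) x (ee i)
        * (inner ℝ (DD φ i x) (φ x) : ℝ)
        = (2 * s * (η x * η x) * ((ε + UU φ x) ^ (s - 1)))
            * (inner ℝ (DD φ i x) (φ x) : ℝ)^2
          + (2 * η x * V x) * (fderiv ℝ η x (ee i) * (inner ℝ (DD φ i x) (φ x) : ℝ)) := by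
      intro i
      rw [hV_def]
      rw [fderiv_rho hφ hη hε x i]
      have hcomm : (inner ℝ (φ x) (DD φ i x) : ℝ) = inner ℝ (DD φ i x) (φ x) :=
        real_inner_comm _ _
      rw [hcomm]
      ring
    rw [Finset.sum_congr rfl (fun i _ => hrw i), Finset.sum_add_distrib,
      ← Finset.mul_sum, ← Finset.mul_sum]
    simp only [hT₁_def, hT₂_def, hT₃_def, PP, WW]
  rw [hpt] at hid
  rw [integral_add hT₁int (show Integrable (fun x : E => T₂ x + T₃ x) volume from
    hT₂int.add hT₃int), integral_add hT₂int hT₃int] at hid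
  -- positivity of T₂ integral
  have hT₂nn : 0 ≤ ∫ x : E, T₂ x := by
    apply integral_nonneg
    intro x
    have h1 : 0 ≤ (ε + UU φ x) ^ (s - 1) := Real.rpow_nonneg (by
      have := UU_nonneg φ x; linarith) _
    have h2 : 0 ≤ PP φ x := Finset.sum_nonneg fun i _ => sq_nonneg _
    have := hη0 x
    simp only [hT₂_def]
    positivity
  -- bound |T₃| pointwise
  have hptb : ∀ x, |T₃ x| ≤ (1/2) * T₁ x + 2 * Rhs x := by
    intro x
    have hW2 : (WW φ η x) ^ 2 ≤ NGr η x * (GG φ x * UU φ x) := by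
      have h1 : (WW φ η x) ^ 2 ≤ (∑ i : Fin m, (fderiv ℝ η x (ee i))^2)
          * (∑ i : Fin m, (inner ℝ (DD φ i x) (φ x) : ℝ)^2) := by
        apply Finset.sum_mul_sq_le_sq_mul_sq
      have h2 : (∑ i : Fin m, (inner ℝ (DD φ i x) (φ x) : ℝ)^2) ≤ GG φ x * UU φ x := by
        rw [GG, Finset.sum_mul]
        apply Finset.sum_le_sum
        intro i _
        rw [sq]
        calc (inner ℝ (DD φ i x) (φ x) : ℝ) * inner ℝ (DD φ i x) (φ x)
            ≤ (inner ℝ (DD φ i x) (DD φ i x) : ℝ) * inner ℝ (φ x) (φ x) :=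
              real_inner_mul_inner_self_le _ _
        _ = (inner ℝ (DD φ i x) (DD φ i x) : ℝ) * UU φ x := rfl
      calc (WW φ η x) ^ 2 ≤ _ := h1
      _ ≤ NGr η x * (GG φ x * UU φ x) := by
          apply mul_le_mul_of_nonneg_left h2 (NGr_nonneg η x)
    have := ptB (η x) (V x) (GG φ x) (UU φ x) (NGr η x) (WW φ η x)
      (hη0 x) (hVnn x) (GG_nonneg φ x) (UU_nonneg φ x) (NGr_nonneg η x) hW2
    simpa only [hT₁_def, hT₃_def, hRhs_def, mul_assoc, mul_comm, mul_left_comm] using this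
  -- put everything together
  have hid' : (∫ x : E, T₁ x) + ((∫ x : E, T₂ x) + (∫ x : E, T₃ x)) = 0 := hid
  have habs : -∫ x : E, T₃ x ≤ (1/2) * (∫ x : E, T₁ x) + 2 * ∫ x : E, Rhs x := by
    have h1 : -∫ x : E, T₃ x ≤ |∫ x : E, T₃ x| := neg_le_abs _
    have h2 : |∫ x : E, T₃ x| ≤ ∫ x : E, |T₃ x| := by
      simpa [Real.norm_eq_abs] using norm_integral_le_integral_norm (μ := volume) T₃
    have h3 : ∫ x : E, |T₃ x| ≤ ∫ x : E, ((1/2) * T₁ x + 2 * Rhs x) :=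
      integral_mono hT₃int.abs ((hT₁int.const_mul _).add (hRhsint.const_mul _)) hptb
    rw [integral_add (hT₁int.const_mul _) (hRhsint.const_mul _),
      integral_const_mul, integral_const_mul] at h3
    have h3' : ∫ x : E, |T₃ x|
        ≤ (1/2) * (∫ x : E, T₁ x) + 2 * ∫ x : E, Rhs x := h3
    linarith
  show (∫ x : E, T₁ x) ≤ 4 * ∫ x : E, Rhs x
  linarith


lemma hasCompactSupport_NGr {η : E → ℝ} (hηc : HasCompactSupport η) :
    HasCompactSupport (NGr η) := by
  have h : HasCompactSupport (fderiv ℝ η) := hηc.fderiv (𝕜 := ℝ)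
  apply h.mono'
  intro x hx
  apply subset_tsupport _
  simp only [Function.mem_support]
  intro h0
  apply hx
  simp [NGr, h0]

lemma cacc0 {φ : E → F} (hφ : ContDiff ℝ ∞ φ) (hharm : ∀ x, euclLaplacian φ x = 0)
    {η : E → ℝ} (hη : ContDiff ℝ ∞ η) (hηc : HasCompactSupport η) (hη0 : ∀ x, 0 ≤ η x)
    {s : ℝ} (hs : 0 ≤ s) :
    ∫ x : E, (η x * η x) * (UU φ x) ^ s * GG φ x
      ≤ 4 * ∫ x : E, (UU φ x) ^ s * NGr η x * UU φ x := by
  classical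
  have hUnn : ∀ x, 0 ≤ UU φ x := UU_nonneg φ
  have hGnn := GG_nonneg φ
  have hNnn := NGr_nonneg η
  have hηcont := hη.continuous
  have hUcont := (contDiff_UU hφ).continuous
  have hGcont : Continuous (GG φ) :=
    continuous_finset_sum _ fun i _ => ((contDiff_DD hφ i).continuous.inner
      (contDiff_DD hφ i).continuous)
  have hNcont : Continuous (NGr η) := continuous_finset_sum _ fun i _ =>
    ((contDiff_fderiv_apply hη (ee i)).continuous).pow 2
  have hNc := hasCompactSupport_NGr hηc
  -- integrable dominating function for the RHS family
  have hbound_cont : Continuous (fun x : E => (1 + UU φ x) ^ s * NGr η x * UU φ x) :=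
    (((contDiff_V hφ (one_pos)).continuous).mul hNcont).mul hUcont
  have hbound_c : HasCompactSupport (fun x : E => (1 + UU φ x) ^ s * NGr η x * UU φ x) := by
    apply hNc.mono'
    intro x hx
    apply subset_tsupport _
    simp only [Function.mem_support]
    intro h0
    exact hx (by simp [h0])
  have hbound_int : Integrable (fun x : E => (1 + UU φ x) ^ s * NGr η x * UU φ x) volume :=
    hbound_cont.integrable_of_hasCompactSupport hbound_c
  -- the family and its limit
  set Jf : ℕ → E → ℝ := fun k x => ((((k:ℝ)+1)⁻¹) + UU φ x) ^ s * NGr η x * UU φ x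
    with hJf_def
  have hJmeas : ∀ k : ℕ, AEStronglyMeasurable (Jf k) (volume : Measure E) := by
    intro k
    exact ((((contDiff_V hφ (by positivity : (0:ℝ) < ((k:ℝ)+1)⁻¹)).continuous).mul hNcont).mul
      hUcont).aestronglyMeasurable
  have hJbound : ∀ k : ℕ, ∀ᵐ x : E ∂volume, ‖Jf k x‖
      ≤ (1 + UU φ x) ^ s * NGr η x * UU φ x := by
    intro k
    apply Filter.Eventually.of_forall
    intro x
    have h1 : (0:ℝ) < ((k:ℝ)+1)⁻¹ := by positivity
    have h2 : ((((k:ℝ)+1)⁻¹) + UU φ x) ^ s ≤ (1 + UU φ x) ^ s := by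
      apply Real.rpow_le_rpow (add_nonneg h1.le (hUnn x)) ?_ hs
      have hk1 : (((k:ℝ)+1)⁻¹) ≤ 1 :=
        (inv_le_one₀ (by positivity)).mpr (le_add_of_nonneg_left (Nat.cast_nonneg k))
      linarith
    have h3 : 0 ≤ ((((k:ℝ)+1)⁻¹) + UU φ x) ^ s :=
      Real.rpow_nonneg (add_nonneg h1.le (hUnn x)) _
    rw [Real.norm_eq_abs, abs_of_nonneg (mul_nonneg (mul_nonneg h3 (hNnn x)) (hUnn x))]
    have := mul_nonneg (hNnn x) (hUnn x)
    calc ((((k:ℝ)+1)⁻¹) + UU φ x) ^ s * NGr η x * UU φ x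
        = ((((k:ℝ)+1)⁻¹) + UU φ x) ^ s * (NGr η x * UU φ x) := by ring
    _ ≤ (1 + UU φ x) ^ s * (NGr η x * UU φ x) := mul_le_mul_of_nonneg_right h2 this
    _ = (1 + UU φ x) ^ s * NGr η x * UU φ x := by ring
  have hJlim : ∀ᵐ x : E ∂volume, Tendsto (fun k => Jf k x) atTop
      (𝓝 ((UU φ x) ^ s * NGr η x * UU φ x)) := by
    apply Filter.Eventually.of_forall
    intro x
    have h1 : Tendsto (fun k : ℕ => (((k:ℝ)+1)⁻¹) + UU φ x) atTop (𝓝 (UU φ x)) := by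
      have h0 := tendsto_one_div_add_atTop_nhds_zero_nat.add
        (tendsto_const_nhds (x := UU φ x) (f := atTop))
      simp only [one_div, zero_add] at h0
      simpa using h0
    have h2 : ContinuousAt (fun t : ℝ => t ^ s) (UU φ x) :=
      Real.continuousAt_rpow_const _ _ (Or.inr hs)
    have h3 : Tendsto (fun k : ℕ => ((((k:ℝ)+1)⁻¹) + UU φ x) ^ s) atTop
        (𝓝 ((UU φ x) ^ s)) := (h2.tendsto.comp h1)
    exact (h3.mul_const _).mul_const _
  have hJtendsto : Tendsto (fun k : ℕ => ∫ x : E, Jf k x) atTop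
      (𝓝 (∫ x : E, (UU φ x) ^ s * NGr η x * UU φ x)) :=
    tendsto_integral_of_dominated_convergence _ hJmeas hbound_int hJbound hJlim
  -- for each k, the chain of inequalities
  have hchain : ∀ k : ℕ, ∫ x : E, (η x * η x) * (UU φ x) ^ s * GG φ x
      ≤ 4 * ∫ x : E, Jf k x := by
    intro k
    have hε : (0:ℝ) < ((k:ℝ)+1)⁻¹ := by positivity
    have hLint : Integrable (fun x : E => (η x * η x) * ((((k:ℝ)+1)⁻¹) + UU φ x) ^ s * GG φ x)
        volume := by
      apply Continuous.integrable_of_hasCompactSupport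
      · exact (((hηcont.mul hηcont).mul (contDiff_V hφ hε).continuous).mul hGcont)
      · apply hηc.mono'
        intro x hx
        apply subset_tsupport _
        simp only [Function.mem_support]
        intro h0
        exact hx (by simp [h0])
    have h1 : ∫ x : E, (η x * η x) * (UU φ x) ^ s * GG φ x
        ≤ ∫ x : E, (η x * η x) * ((((k:ℝ)+1)⁻¹) + UU φ x) ^ s * GG φ x := by
      apply integral_mono_of_nonneg
      · apply Filter.Eventually.of_forall
        intro x
        have h3 : 0 ≤ (UU φ x) ^ s := Real.rpow_nonneg (hUnn x) _
        exact mul_nonneg (mul_nonneg (mul_self_nonneg _) h3) (hGnn x)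
      · exact hLint
      · apply Filter.Eventually.of_forall
        intro x
        have h2 : (UU φ x) ^ s ≤ ((((k:ℝ)+1)⁻¹) + UU φ x) ^ s :=
          Real.rpow_le_rpow (hUnn x) (by linarith) hs
        have hηnn := hη0 x
        have := GG_nonneg φ x
        calc (η x * η x) * (UU φ x) ^ s * GG φ x
            ≤ (η x * η x) * (((((k:ℝ)+1)⁻¹) + UU φ x) ^ s) * GG φ x := by
              apply mul_le_mul_of_nonneg_right ?_ this
              apply mul_le_mul_of_nonneg_left h2 (by positivity)
        _ = _ := by ring
    have h2 := cacc hφ hharm hη hηc hη0 hε hs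
    exact le_trans h1 h2
  exact ge_of_tendsto (hJtendsto.const_mul 4) (Filter.Eventually.of_forall hchain)


-- the scaled bump functions
lemma exists_bump (hm : 0 < m) : ∃ C : ℝ, 0 ≤ C ∧ ∀ R : ℝ, 1 ≤ R →
    ∃ η : E → ℝ, ContDiff ℝ ∞ η ∧ HasCompactSupport η ∧ (∀ x, 0 ≤ η x) ∧
      (∀ x : E, ‖x‖ ≤ R → η x = 1) ∧ (∀ x, NGr η x ≤ m * (C * R⁻¹)^2) := by
  have : Nonempty (Fin m) := ⟨⟨0, hm⟩⟩
  let θ : ContDiffBump (0 : E) := ⟨1, 2, one_pos, one_lt_two⟩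
  have hθcd : ContDiff ℝ ∞ θ := θ.contDiff
  have hθc : HasCompactSupport (θ : E → ℝ) := θ.hasCompactSupport
  -- bound on the derivative of θ
  have hcont : Continuous (fun y : E => ‖fderiv ℝ θ y‖) :=
    (contDiff_infty_iff_fderiv.mp hθcd).2.continuous.norm
  have hcs : HasCompactSupport (fun y : E => ‖fderiv ℝ θ y‖) := (hθc.fderiv (𝕜 := ℝ)).norm
  obtain ⟨y₀, hy₀⟩ := hcont.exists_forall_ge_of_hasCompactSupport hcs
  set C := ‖fderiv ℝ (θ : E → ℝ) y₀‖ with hC_def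
  refine ⟨C, norm_nonneg _, ?_⟩
  intro R hR
  have hR0 : (0:ℝ) < R := lt_of_lt_of_le one_pos hR
  refine ⟨fun x => θ (R⁻¹ • x), ?_, ?_, ?_, ?_, ?_⟩
  · exact hθcd.comp (contDiff_const_smul R⁻¹)
  · apply HasCompactSupport.intro (isCompact_closedBall (0:E) (2*R))
    intro x hx
    apply θ.zero_of_le_dist
    simp only [Metric.mem_closedBall, dist_zero_right, not_le] at hx
    show (2:ℝ) ≤ dist (R⁻¹ • x) 0
    rw [dist_zero_right, norm_smul, norm_inv, Real.norm_eq_abs, abs_of_pos hR0]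
    rw [inv_mul_eq_div, le_div_iff₀ hR0]
    linarith
  · intro x; exact θ.nonneg
  · intro x hx
    apply θ.one_of_mem_closedBall
    show R⁻¹ • x ∈ Metric.closedBall 0 1
    simp only [Metric.mem_closedBall, dist_zero_right, norm_smul, norm_inv,
      Real.norm_eq_abs, abs_of_pos hR0]
    rw [inv_mul_eq_div, div_le_one hR0]
    exact hx
  · intro x
    -- compute the derivative of the rescaled bump
    have hL : HasFDerivAt (fun x : E => R⁻¹ • x)
        (R⁻¹ • (ContinuousLinearMap.id ℝ E)) x :=
      ((ContinuousLinearMap.id ℝ E).hasFDerivAt).const_smul R⁻¹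
    have hθd : HasFDerivAt (θ : E → ℝ) (fderiv ℝ (θ : E → ℝ) (R⁻¹ • x)) (R⁻¹ • x) :=
      ((hθcd.differentiable (by simp)) (R⁻¹ • x)).hasFDerivAt
    have hcomp : HasFDerivAt (fun x : E => θ (R⁻¹ • x))
        ((fderiv ℝ (θ : E → ℝ) (R⁻¹ • x)).comp (R⁻¹ • (ContinuousLinearMap.id ℝ E))) x :=
      hθd.comp x hL
    have hbound : ∀ i : Fin m,
        (fderiv ℝ (fun x : E => θ (R⁻¹ • x)) x (ee i))^2 ≤ (C * R⁻¹)^2 := by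
      intro i
      rw [hcomp.fderiv]
      have h1 : ‖(fderiv ℝ (θ : E → ℝ) (R⁻¹ • x)).comp
          (R⁻¹ • (ContinuousLinearMap.id ℝ E)) (ee i)‖ ≤ C * R⁻¹ := by
        calc ‖(fderiv ℝ (θ : E → ℝ) (R⁻¹ • x)) (R⁻¹ • ee i)‖
            ≤ ‖fderiv ℝ (θ : E → ℝ) (R⁻¹ • x)‖ * ‖R⁻¹ • ee i‖ :=
              (fderiv ℝ (θ : E → ℝ) (R⁻¹ • x)).le_opNorm _
        _ = ‖fderiv ℝ (θ : E → ℝ) (R⁻¹ • x)‖ * R⁻¹ := by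
            rw [norm_smul, norm_inv, Real.norm_eq_abs, abs_of_pos hR0]
            congr 1
            have : ‖ee (m := m) i‖ = 1 := by
              rw [ee, EuclideanSpace.norm_single]
              simp
            rw [this, mul_one]
        _ ≤ C * R⁻¹ := by
            apply mul_le_mul_of_nonneg_right (hy₀ _) (by positivity)
      calc ((fderiv ℝ (θ : E → ℝ) (R⁻¹ • x)).comp
          (R⁻¹ • (ContinuousLinearMap.id ℝ E)) (ee i))^2
          = ‖(fderiv ℝ (θ : E → ℝ) (R⁻¹ • x)).comp
            (R⁻¹ • (ContinuousLinearMap.id ℝ E)) (ee i)‖^2 := by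
            rw [Real.norm_eq_abs, sq_abs]
      _ ≤ (C * R⁻¹)^2 := by
          apply pow_le_pow_left₀ (norm_nonneg _) h1
    calc NGr (fun x : E => θ (R⁻¹ • x)) x ≤ ∑ _i : Fin m, (C * R⁻¹)^2 :=
          Finset.sum_le_sum (fun i _ => hbound i)
    _ = m * (C * R⁻¹)^2 := by simp [Finset.sum_const, nsmul_eq_mul]


lemma UU_rpow_mul_self {φ : E → F} {q : ℝ} (hq : 2 ≤ q) (x : E) :
    (UU φ x) ^ (q/2 - 1) * UU φ x = ‖φ x‖ ^ q := by
  have ha : (0:ℝ) ≤ ‖φ x‖ := norm_nonneg _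
  have hU : UU φ x = ‖φ x‖ ^ (2:ℝ) := by
    rw [UU, real_inner_self_eq_norm_sq, show ((2:ℝ)) = ((2:ℕ):ℝ) by norm_num,
      Real.rpow_natCast]
  rw [hU, ← Real.rpow_mul ha]
  rw [← Real.rpow_add' ha (show 2*(q/2-1) + 2 ≠ 0 by nlinarith)]
  congr 1
  ring

lemma harmonic_Lq_zero (hm : 0 < m) {q : ℝ} (hq : 2 ≤ q)
    {φ : E → F} (hφ : ContDiff ℝ ∞ φ) (hharm : ∀ x, euclLaplacian φ x = 0)
    (hLq : Integrable (fun x : E => ‖φ x‖ ^ q) volume) :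
    ∀ x, φ x = 0 := by
  classical
  set s : ℝ := q/2 - 1 with hs_def
  have hs : 0 ≤ s := by rw [hs_def]; linarith
  have hUnn := UU_nonneg φ
  have hGnn := GG_nonneg φ
  have hUcont := (contDiff_UU hφ).continuous
  have hGcont : Continuous (GG φ) :=
    continuous_finset_sum _ fun i _ => ((contDiff_DD hφ i).continuous.inner
      (contDiff_DD hφ i).continuous)
  have hUscont : Continuous (fun x : E => (UU φ x) ^ s) := by
    rw [continuous_iff_continuousAt]
    intro x
    exact (Real.continuousAt_rpow_const _ _ (Or.inr hs)).comp hUcont.continuousAt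
  have hgcont : Continuous (fun x : E => (UU φ x) ^ s * GG φ x) := hUscont.mul hGcont
  have hgnn : ∀ x, 0 ≤ (UU φ x) ^ s * GG φ x := fun x =>
    mul_nonneg (Real.rpow_nonneg (hUnn x) _) (hGnn x)
  set A : ℝ := ∫ x : E, ‖φ x‖ ^ q with hA_def
  have hAnn : 0 ≤ A := integral_nonneg (fun x => Real.rpow_nonneg (norm_nonneg _) _)
  obtain ⟨C, hC0, hbump⟩ := exists_bump (m := m) hm
  -- upper bound for every k ≥ 1
  have hkey : ∀ k : ℕ, 1 ≤ k → ∀ x₀ : E, ∀ r : ℝ, 0 < r → (‖x₀‖ + r ≤ (k:ℝ)) →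
      ∀ c : ℝ, 0 < c → (∀ y ∈ Metric.ball x₀ r, c < (UU φ y) ^ s * GG φ y) →
      c * (volume (Metric.ball x₀ r)).toReal ≤ 4 * ((m:ℝ) * (C * ((k:ℝ))⁻¹)^2 * A) := by
    intro k hk x₀ r hr hkr c hc hball
    have hk0 : (0:ℝ) < (k:ℝ) := by exact_mod_cast hk
    have hk1 : (1:ℝ) ≤ (k:ℝ) := by exact_mod_cast hk
    obtain ⟨η, hηcd, hηc, hη0, hη1, hηgrad⟩ := hbump (k:ℝ) hk1
    -- integrability of the main integrand
    have hLcont : Continuous (fun x : E => (η x * η x) * (UU φ x) ^ s * GG φ x) :=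
      ((hηcd.continuous.mul hηcd.continuous).mul hUscont).mul hGcont
    have hLc : HasCompactSupport (fun x : E => (η x * η x) * (UU φ x) ^ s * GG φ x) := by
      apply hηc.mono'
      intro x hx
      apply subset_tsupport _
      simp only [Function.mem_support]
      intro h0
      exact hx (by simp [h0])
    have hLint : Integrable (fun x : E => (η x * η x) * (UU φ x) ^ s * GG φ x) volume :=
      hLcont.integrable_of_hasCompactSupport hLc
    -- lower bound : c * vol(ball) ≤ ∫ η² U^s G
    have hlow : c * (volume (Metric.ball x₀ r)).toReal
        ≤ ∫ x : E, (η x * η x) * (UU φ x) ^ s * GG φ x := by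
      have h1 : ∫ x in Metric.ball x₀ r, c ∂(volume : Measure E)
          = (volume (Metric.ball x₀ r)).toReal * c := by
        rw [setIntegral_const, smul_eq_mul]; rfl
      have h2 : ∫ x in Metric.ball x₀ r, c ∂(volume : Measure E)
          ≤ ∫ x in Metric.ball x₀ r, (η x * η x) * (UU φ x) ^ s * GG φ x ∂volume := by
        apply setIntegral_mono_on
        · exact integrableOn_const measure_ball_lt_top.ne
        · exact hLint.integrableOn
        · exact measurableSet_ball
        · intro y hy
          have hη1y : η y = 1 := by
            apply hη1
            have h3 : dist y x₀ < r := Metric.mem_ball.mp hy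
            have h4 : ‖y‖ ≤ ‖x₀‖ + dist y x₀ := by
              rw [dist_eq_norm]
              calc ‖y‖ = ‖x₀ + (y - x₀)‖ := by congr 1; abel
              _ ≤ ‖x₀‖ + ‖y - x₀‖ := norm_add_le _ _
            linarith
          rw [hη1y]
          simpa using (hball y hy).le
      have h3 : ∫ x in Metric.ball x₀ r, (η x * η x) * (UU φ x) ^ s * GG φ x ∂volume
          ≤ ∫ x : E, (η x * η x) * (UU φ x) ^ s * GG φ x := by
        apply setIntegral_le_integral hLint
        apply Filter.Eventually.of_forall
        intro x
        have := hgnn x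
        have := hη0 x
        simp only [Pi.zero_apply]
        calc (0:ℝ) = (η x * η x) * 0 := by ring
        _ ≤ (η x * η x) * ((UU φ x) ^ s * GG φ x) :=
            mul_le_mul_of_nonneg_left (hgnn x) (mul_self_nonneg _)
        _ = (η x * η x) * (UU φ x) ^ s * GG φ x := by ring
      linarith [h1 ▸ h2, h3, mul_comm c (volume (Metric.ball x₀ r)).toReal]
    -- upper bound chain
    have hupp : ∫ x : E, (η x * η x) * (UU φ x) ^ s * GG φ x
        ≤ 4 * ((m:ℝ) * (C * ((k:ℝ))⁻¹)^2 * A) := by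
      have h1 := cacc0 hφ hharm hηcd hηc hη0 hs
      have h2 : ∫ x : E, (UU φ x) ^ s * NGr η x * UU φ x
          ≤ (m:ℝ) * (C * ((k:ℝ))⁻¹)^2 * A := by
        have h3 : ∀ x : E, (UU φ x) ^ s * NGr η x * UU φ x
            ≤ (m:ℝ) * (C * ((k:ℝ))⁻¹)^2 * ‖φ x‖ ^ q := by
          intro x
          have e1 : (UU φ x) ^ s * NGr η x * UU φ x
              = NGr η x * ((UU φ x) ^ s * UU φ x) := by ring
          rw [e1, UU_rpow_mul_self hq x]
          apply mul_le_mul_of_nonneg_right (hηgrad x)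
            (Real.rpow_nonneg (norm_nonneg _) _)
        calc ∫ x : E, (UU φ x) ^ s * NGr η x * UU φ x
            ≤ ∫ x : E, (m:ℝ) * (C * ((k:ℝ))⁻¹)^2 * ‖φ x‖ ^ q := by
              apply integral_mono ?_ (hLq.const_mul _) h3
              · -- integrability of LHS
                apply Continuous.integrable_of_hasCompactSupport
                · exact (hUscont.mul (continuous_finset_sum _ fun i _ =>
                    ((contDiff_fderiv_apply hηcd (ee i)).continuous).pow 2)).mul hUcont
                · apply (hasCompactSupport_NGr hηc).mono'
                  intro x hx
                  apply subset_tsupport _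
                  simp only [Function.mem_support]
                  intro h0
                  exact hx (by simp [h0])
        _ = (m:ℝ) * (C * ((k:ℝ))⁻¹)^2 * A := by
            rw [integral_const_mul]
      linarith
    linarith
  -- conclude pointwise vanishing of U^s * G
  have hg0 : ∀ x, (UU φ x) ^ s * GG φ x = 0 := by
    intro x₀
    by_contra h0
    have hgpos : 0 < (UU φ x₀) ^ s * GG φ x₀ := lt_of_le_of_ne (hgnn x₀) (Ne.symm h0)
    set g₀ := (UU φ x₀) ^ s * GG φ x₀ with hg₀_def
    -- find a small ball where g > g₀ / 2
    have hnhds : {y : E | g₀ / 2 < (UU φ y) ^ s * GG φ y} ∈ 𝓝 x₀ := by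
      apply hgcont.continuousAt.preimage_mem_nhds
      exact Ioi_mem_nhds (by linarith [half_lt_self hgpos])
    obtain ⟨r, hr, hball⟩ := Metric.mem_nhds_iff.mp hnhds
    have hc : 0 < g₀ / 2 := by linarith
    have hvol_pos : 0 < (volume (Metric.ball x₀ r)).toReal := by
      apply ENNReal.toReal_pos
      · exact (Metric.measure_ball_pos volume x₀ hr).ne'
      · exact measure_ball_lt_top.ne
    set c := g₀ / 2 * (volume (Metric.ball x₀ r)).toReal with hc_def
    have hcpos : 0 < c := mul_pos hc hvol_pos
    -- the bound tends to zero
    have htend : Tendsto (fun k : ℕ => 4 * ((m:ℝ) * (C * ((k:ℝ))⁻¹)^2 * A)) atTop (𝓝 0) := by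
      have h1 : Tendsto (fun k : ℕ => ((k:ℝ))⁻¹) atTop (𝓝 0) :=
        tendsto_inv_atTop_nhds_zero_nat
      have h2 : Tendsto (fun k : ℕ => 4 * ((m:ℝ) * (C * ((k:ℝ))⁻¹)^2 * A)) atTop
          (𝓝 (4 * ((m:ℝ) * (C * 0)^2 * A))) := by
        apply Tendsto.const_mul
        apply Tendsto.mul_const
        apply Tendsto.const_mul
        exact (h1.const_mul C).pow 2
      simpa using h2
    have hev : ∀ᶠ k : ℕ in atTop, 4 * ((m:ℝ) * (C * ((k:ℝ))⁻¹)^2 * A) < c :=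
      htend.eventually (gt_mem_nhds hcpos)
    have hev2 : ∀ᶠ k : ℕ in atTop, (‖x₀‖ + r ≤ (k:ℝ)) := by
      have := tendsto_natCast_atTop_atTop (R := ℝ)
      exact this.eventually_ge_atTop (‖x₀‖ + r)
    have hev3 : ∀ᶠ k : ℕ in atTop, 1 ≤ k := eventually_ge_atTop 1
    obtain ⟨k, hk1, hk2, hk3⟩ := (hev.and (hev2.and hev3)).exists
    have := hkey k hk3 x₀ r hr hk2 (g₀/2) hc (fun y hy => hball hy)
    rw [← hc_def] at this
    linarith
  -- now derive that UU φ is constant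
  have hinner0 : ∀ (x : E) (i : Fin m), (inner ℝ (φ x) (DD φ i x) : ℝ) = 0 := by
    intro x i
    by_cases hU0 : UU φ x = 0
    · have : φ x = 0 := inner_self_eq_zero.mp hU0
      rw [this, inner_zero_left]
    · have hUpos : 0 < UU φ x := lt_of_le_of_ne (hUnn x) (Ne.symm hU0)
      have hUs : 0 < (UU φ x) ^ s := Real.rpow_pos_of_pos hUpos _
      have hG0 : GG φ x = 0 := by
        have := hg0 x
        rcases mul_eq_zero.mp this with h | h
        · exact absurd h hUs.ne'
        · exact h
      have hDi : (inner ℝ (DD φ i x) (DD φ i x) : ℝ) = 0 := by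
        have h1 := (Finset.sum_eq_zero_iff_of_nonneg
          (fun j _ => real_inner_self_nonneg (x := DD φ j x))).mp hG0 i (Finset.mem_univ i)
        exact h1
      have : DD φ i x = 0 := inner_self_eq_zero.mp hDi
      rw [this, inner_zero_right]
  have hfderivU : ∀ x : E, fderiv ℝ (UU φ) x = 0 := by
    intro x
    have hbasis : ∀ i : Fin m, fderiv ℝ (UU φ) x (EuclideanSpace.single i 1) = 0 := by
      intro i
      have := fderiv_UU_apply hφ x i
      rw [hinner0 x i] at this
      simpa [ee] using this
    apply ContinuousLinearMap.coe_injective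
    apply Module.Basis.ext (EuclideanSpace.basisFun (Fin m) ℝ).toBasis
    intro i
    simp only [ContinuousLinearMap.coe_coe, LinearMap.zero_apply,
      ContinuousLinearMap.zero_apply]
    rw [OrthonormalBasis.coe_toBasis, EuclideanSpace.basisFun_apply]
    exact hbasis i
  have hUconst : ∀ x : E, UU φ x = UU φ 0 := by
    intro x
    exact is_const_of_fderiv_eq_zero ((contDiff_UU hφ).differentiable (by simp)) hfderivU x 0
  -- so ‖φ x‖ is constant
  have hnconst : ∀ x : E, ‖φ x‖ = ‖φ 0‖ := by
    intro x
    have h1 : ‖φ x‖ ^ 2 = ‖φ 0‖ ^ 2 := by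
      have := hUconst x
      rwa [UU, UU, real_inner_self_eq_norm_sq, real_inner_self_eq_norm_sq] at this
    have := congrArg Real.sqrt h1
    rwa [Real.sqrt_sq (norm_nonneg _), Real.sqrt_sq (norm_nonneg _)] at this
  -- infinite volume forces the constant to be zero
  haveI : Nonempty (Fin m) := ⟨⟨0, hm⟩⟩
  haveI : Nontrivial E := by
    refine ⟨0, EuclideanSpace.single (⟨0, hm⟩ : Fin m) (1:ℝ), ?_⟩
    intro h
    have h0 := congrArg (fun v : E => v (⟨0, hm⟩ : Fin m)) h
    simp [EuclideanSpace.single_apply] at h0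
  have hvol : (volume : Measure E) univ = ⊤ := by
    exact MeasureTheory.measure_univ_of_isAddLeftInvariant volume
  have hconstfun : (fun x : E => ‖φ x‖ ^ q) = fun _ : E => ‖φ 0‖ ^ q := by
    funext x
    rw [hnconst x]
  rw [hconstfun] at hLq
  rcases integrable_const_iff.mp hLq with h | h
  · have hq0 : q ≠ 0 := by linarith
    have hn0 : ‖φ 0‖ = 0 := by
      by_contra hne
      have : (0:ℝ) < ‖φ 0‖ := lt_of_le_of_ne (norm_nonneg _) (Ne.symm hne)
      exact absurd h (Real.rpow_pos_of_pos this q).ne'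
    intro x
    rw [← norm_eq_zero]
    rw [hnconst x, hn0]
  · exact absurd hvol (measure_ne_top _ _)

end HSAux

/-- If `ψ : ℝ^m → ℝ^n` is smooth with `Δ(Δψ) = 0` everywhere
(HS-tensional/biharmonic) and `∫ ‖Δψ‖^q < ∞` for some `2 ≤ q < ∞`, then `Δψ = 0`
everywhere, i.e. `ψ` is harmonic. -/
theorem HS_tensional_finite_Lq_tension_is_harmonic (m n : ℕ) (hm : 0 < m) (hn : 0 < n)
    (q : ℝ) (hq : 2 ≤ q)
    (ψ : EuclideanSpace ℝ (Fin m) → EuclideanSpace ℝ (Fin n)) (hψ : ContDiff ℝ (⊤ : ℕ∞) ψ)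
    (hbi : ∀ x, euclLaplacian (euclLaplacian ψ) x = 0)
    (hLq : Integrable (fun x => ‖euclLaplacian ψ x‖ ^ q) (volume)) :
    ∀ x, euclLaplacian ψ x = 0 := by
  have hψ' : ContDiff ℝ ∞ ψ := hψ.of_le (by simp)
  have hφcd : ContDiff ℝ ∞ (euclLaplacian ψ) := by
    apply ContDiff.sum
    intro i _
    exact HSAux.contDiff_fderiv_apply (HSAux.contDiff_fderiv_apply hψ' _) _
  exact HSAux.harmonic_Lq_zero hm hq hφcd hbi hLq
end

section
/- Let m, n be positive integers and let q be a real number with 2 ≤ q < ∞. Let ψ : ℝ^m → ℝ^n be a smooth map such that Δ(Δψ) = 0 everywhere on ℝ^m, ∫_{ℝ^m} ‖(Δψ)(x)‖^q dx < ∞, and ∫_{ℝ^m} ‖Dψ(x)‖² dx < ∞, where ‖Dψ(x)‖ denotes the Hilbert–Schmidt (Frobenius) norm of the total derivative of ψ at x. Then Δψ = 0 everywhere, i.e. ψ is harmonic. -/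
open MeasureTheory

/-- The squared Hilbert–Schmidt (Frobenius) norm `‖Dψ(x)‖²` of the total derivative of a
map between Euclidean spaces, computed via the orthonormal coordinate directions. -/
noncomputable def hsNormSqFDeriv {m n : ℕ}
    (ψ : EuclideanSpace ℝ (Fin m) → EuclideanSpace ℝ (Fin n))
    (x : EuclideanSpace ℝ (Fin m)) : ℝ :=
  ∑ i : Fin m, ‖fderiv ℝ ψ x (EuclideanSpace.single i 1)‖ ^ 2

set_option maxHeartbeats 1000000
open scoped ContDiff

namespace LiouAux

lemma one_le_inf : (∞ : WithTop ℕ∞) ≠ 0 := by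
  simp

lemma inf_add_one_le : (∞ : WithTop ℕ∞) + 1 ≤ ∞ := le_of_eq rfl


noncomputable def phi (q ε t : ℝ) : ℝ := (t^2+ε^2) ^ (q/4) - ε ^ (q/2)
noncomputable def phid (q ε t : ℝ) : ℝ := (q/2) * t * (t^2+ε^2) ^ (q/4-1)
noncomputable def phidd (q ε t : ℝ) : ℝ :=
  (q/2) * (t^2+ε^2) ^ (q/4-2) * (ε^2 + (q/2-1)*t^2)

variable {q ε t : ℝ}

lemma base_pos (hε : 0 < ε) (t : ℝ) : (0:ℝ) < t^2 + ε^2 := by positivity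

lemma hasDerivAt_phi (hε : 0 < ε) (t : ℝ) : HasDerivAt (phi q ε) (phid q ε t) t := by
  have h1 : HasDerivAt (fun t : ℝ => t^2 + ε^2) (2*t) t := by
    simpa using ((hasDerivAt_pow 2 t).add_const (ε^2))
  have h2 := (Real.hasDerivAt_rpow_const (p := q/4) (Or.inl (base_pos hε t).ne')).comp t h1
  have h3 : HasDerivAt (fun s : ℝ => (s^2+ε^2) ^ (q/4) - ε ^ (q/2))
      (q/4 * (t^2+ε^2) ^ (q/4-1) * (2*t)) t := h2.sub_const _
  convert h3 using 1
  · rfl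
  unfold phid; ring

lemma hasDerivAt_phid (hε : 0 < ε) (t : ℝ) : HasDerivAt (phid q ε) (phidd q ε t) t := by
  have h1 : HasDerivAt (fun t : ℝ => t^2 + ε^2) (2*t) t := by
    simpa using ((hasDerivAt_pow 2 t).add_const (ε^2))
  have h2 := (Real.hasDerivAt_rpow_const (p := q/4-1) (Or.inl (base_pos hε t).ne')).comp t h1
  have h4 : HasDerivAt (fun s : ℝ => (q/2) * s * (s^2+ε^2) ^ (q/4-1))
      ((q/2) * (t^2+ε^2) ^ (q/4-1) + (q/2) * t * ((q/4-1) * (t^2+ε^2) ^ (q/4-1-1) * (2*t))) t := by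
    have ha : HasDerivAt (fun s : ℝ => (q/2) * s) (q/2) t := by
      simpa using (hasDerivAt_id t).const_mul (q/2)
    simpa [mul_comm, mul_assoc, mul_left_comm, Pi.mul_def, Function.comp_def] using ha.mul h2
  convert h4 using 1
  · rfl
  have hsplit : (t^2+ε^2) ^ (q/4-1) = (t^2+ε^2) * (t^2+ε^2) ^ (q/4-2) := by
    rw [show q/4-1 = 1 + (q/4-2) by ring, Real.rpow_add (base_pos hε t), Real.rpow_one]
  have hsplit2 : (q/4-1-1) = (q/4-2) := by ring
  rw [hsplit2] at h4 ⊢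
  unfold phidd; rw [hsplit]; ring

lemma phi_nonneg (hε : 0 < ε) (hq : 0 ≤ q) (t : ℝ) : 0 ≤ phi q ε t := by
  unfold phi
  have h1 : (ε^2:ℝ) ^ (q/4) ≤ (t^2+ε^2) ^ (q/4) :=
    Real.rpow_le_rpow (by positivity) (by nlinarith [sq_nonneg t]) (by positivity)
  have h2 : (ε^2:ℝ) ^ (q/4) = ε ^ (q/2) := by
    rw [← Real.rpow_natCast ε 2, ← Real.rpow_mul hε.le, show ((2:ℕ):ℝ)*(q/4) = q/2 by push_cast; ring]
  linarith [h1, h2.symm.le]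

lemma phidd_nonneg (hε : 0 < ε) (hq : 2 ≤ q) (t : ℝ) : 0 ≤ phidd q ε t := by
  unfold phidd
  have h1 : (0:ℝ) ≤ (t^2+ε^2) ^ (q/4-2) := Real.rpow_nonneg (by positivity) _
  have h2 : (0:ℝ) ≤ ε^2 + (q/2-1)*t^2 := by nlinarith [sq_nonneg t, sq_nonneg ε]
  have h3 : (0:ℝ) ≤ q/2 := by linarith
  positivity

lemma phi_sq_le (hε : 0 < ε) (hq : 2 ≤ q) (t : ℝ) :
    (phi q ε t)^2 ≤ 2 ^ (q/2+1) * (|t| ^ q + ε ^ q) := by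
  have hq0 : (0:ℝ) < q := by linarith
  set M := max |t| ε with hM
  have hM0 : 0 < M := lt_max_of_lt_right hε
  have hb : t^2 + ε^2 ≤ 2 * M^2 := by
    have h1 : |t| ≤ M := le_max_left _ _
    have h2 : ε ≤ M := le_max_right _ _
    nlinarith [abs_nonneg t, hε.le, sq_abs t]
  have h3 : (t^2+ε^2) ^ (q/4) ≤ (2 * M^2) ^ (q/4) :=
    Real.rpow_le_rpow (by positivity) hb (by positivity)
  have h4 : (2 * M^2 : ℝ) ^ (q/4) = 2 ^ (q/4) * M ^ (q/2) := by
    rw [Real.mul_rpow (by norm_num) (by positivity), ← Real.rpow_natCast M 2,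
      ← Real.rpow_mul hM0.le, show ((2:ℕ):ℝ)*(q/4) = q/2 by push_cast; ring]
  have h5 : M ^ (q/2) ≤ |t| ^ (q/2) + ε ^ (q/2) := by
    rcases max_cases |t| ε with ⟨h, _⟩ | ⟨h, _⟩ <;> rw [hM, h]
    · have : (0:ℝ) ≤ ε ^ (q/2) := Real.rpow_nonneg hε.le _
      linarith
    · have : (0:ℝ) ≤ |t| ^ (q/2) := Real.rpow_nonneg (abs_nonneg t) _
      linarith
  have hphile : phi q ε t ≤ 2 ^ (q/4) * (|t| ^ (q/2) + ε ^ (q/2)) := by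
    unfold phi
    have hεq : (0:ℝ) ≤ ε ^ (q/2) := Real.rpow_nonneg hε.le _
    have h6 := h3.trans (le_of_eq h4)
    have h7 : (0:ℝ) ≤ (2:ℝ) ^ (q/4) := Real.rpow_nonneg (by norm_num) _
    have h8 := mul_le_mul_of_nonneg_left h5 h7
    linarith
  have hphin := phi_nonneg hε hq0.le t
  have hsq : (phi q ε t)^2 ≤ (2 ^ (q/4) * (|t| ^ (q/2) + ε ^ (q/2)))^2 := by
    apply sq_le_sq' _ hphile
    have : (0:ℝ) ≤ 2 ^ (q/4) * (|t| ^ (q/2) + ε ^ (q/2)) := by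
      have := Real.rpow_nonneg (abs_nonneg t) (q/2)
      have := Real.rpow_nonneg hε.le (q/2)
      positivity
    linarith
  refine hsq.trans ?_
  have e1 : ((2:ℝ) ^ (q/4))^2 = 2 ^ (q/2) := by
    rw [← Real.rpow_natCast ((2:ℝ) ^ (q/4)) 2, ← Real.rpow_mul (by norm_num : (0:ℝ) ≤ 2),
      show (q/4*(2:ℕ):ℝ) = q/2 by push_cast; ring]
  have e2 : (|t| ^ (q/2))^2 = |t| ^ q := by
    rw [← Real.rpow_natCast (|t| ^ (q/2)) 2, ← Real.rpow_mul (abs_nonneg t),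
      show (q/2*(2:ℕ):ℝ) = q by push_cast; ring]
  have e3 : (ε ^ (q/2))^2 = ε ^ q := by
    rw [← Real.rpow_natCast (ε ^ (q/2)) 2, ← Real.rpow_mul hε.le,
      show (q/2*(2:ℕ):ℝ) = q by push_cast; ring]
  have e4 : (2:ℝ) ^ (q/2+1) = 2 * 2 ^ (q/2) := by
    rw [Real.rpow_add (by norm_num : (0:ℝ) < 2), Real.rpow_one]; ring
  have htq : (0:ℝ) ≤ |t| ^ q := Real.rpow_nonneg (abs_nonneg t) _
  have hεq : (0:ℝ) ≤ ε ^ q := Real.rpow_nonneg hε.le _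
  have cs : (|t| ^ (q/2) + ε ^ (q/2))^2 ≤ 2 * (|t| ^ q + ε ^ q) := by
    nlinarith [sq_nonneg (|t| ^ (q/2) - ε ^ (q/2)), e2, e3]
  calc (2 ^ (q/4) * (|t| ^ (q/2) + ε ^ (q/2)))^2
      = 2 ^ (q/2) * (|t| ^ (q/2) + ε ^ (q/2))^2 := by rw [mul_pow, e1]
    _ ≤ 2 ^ (q/2) * (2 * (|t| ^ q + ε ^ q)) := by
        have : (0:ℝ) ≤ (2:ℝ) ^ (q/2) := Real.rpow_nonneg (by norm_num) _
        exact mul_le_mul_of_nonneg_left cs this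
    _ = 2 ^ (q/2+1) * (|t| ^ q + ε ^ q) := by rw [e4]; ring

lemma phid_sq (hε : 0 < ε) (t : ℝ) :
    (phid q ε t)^2 = (q/2)^2 * t^2 * (t^2+ε^2) ^ (q/2-2) := by
  unfold phid
  have : ((t^2+ε^2) ^ (q/4-1))^2 = (t^2+ε^2) ^ (q/2-2) := by
    rw [← Real.rpow_natCast ((t^2+ε^2) ^ (q/4-1)) 2, ← Real.rpow_mul (base_pos hε t).le,
      show ((q/4-1)*(2:ℕ):ℝ) = q/2-2 by push_cast; ring]
  rw [mul_pow, mul_pow, this]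

lemma contDiff_phi (hε : 0 < ε) : ContDiff ℝ ∞ (phi q ε) := by
  unfold phi
  apply ContDiff.sub _ contDiff_const
  apply ContDiff.rpow_const_of_ne
  · exact (contDiff_id.pow 2).add contDiff_const
  · exact fun t => (base_pos hε t).ne'

lemma contDiff_phid (hε : 0 < ε) : ContDiff ℝ ∞ (phid q ε) := by
  unfold phid
  apply ContDiff.mul (contDiff_const.mul contDiff_id)
  apply ContDiff.rpow_const_of_ne
  · exact (contDiff_id.pow 2).add contDiff_const
  · exact fun t => (base_pos hε t).ne'




variable {m : ℕ} {F : Type*} [NormedAddCommGroup F] [NormedSpace ℝ F]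

noncomputable def pD (i : Fin m) (f : EuclideanSpace ℝ (Fin m) → F)
    (x : EuclideanSpace ℝ (Fin m)) : F :=
  fderiv ℝ f x (EuclideanSpace.single i 1)

lemma euclLaplacian_eq (f : EuclideanSpace ℝ (Fin m) → F) (x) :
    euclLaplacian f x = ∑ i, pD i (pD i f) x := rfl

lemma contDiff_pD (i : Fin m) {f : EuclideanSpace ℝ (Fin m) → F} (hf : ContDiff ℝ ∞ f) :
    ContDiff ℝ ∞ (pD i f) :=
  (hf.fderiv_right inf_add_one_le).clm_apply contDiff_const

lemma alg_ineq (e g a b c : ℝ) (ha : 0 ≤ a) (hc : 0 ≤ c) (hb : b^2 ≤ a*c) :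
    e*e*a/2 - 2*(g*g)*c ≤ e*e*a + 2*e*g*b := by
  rcases eq_or_ne (e*e*a) 0 with hA | hA
  · have hb0 : e * b = 0 := by
      rcases mul_eq_zero.1 hA with h | h
      · rcases mul_eq_zero.1 h with h' | h' <;> simp [h']
      · have : b^2 ≤ 0 := by rw [h, zero_mul] at hb; exact hb
        have : b = 0 := by nlinarith [sq_nonneg b]
        simp [this]
    have : 2*e*g*b = 2*g*(e*b) := by ring
    rw [this, hb0]
    nlinarith [mul_self_nonneg e, mul_self_nonneg g, mul_nonneg (mul_self_nonneg e) ha,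
      mul_nonneg (mul_self_nonneg g) hc]
  · have hA' : 0 < e*e*a := lt_of_le_of_ne (mul_nonneg (mul_self_nonneg e) ha) (Ne.symm hA)
    have key : 0 ≤ (e*e*a/2) * ((e*e*a/2) + (2*e*g*b) + (2*(g*g)*c)) := by
      have : (e*e*a/2) * ((e*e*a/2) + (2*e*g*b) + (2*(g*g)*c))
          = (e*e*a/2 + e*g*b)^2 + (e*g)^2*(a*c - b^2) := by ring
      rw [this]
      have h1 : 0 ≤ (e*g)^2*(a*c - b^2) := mul_nonneg (sq_nonneg _) (by linarith)
      nlinarith [sq_nonneg (e*e*a/2 + e*g*b)]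
    nlinarith [key, hA']

lemma one_le_half_sq {q : ℝ} (hq : 2 ≤ q) : (1:ℝ) ≤ (q/2)^2 := by nlinarith

lemma sqrt_bound {a R : ℝ} (ha : 0 ≤ a) (hs : Real.sqrt a + 1 ≤ R) : a ≤ R^2 := by
  nlinarith [Real.sq_sqrt ha, Real.sqrt_nonneg a]

lemma contradiction_arith (P K V β W E : ℝ) (hP : 0 < P) (hK : 0 ≤ K) (hV : 0 ≤ V)
    (hβ0 : 0 < β) (hW : 0 < W) (hE0 : 0 ≤ E) (hE : E ≤ β)
    (hIR : W ≤ 4*P*K + 4*P*(E*V)) (hβpoly : 32*P*(V+1)*β = W) (hR2 : 16*P*(K+1) ≤ W) :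
    False := by
  have w1 : 4*P*(E*V) ≤ 4*P*(β*V) :=
    mul_le_mul_of_nonneg_left (mul_le_mul_of_nonneg_right hE hV) (by positivity)
  have w2 : 32*P*(β*V) ≤ W := by
    have hb : β*V ≤ β*(V+1) := mul_le_mul_of_nonneg_left (by linarith) hβ0.le
    have e : 32*P*(β*(V+1)) = W := by rw [← hβpoly]; ring
    have := mul_le_mul_of_nonneg_left hb (by positivity : (0:ℝ) ≤ 32*P)
    linarith
  have w4 : 16*P*K ≤ W := by
    have h := mul_le_mul_of_nonneg_left (by linarith : K ≤ K+1) (by positivity : (0:ℝ) ≤ 16*P)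
    calc 16*P*K = 16*P*K := rfl
      _ ≤ 16*P*(K+1) := by linarith
      _ ≤ W := hR2
  linarith


section cacc
variable {m : ℕ}

theorem caccioppoli {g η : EuclideanSpace ℝ (Fin m) → ℝ}
    (hg : ContDiff ℝ ∞ g) (hη : ContDiff ℝ ∞ η)
    (hηc : HasCompactSupport η) (hg0 : ∀ x, 0 ≤ g x)
    (hsub : ∀ x, 0 ≤ euclLaplacian g x) :
    ∫ x, η x * η x * (∑ i, (pD i g x)^2) ≤ 4 * ∫ x, g x * g x * (∑ i, (pD i η x)^2) := by
  have hgd : Differentiable ℝ g := hg.differentiable one_le_inf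
  have hηd : Differentiable ℝ η := hη.differentiable one_le_inf
  set w : EuclideanSpace ℝ (Fin m) → ℝ := fun x => η x * η x * g x with hw_def
  have hw : ContDiff ℝ ∞ w := (hη.mul hη).mul hg
  have hwd : Differentiable ℝ w := hw.differentiable one_le_inf
  have hwc : HasCompactSupport w := by
    have h2 : HasCompactSupport (fun x => η x * η x) := hηc.mul_left
    exact h2.mul_right
  -- integrability helper
  have intCW : ∀ (u v : EuclideanSpace ℝ (Fin m) → ℝ), Continuous u → Continuous v →
      HasCompactSupport v → Integrable (fun x => u x * v x) volume := by
    intro u v hu hv hvc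
    exact (hu.mul hv).integrable_of_hasCompactSupport hvc.mul_left
  have hwc_fd : ∀ i : Fin m, HasCompactSupport (pD i w) := fun i => hwc.fderiv_apply ℝ _
  have hcont_pDw : ∀ i : Fin m, Continuous (pD i w) := fun i => (contDiff_pD i hw).continuous
  have hcont_pDg : ∀ i : Fin m, Continuous (pD i g) := fun i => (contDiff_pD i hg).continuous
  have hcont_pDη : ∀ i : Fin m, Continuous (pD i η) := fun i => (contDiff_pD i hη).continuous
  -- integration by parts in each direction
  have hibp : ∀ i : Fin m, ∫ x, pD i g x * pD i w x = - ∫ x, pD i (pD i g) x * w x := by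
    intro i
    exact integral_mul_fderiv_eq_neg_fderiv_mul_of_integrable
      (intCW _ _ ((contDiff_pD i (contDiff_pD i hg)).continuous) hw.continuous hwc)
      (intCW _ _ (hcont_pDg i) (hcont_pDw i) (hwc_fd i))
      (intCW _ _ (hcont_pDg i) hw.continuous hwc)
      (fun x _ => (contDiff_pD i hg).differentiable one_le_inf x) (fun x _ => hwd x)
  have hsum : ∫ x, ∑ i : Fin m, pD i g x * pD i w x
      = - ∫ x, euclLaplacian g x * w x := by
    rw [integral_finset_sum _ (fun i _ => intCW _ _ (hcont_pDg i) (hcont_pDw i) (hwc_fd i))]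
    rw [Finset.sum_congr rfl (fun i _ => hibp i), Finset.sum_neg_distrib,
      ← integral_finset_sum _ (fun i _ =>
        intCW _ _ ((contDiff_pD i (contDiff_pD i hg)).continuous) hw.continuous hwc)]
    congr 1
    apply integral_congr_ae
    filter_upwards with x
    rw [euclLaplacian_eq, Finset.sum_mul]
  have hle0 : ∫ x, ∑ i : Fin m, pD i g x * pD i w x ≤ 0 := by
    rw [hsum]
    exact neg_nonpos_of_nonneg (integral_nonneg fun x =>
      mul_nonneg (hsub x) (mul_nonneg (mul_self_nonneg (η x)) (hg0 x)))
  -- pointwise expansion of pD i w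
  have hpDw : ∀ (i : Fin m) x, pD i w x = η x * η x * pD i g x + 2 * η x * g x * pD i η x := by
    intro i x
    have d1 : fderiv ℝ (fun y => η y * η y) x = η x • fderiv ℝ η x + η x • fderiv ℝ η x :=
      fderiv_mul (hηd x) (hηd x)
    have d2 : fderiv ℝ w x
        = (η x * η x) • fderiv ℝ g x + g x • fderiv ℝ (fun y => η y * η y) x :=
      fderiv_mul ((hηd x).mul (hηd x)) (hgd x)
    show fderiv ℝ w x (EuclideanSpace.single i 1) = _
    rw [d2, d1]
    simp only [ContinuousLinearMap.add_apply, ContinuousLinearMap.smul_apply, smul_eq_mul]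
    show η x * η x * pD i g x + g x * (η x * pD i η x + η x * pD i η x) = _
    ring
  set A : EuclideanSpace ℝ (Fin m) → ℝ := fun x => ∑ i, (pD i g x)^2 with hA_def
  set B : EuclideanSpace ℝ (Fin m) → ℝ := fun x => ∑ i, pD i η x * pD i g x with hB_def
  set C : EuclideanSpace ℝ (Fin m) → ℝ := fun x => ∑ i, (pD i η x)^2 with hC_def
  have hexp : ∀ x, ∑ i : Fin m, pD i g x * pD i w x
      = η x * η x * A x + 2 * η x * g x * B x := by
    intro x
    rw [hA_def, hB_def]
    simp only
    rw [Finset.mul_sum, Finset.mul_sum, ← Finset.sum_add_distrib]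
    refine Finset.sum_congr rfl fun i _ => ?_
    rw [hpDw]
    ring
  have hAcont : Continuous A := continuous_finset_sum _ fun i _ => ((hcont_pDg i).pow 2)
  have hBcont : Continuous B := continuous_finset_sum _ fun i _ =>
    (hcont_pDη i).mul (hcont_pDg i)
  have hCcont : Continuous C := continuous_finset_sum _ fun i _ => ((hcont_pDη i).pow 2)
  have hBc : HasCompactSupport B := by
    apply HasCompactSupport.intro (hηc.fderiv ℝ)
    intro x hx
    have h0 : fderiv ℝ η x = 0 := image_eq_zero_of_notMem_tsupport hx
    simp only [hB_def, pD, h0]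
    simp
  have hCc : HasCompactSupport C := by
    apply HasCompactSupport.intro (hηc.fderiv ℝ)
    intro x hx
    have h0 : fderiv ℝ η x = 0 := image_eq_zero_of_notMem_tsupport hx
    simp only [hC_def, pD, h0]
    simp
  have intCW' : ∀ (u v w' : EuclideanSpace ℝ (Fin m) → ℝ), Continuous u → Continuous v →
      HasCompactSupport v → (∀ x, w' x = u x * v x) → Integrable w' volume := by
    intro u v w' hu hv hvc he
    exact (intCW u v hu hv hvc).congr (by filter_upwards with x using (he x).symm)
  have I1 : Integrable (fun x => η x * η x * A x) volume :=
    intCW' A (fun x => η x * η x) _ hAcont (hη.continuous.mul hη.continuous)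
      hηc.mul_left (fun x => by ring)
  have I2 : Integrable (fun x => 2*(g x * g x)*C x) volume :=
    intCW' (fun x => 2*(g x * g x)) C _ (continuous_const.mul (hg.continuous.mul hg.continuous)) hCcont hCc (fun x => rfl)
  have I2' : Integrable (fun x => g x * g x * C x) volume :=
    intCW' (fun x => g x * g x) C _ (hg.continuous.mul hg.continuous) hCcont hCc (fun x => rfl)
  have I3 : Integrable (fun x => 2*η x*g x*B x) volume :=
    intCW' (fun x => 2*η x*g x) B _ ((continuous_const.mul hη.continuous).mul hg.continuous) hBcont hBc (fun x => rfl)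
  have hb2 : ∀ x, (B x)^2 ≤ C x * A x := by
    intro x
    exact Finset.sum_mul_sq_le_sq_mul_sq _ _ _
  have hptw : ∀ x, η x*η x*A x/2 - 2*(g x*g x)*C x ≤ η x*η x*A x + 2*η x*g x*B x := by
    intro x
    refine alg_ineq (η x) (g x) (A x) (B x) (C x) ?_ ?_ ?_
    · exact Finset.sum_nonneg fun i _ => sq_nonneg _
    · exact Finset.sum_nonneg fun i _ => sq_nonneg _
    · rw [mul_comm]; exact hb2 x
  have hrhs : ∫ x, (η x*η x*A x + 2*η x*g x*B x) ≤ 0 := by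
    have he : (fun x => η x*η x*A x + 2*η x*g x*B x)
        = fun x => ∑ i : Fin m, pD i g x * pD i w x := funext fun x => (hexp x).symm
    rw [he]
    exact hle0
  have hmono : ∫ x, (η x*η x*A x/2 - 2*(g x*g x)*C x) ≤ ∫ x, (η x*η x*A x + 2*η x*g x*B x) :=
    integral_mono ((I1.div_const 2).sub I2) (I1.add I3) hptw
  rw [integral_sub (I1.div_const 2) I2, integral_div] at hmono
  have e2 : ∫ x, 2*(g x*g x)*C x = 2*∫ x, g x*g x*C x := by
    rw [show (fun x => 2*(g x*g x)*C x) = (fun x => (2:ℝ) • (g x*g x*C x)) by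
      funext x; rw [smul_eq_mul]; ring, integral_smul]
    rw [smul_eq_mul]
  rw [e2] at hmono
  linarith [hmono, hrhs]

end cacc




section chain
variable {f : EuclideanSpace ℝ (Fin m) → ℝ} {φ φd' φdd' : ℝ → ℝ}

lemma pD_comp (hf : ContDiff ℝ ∞ f) (hφ : ∀ t, HasDerivAt φ (φd' t) t) (i : Fin m) (x) :
    pD i (fun y => φ (f y)) x = φd' (f x) * pD i f x := by
  have h : HasFDerivAt (fun y => φ (f y)) (φd' (f x) • fderiv ℝ f x) x :=
    (hφ (f x)).comp_hasFDerivAt x (hf.differentiable one_le_inf x).hasFDerivAt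
  show fderiv ℝ (fun y => φ (f y)) x (EuclideanSpace.single i 1) = _
  rw [h.fderiv]
  simp [pD]

lemma lap_comp (hf : ContDiff ℝ ∞ f) (hφ : ∀ t, HasDerivAt φ (φd' t) t)
    (hφd : ∀ t, HasDerivAt φd' (φdd' t) t) (x) :
    euclLaplacian (fun y => φ (f y)) x
      = φdd' (f x) * (∑ i, (pD i f x)^2) + φd' (f x) * euclLaplacian f x := by
  have hfd : Differentiable ℝ f := hf.differentiable one_le_inf
  have key : ∀ i : Fin m, pD i (pD i (fun y => φ (f y))) x
      = φdd' (f x) * (pD i f x)^2 + φd' (f x) * pD i (pD i f) x := by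
    intro i
    have e1 : pD i (fun y => φ (f y)) = fun y => φd' (f y) * pD i f y :=
      funext fun y => pD_comp hf hφ i y
    rw [e1]
    have hdo : DifferentiableAt ℝ (fun y => φd' (f y)) x :=
      ((hφd (f x)).comp_hasFDerivAt x (hfd x).hasFDerivAt).differentiableAt
    have hdp : DifferentiableAt ℝ (pD i f) x :=
      ((contDiff_pD i hf).differentiable one_le_inf) x
    show fderiv ℝ (fun y => φd' (f y) * pD i f y) x (EuclideanSpace.single i 1) = _
    rw [fderiv_fun_mul hdo hdp]
    simp only [ContinuousLinearMap.add_apply, ContinuousLinearMap.smul_apply, smul_eq_mul]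
    have e2 : fderiv ℝ (fun y => φd' (f y)) x (EuclideanSpace.single i 1)
        = φdd' (f x) * pD i f x := pD_comp hf hφd i x
    rw [e2]
    show φd' (f x) * pD i (pD i f) x + pD i f x * (φdd' (f x) * pD i f x) = _
    ring
  rw [euclLaplacian_eq, Finset.sum_congr rfl (fun i _ => key i), Finset.sum_add_distrib,
    euclLaplacian_eq, ← Finset.mul_sum, ← Finset.mul_sum]

end chain

lemma clm_eq_zero_of (L : EuclideanSpace ℝ (Fin m) →L[ℝ] ℝ)
    (h : ∀ i, L (EuclideanSpace.single i 1) = 0) : L = 0 := by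
  ext y
  have hy : y = ∑ i : Fin m, (y i) • (EuclideanSpace.single i (1:ℝ)) := by
    apply PiLp.ext
    intro j
    rw [show (∑ i : Fin m, (y i) • (EuclideanSpace.single i (1:ℝ))) j
        = ∑ i : Fin m, (y i) • ((EuclideanSpace.single i (1:ℝ)) j) from by
      induction (Finset.univ : Finset (Fin m)) using Finset.induction with
      | empty => simp
      | insert _ _ hnot ih => simp_all [Finset.sum_insert hnot]]
    simp [EuclideanSpace.single_apply]
  rw [hy]
  simp [map_sum, h]


section scalar
variable {m : ℕ}

theorem scalar_liouville (hm : 0 < m) {q : ℝ} (hq : 2 ≤ q)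
    {f : EuclideanSpace ℝ (Fin m) → ℝ} (hf : ContDiff ℝ ∞ f)
    (hlap : ∀ x, euclLaplacian f x = 0)
    (hLq : Integrable (fun x => |f x| ^ q) volume) :
    ∀ x, f x = 0 := by
  have hq0 : (0:ℝ) < q := by linarith
  set K := ∫ x, |f x| ^ q with hK_def
  have hK0 : 0 ≤ K := integral_nonneg fun x => Real.rpow_nonneg (abs_nonneg _) _
  set Cq := (2:ℝ) ^ (q/2+1) with hCq_def
  have hCq0 : 0 < Cq := Real.rpow_pos_of_pos two_pos _
  -- bump function
  set χb : ContDiffBump (0 : EuclideanSpace ℝ (Fin m)) := ⟨1, 2, one_pos, one_lt_two⟩ with hχb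
  set χ : EuclideanSpace ℝ (Fin m) → ℝ := fun y => χb y with hχ_def
  have hχsm : ContDiff ℝ ∞ χ := χb.contDiff
  have hχc : HasCompactSupport χ := χb.hasCompactSupport
  set c1 : EuclideanSpace ℝ (Fin m) → ℝ := fun y => ∑ i, (pD i χ y)^2 with hc1_def
  have hc1cont : Continuous c1 :=
    continuous_finset_sum _ fun i _ => ((contDiff_pD i hχsm).continuous.pow 2)
  have hc1c : HasCompactSupport c1 := by
    apply HasCompactSupport.intro (hχc.fderiv ℝ)
    intro x hx
    have h0 : fderiv ℝ χ x = 0 := image_eq_zero_of_notMem_tsupport hx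
    simp only [hc1_def, pD, h0]
    simp
  obtain ⟨M0, hM0⟩ := hc1cont.bounded_above_of_compact_support hc1c
  set M := max M0 1 with hM_def
  have hM1 : (0:ℝ) < M := lt_of_lt_of_le one_pos (le_max_right _ _)
  have hM : ∀ y, c1 y ≤ M := by
    intro y
    have h := hM0 y
    rw [Real.norm_eq_abs] at h
    exact (le_abs_self _).trans (h.trans (le_max_left _ _))
  -- rescaled cutoffs
  set η : ℝ → EuclideanSpace ℝ (Fin m) → ℝ := fun R x => χ (R⁻¹ • x) with hη_def
  have hηsm : ∀ R : ℝ, ContDiff ℝ ∞ (η R) := fun R =>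
    hχsm.comp (contDiff_const_smul R⁻¹)
  have hηc : ∀ R : ℝ, 0 < R → HasCompactSupport (η R) := by
    intro R hR
    apply HasCompactSupport.intro (isCompact_closedBall (0 : EuclideanSpace ℝ (Fin m)) (2*R))
    intro x hx
    apply χb.zero_of_le_dist
    have hxn : 2*R < ‖x‖ := by
      simpa [Metric.mem_closedBall, dist_zero_right] using hx
    have : ‖R⁻¹ • x‖ = ‖x‖ / R := by
      rw [norm_smul, norm_inv, Real.norm_eq_abs, abs_of_pos hR, inv_mul_eq_div]
    show (2:ℝ) ≤ dist (R⁻¹ • x) 0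
    rw [dist_zero_right, this, le_div_iff₀ hR]
    linarith
  have hη1 : ∀ R : ℝ, 0 < R → ∀ x : EuclideanSpace ℝ (Fin m), ‖x‖ ≤ R → η R x = 1 := by
    intro R hR x hx
    apply χb.one_of_mem_closedBall
    have : ‖R⁻¹ • x‖ = ‖x‖ / R := by
      rw [norm_smul, norm_inv, Real.norm_eq_abs, abs_of_pos hR, inv_mul_eq_div]
    show R⁻¹ • x ∈ Metric.closedBall (0 : EuclideanSpace ℝ (Fin m)) 1
    rw [Metric.mem_closedBall, dist_zero_right, this, div_le_one hR]
    exact hx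
  have hpDη : ∀ R : ℝ, 0 < R → ∀ (i : Fin m) x,
      pD i (η R) x = R⁻¹ * pD i χ (R⁻¹ • x) := by
    intro R hR i x
    set L : EuclideanSpace ℝ (Fin m) →L[ℝ] EuclideanSpace ℝ (Fin m) :=
      R⁻¹ • ContinuousLinearMap.id ℝ (EuclideanSpace ℝ (Fin m)) with hL_def
    have hcomp : HasFDerivAt (η R) ((fderiv ℝ χ (R⁻¹ • x)).comp L) x := by
      have h1 : HasFDerivAt χ (fderiv ℝ χ (R⁻¹ • x)) (L x) := by
        have : L x = R⁻¹ • x := by simp [hL_def]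
        rw [this]
        exact ((hχsm.differentiable one_le_inf) (R⁻¹ • x)).hasFDerivAt
      have h2 : HasFDerivAt L L x := L.hasFDerivAt
      exact h1.comp x h2
    show fderiv ℝ (η R) x (EuclideanSpace.single i 1) = _
    rw [hcomp.fderiv]
    simp [hL_def, pD]
  have hcR : ∀ R : ℝ, 0 < R → ∀ x, ∑ i, (pD i (η R) x)^2 = R⁻¹^2 * c1 (R⁻¹ • x) := by
    intro R hR x
    rw [hc1_def, Finset.mul_sum]
    refine Finset.sum_congr rfl fun i _ => ?_
    rw [hpDη R hR i x, mul_pow]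
  have hcRle : ∀ R : ℝ, 0 < R → ∀ x, ∑ i, (pD i (η R) x)^2 ≤ M / R^2 := by
    intro R hR x
    rw [hcR R hR x]
    have h1 : R⁻¹^2 * c1 (R⁻¹ • x) ≤ R⁻¹^2 * M :=
      mul_le_mul_of_nonneg_left (hM _) (by positivity)
    calc R⁻¹^2 * c1 (R⁻¹ • x) ≤ R⁻¹^2 * M := h1
      _ = M / R^2 := by rw [inv_pow]; ring
  have hcR0 : ∀ R : ℝ, 0 < R → ∀ x : EuclideanSpace ℝ (Fin m), 2*R < ‖x‖ →
      ∑ i, (pD i (η R) x)^2 = 0 := by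
    intro R hR x hx
    have hev : η R =ᶠ[nhds x] fun _ => (0:ℝ) := by
      have hopen : IsOpen {y : EuclideanSpace ℝ (Fin m) | 2*R < ‖y‖} :=
        isOpen_lt continuous_const continuous_norm
      filter_upwards [hopen.mem_nhds hx] with y hy
      apply χb.zero_of_le_dist
      have : ‖R⁻¹ • y‖ = ‖y‖ / R := by
        rw [norm_smul, norm_inv, Real.norm_eq_abs, abs_of_pos hR, inv_mul_eq_div]
      show (2:ℝ) ≤ dist (R⁻¹ • y) 0
      rw [dist_zero_right, this, le_div_iff₀ hR]
      have : 2*R < ‖y‖ := hy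
      linarith
    have h0 : fderiv ℝ (η R) x = 0 := by
      rw [hev.fderiv_eq]
      exact fderiv_const_apply 0
    apply Finset.sum_eq_zero
    intro i _
    show (fderiv ℝ (η R) x (EuclideanSpace.single i 1))^2 = 0
    rw [h0]
    simp
  -- the master inequality
  have master : ∀ R : ℝ, 0 < R → ∀ ε : ℝ, 0 < ε →
      ∫ x, η R x * η R x * (∑ i, (pD i (fun y => phi q ε (f y)) x)^2)
        ≤ 4*((M/R^2)*Cq*K + (M/R^2)*Cq*ε^q *
            (volume (Metric.closedBall (0:EuclideanSpace ℝ (Fin m)) (2*R))).toReal) := by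
    intro R hR ε hε
    set g : EuclideanSpace ℝ (Fin m) → ℝ := fun y => phi q ε (f y) with hg_def
    have hgsm : ContDiff ℝ ∞ g := (contDiff_phi hε).comp hf
    have hg0 : ∀ x, 0 ≤ g x := fun x => phi_nonneg hε hq0.le _
    have hsub : ∀ x, 0 ≤ euclLaplacian g x := by
      intro x
      rw [hg_def, lap_comp hf (fun t => hasDerivAt_phi hε t) (fun t => hasDerivAt_phid hε t) x,
        hlap x]
      have h1 := phidd_nonneg hε hq (f x)
      have hsumn : (0:ℝ) ≤ ∑ i, (pD i f x)^2 := Finset.sum_nonneg fun i _ => sq_nonneg _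
      rw [mul_zero, add_zero]
      exact mul_nonneg h1 hsumn
    have hcac := caccioppoli hgsm (hηsm R) (hηc R hR) hg0 hsub
    refine hcac.trans ?_
    -- bound ∫ g² c_R
    set s := Metric.closedBall (0:EuclideanSpace ℝ (Fin m)) (2*R) with hs_def
    set bound : EuclideanSpace ℝ (Fin m) → ℝ :=
      fun x => (M/R^2)*Cq*|f x|^q + (M/R^2)*Cq*ε^q * s.indicator (fun _ => (1:ℝ)) x
      with hbound_def
    have hsfin : volume s < ⊤ := measure_closedBall_lt_top
    have hind_int : Integrable (s.indicator (fun _ => (1:ℝ))) volume := by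
      refine ((integrableOn_const_iff).mpr (Or.inr hsfin)).integrable_indicator ?_
      exact measurableSet_closedBall
    have hbound_int : Integrable bound volume :=
      (hLq.const_mul _).add (hind_int.const_mul _)
    have hgg_int : Integrable (fun x => g x * g x * (∑ i, (pD i (η R) x)^2)) volume := by
      have hccont : Continuous (fun x => ∑ i, (pD i (η R) x)^2) :=
        continuous_finset_sum _ fun i _ => ((contDiff_pD i (hηsm R)).continuous.pow 2)
      have hcsupp : HasCompactSupport (fun x => ∑ i, (pD i (η R) x)^2) := by
        apply HasCompactSupport.intro ((hηc R hR).fderiv ℝ)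
        intro x hx
        have h0 : fderiv ℝ (η R) x = 0 := image_eq_zero_of_notMem_tsupport hx
        apply Finset.sum_eq_zero
        intro i _
        show (fderiv ℝ (η R) x (EuclideanSpace.single i 1))^2 = 0
        rw [h0]; simp
      exact ((hgsm.continuous.mul hgsm.continuous).mul hccont).integrable_of_hasCompactSupport
        (hcsupp.mul_left)
    have hptwise : ∀ x, g x * g x * (∑ i, (pD i (η R) x)^2) ≤ bound x := by
      intro x
      rcases le_or_gt ‖x‖ (2*R) with hc | hc
      · have hmem : x ∈ s := by
          rw [hs_def, Metric.mem_closedBall, dist_zero_right]; exact hc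
        have hind : s.indicator (fun _ => (1:ℝ)) x = 1 := Set.indicator_of_mem hmem _
        have hgg : g x * g x ≤ Cq * (|f x|^q + ε^q) := by
          have h1 : g x * g x = (phi q ε (f x))^2 := by rw [hg_def]; ring
          rw [show g x * g x = (phi q ε (f x))^2 from by rw [hg_def]; ring]
          have := phi_sq_le hε hq (f x)
          calc (phi q ε (f x))^2 ≤ 2 ^ (q/2+1) * (|f x| ^ q + ε ^ q) := this
            _ = Cq * (|f x|^q + ε^q) := by rw [hCq_def]
        have hcle := hcRle R hR x
        have hcn : (0:ℝ) ≤ ∑ i, (pD i (η R) x)^2 := Finset.sum_nonneg fun i _ => sq_nonneg _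
        have hrhsn : (0:ℝ) ≤ Cq * (|f x|^q + ε^q) := by
          have := Real.rpow_nonneg (abs_nonneg (f x)) q
          have := Real.rpow_nonneg hε.le q
          positivity
        calc g x * g x * (∑ i, (pD i (η R) x)^2)
            ≤ (Cq * (|f x|^q + ε^q)) * (M/R^2) :=
              mul_le_mul hgg hcle hcn hrhsn
          _ = bound x := by rw [hbound_def]; simp only [hind]; ring
      · rw [hcR0 R hR x hc, mul_zero]
        rw [hbound_def]
        have h1 : (0:ℝ) ≤ |f x|^q := Real.rpow_nonneg (abs_nonneg _) _
        have h2 : (0:ℝ) ≤ ε^q := Real.rpow_nonneg hε.le _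
        have h3 : (0:ℝ) ≤ s.indicator (fun _ => (1:ℝ)) x :=
          Set.indicator_nonneg (fun _ _ => zero_le_one) _
        have h4 : (0:ℝ) ≤ M/R^2 := by positivity
        positivity
    have hint_le : ∫ x, g x * g x * (∑ i, (pD i (η R) x)^2) ≤ ∫ x, bound x :=
      integral_mono hgg_int hbound_int hptwise
    have hbound_eq : ∫ x, bound x
        = (M/R^2)*Cq*K + (M/R^2)*Cq*ε^q * (volume s).toReal := by
      rw [hbound_def, integral_add (hLq.const_mul _) (hind_int.const_mul _)]
      congr 1
      · rw [integral_const_mul, hK_def]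
      · rw [integral_const_mul, integral_indicator_const _ measurableSet_closedBall]
        simp
        exact Or.inl rfl
    rw [hbound_eq] at hint_le
    exact mul_le_mul_of_nonneg_left hint_le (by norm_num)
  -- key pointwise claim
  have hkey : ∀ (x₀ : EuclideanSpace ℝ (Fin m)) (i₀ : Fin m), f x₀ * pD i₀ f x₀ = 0 := by
    intro x₀ i₀
    by_contra hcon
    obtain ⟨hf0, hD0⟩ := mul_ne_zero_iff.mp hcon
    set τ := |f x₀| / 2 with hτ_def
    have hτ : 0 < τ := by
      have h := abs_pos.mpr hf0
      rw [hτ_def]; linarith only [h]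
    set σ := (pD i₀ f x₀)^2 / 2 with hσ_def
    have hσ : 0 < σ := by
      have h1 : 0 < (pD i₀ f x₀)^2 :=
        lt_of_le_of_ne (sq_nonneg _) (Ne.symm (pow_ne_zero 2 hD0))
      rw [hσ_def]; linarith only [h1]
    set T := |f x₀| + 1 with hT_def
    set S := T^2 + τ^2 with hS_def
    have hS : 0 < S := by rw [hS_def]; positivity
    set U := {y : EuclideanSpace ℝ (Fin m) | τ < |f y| ∧ |f y| < T ∧ σ < (pD i₀ f y)^2}
      with hU_def
    have hUopen : IsOpen U := by
      have cf : Continuous fun y => |f y| := hf.continuous.abs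
      have cp : Continuous fun y => (pD i₀ f y)^2 := ((contDiff_pD i₀ hf).continuous).pow 2
      have : U = (fun y => |f y|) ⁻¹' (Set.Ioi τ) ∩
          ((fun y => |f y|) ⁻¹' (Set.Iio T) ∩ (fun y => (pD i₀ f y)^2) ⁻¹' (Set.Ioi σ)) := by
        ext y; simp [hU_def, and_assoc]
      rw [this]
      exact (isOpen_Ioi.preimage cf).inter
        ((isOpen_Iio.preimage cf).inter (isOpen_Ioi.preimage cp))
    have hx₀U : x₀ ∈ U := by
      refine ⟨?_, ?_, ?_⟩
      · rw [hτ_def]; have h := abs_pos.mpr hf0; linarith only [h]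
      · rw [hT_def]; linarith only []
      · rw [hσ_def]
        have h1 : 0 < (pD i₀ f x₀)^2 :=
          lt_of_le_of_ne (sq_nonneg _) (Ne.symm (pow_ne_zero 2 hD0))
        linarith only [h1]
    obtain ⟨δ, hδ0, hδU⟩ := Metric.isOpen_iff.mp hUopen x₀ hx₀U
    set B := Metric.closedBall x₀ (δ/2) with hB_def
    have hBsub : B ⊆ U := by
      refine subset_trans ?_ hδU
      rw [hB_def]
      exact Metric.closedBall_subset_ball (by linarith only [hδ0])
    set ρ := q/2 - 2 with hρ_def
    set ν := min ((τ^2) ^ ρ) (S ^ ρ) with hν_def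
    have hν0 : 0 < ν := lt_min (Real.rpow_pos_of_pos (by positivity) _)
      (Real.rpow_pos_of_pos hS _)
    set L := τ^2 * ν * σ with hL_def
    have hL0 : 0 < L := by rw [hL_def]; positivity
    -- lower bound on the regularized energy density on B
    have hlow : ∀ ε : ℝ, 0 < ε → ε ≤ τ → ∀ y ∈ B,
        L ≤ ∑ i, (pD i (fun z => phi q ε (f z)) y)^2 := by
      intro ε hε hετ y hy
      obtain ⟨hy1, hy2, hy3⟩ := hBsub hy
      have hterm : (pD i₀ (fun z => phi q ε (f z)) y)^2
          = (q/2)^2 * (f y)^2 * ((f y)^2+ε^2) ^ (q/2-2) * (pD i₀ f y)^2 := by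
        rw [pD_comp hf (fun t => hasDerivAt_phi hε t) i₀ y, mul_pow, phid_sq hε]
      have b1 : τ^2 ≤ (f y)^2 := by
        have := pow_le_pow_left₀ hτ.le hy1.le 2
        rwa [sq_abs] at this
      have hbase : (0:ℝ) < (f y)^2 + ε^2 := by positivity
      have hub : (f y)^2 + ε^2 ≤ S := by
        have h1 : (f y)^2 ≤ T^2 := by
          have := pow_le_pow_left₀ (abs_nonneg (f y)) hy2.le 2
          rwa [sq_abs] at this
        have h2 : ε^2 ≤ τ^2 := pow_le_pow_left₀ hε.le hετ 2
        rw [hS_def]; linarith only [h1, h2]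
      have b2 : ν ≤ ((f y)^2+ε^2) ^ ρ := by
        rcases le_or_gt 0 ρ with hρ | hρ
        · refine (min_le_left _ _).trans ?_
          exact Real.rpow_le_rpow (by positivity) (by linarith only [b1, sq_nonneg ε]) hρ
        · refine (min_le_right _ _).trans ?_
          exact Real.rpow_le_rpow_of_nonpos hbase hub hρ.le
      have b3 : σ ≤ (pD i₀ f y)^2 := hy3.le
      have b4 : (1:ℝ) ≤ (q/2)^2 := one_le_half_sq hq
      have hρeq : ((f y)^2+ε^2) ^ (q/2-2) = ((f y)^2+ε^2) ^ ρ := by rw [hρ_def]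
      have hrpn : (0:ℝ) ≤ ((f y)^2+ε^2) ^ ρ := Real.rpow_nonneg hbase.le _
      have m1 : τ^2 * ν ≤ (f y)^2 * (((f y)^2+ε^2) ^ ρ) :=
        mul_le_mul b1 b2 hν0.le (sq_nonneg _)
      have m2 : τ^2 * ν * σ ≤ (f y)^2 * (((f y)^2+ε^2) ^ ρ) * (pD i₀ f y)^2 :=
        mul_le_mul m1 b3 hσ.le (mul_nonneg (sq_nonneg _) hrpn)
      have m3 : (f y)^2 * (((f y)^2+ε^2) ^ ρ) * (pD i₀ f y)^2
          ≤ (q/2)^2 * ((f y)^2 * (((f y)^2+ε^2) ^ ρ) * (pD i₀ f y)^2) := by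
        refine le_mul_of_one_le_left ?_ b4
        exact mul_nonneg (mul_nonneg (sq_nonneg _) hrpn) (sq_nonneg _)
      have hsingle : L ≤ (pD i₀ (fun z => phi q ε (f z)) y)^2 := by
        rw [hterm, hρeq, hL_def]
        calc τ^2 * ν * σ ≤ (f y)^2 * (((f y)^2+ε^2) ^ ρ) * (pD i₀ f y)^2 := m2
          _ ≤ (q/2)^2 * ((f y)^2 * (((f y)^2+ε^2) ^ ρ) * (pD i₀ f y)^2) := m3
          _ = (q/2)^2 * (f y)^2 * ((f y)^2+ε^2) ^ ρ * (pD i₀ f y)^2 := by ring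
      refine hsingle.trans ?_
      exact Finset.single_le_sum (f := fun j => (pD j (fun z => phi q ε (f z)) y)^2)
        (fun i _ => sq_nonneg _) (Finset.mem_univ i₀)
    -- choose R
    set P := M * Cq with hP_def
    have hPpos : 0 < P := mul_pos hM1 hCq0
    set I := L * (volume B).toReal with hI_def
    have hvolB : 0 < (volume B).toReal := by
      refine ENNReal.toReal_pos ?_ ?_
      · exact (Metric.measure_closedBall_pos volume x₀ (by linarith only [hδ0])).ne'
      · exact measure_closedBall_lt_top.ne
    have hI0 : 0 < I := mul_pos hL0 hvolB
    set a := 16*P*(K+1)/I with ha_def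
    have ha0 : 0 ≤ a := by positivity
    set R := max (‖x₀‖ + δ) (Real.sqrt a + 1) with hR_def
    have hR0 : 0 < R := by
      have h0 := Real.sqrt_nonneg a
      have h1 : (0:ℝ) < Real.sqrt a + 1 := by linarith only [h0]
      exact lt_of_lt_of_le h1 (le_max_right _ _)
    have hR1 : ‖x₀‖ + δ ≤ R := le_max_left _ _
    have hR2 : 16*P*(K+1) ≤ I*R^2 := by
      have hs : Real.sqrt a + 1 ≤ R := le_max_right _ _
      have h1 : a ≤ R^2 := sqrt_bound ha0 hs
      rw [ha_def, div_le_iff₀ hI0] at h1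
      have h2 : R^2*I = I*R^2 := mul_comm _ _
      linarith only [h1, h2]
    set V := (volume (Metric.closedBall (0:EuclideanSpace ℝ (Fin m)) (2*R))).toReal with hV_def
    have hV0 : 0 ≤ V := ENNReal.toReal_nonneg
    set β := I*R^2/(32*P*(V+1)) with hβ_def
    have hβ0 : 0 < β := by positivity
    set ε := min τ (β ^ (1/q)) with hε_def
    have hε0 : 0 < ε := lt_min hτ (Real.rpow_pos_of_pos hβ0 _)
    have hετ : ε ≤ τ := min_le_left _ _
    have hεq : ε^q ≤ β := by
      have h1 : ε^q ≤ (β ^ (1/q))^q :=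
        Real.rpow_le_rpow hε0.le (min_le_right _ _) hq0.le
      refine h1.trans (le_of_eq ?_)
      rw [← Real.rpow_mul hβ0.le, one_div_mul_cancel hq0.ne', Real.rpow_one]
    -- lower bound on the integral
    have hup := master R hR0 ε hε0
    have hdown : I ≤ ∫ x, η R x * η R x * (∑ i, (pD i (fun y => phi q ε (f y)) x)^2) := by
      set Ag : EuclideanSpace ℝ (Fin m) → ℝ :=
        fun x => ∑ i, (pD i (fun y => phi q ε (f y)) x)^2 with hAg_def
      have hgsm : ContDiff ℝ ∞ (fun y => phi q ε (f y)) := (contDiff_phi hε0).comp hf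
      have hAgcont : Continuous Ag :=
        continuous_finset_sum _ fun i _ => ((contDiff_pD i hgsm).continuous.pow 2)
      have hAgn : ∀ x, 0 ≤ Ag x := fun x => Finset.sum_nonneg fun i _ => sq_nonneg _
      have hηAg_int : Integrable (fun x => η R x * η R x * Ag x) volume := by
        have hcont : Continuous (fun x => η R x * η R x * Ag x) :=
          (((hηsm R).continuous.mul (hηsm R).continuous).mul hAgcont)
        have hcs : HasCompactSupport (fun x => η R x * η R x * Ag x) :=
          (((hηc R hR0).mul_left (f := η R)).mul_right (f' := Ag))
        exact hcont.integrable_of_hasCompactSupport hcs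
      have step1 : I ≤ ∫ x in B, η R x * η R x * Ag x := by
        have hIB : IntegrableOn (fun _ : EuclideanSpace ℝ (Fin m) => L) B volume :=
          (integrableOn_const_iff).mpr (Or.inr measure_closedBall_lt_top)
        have hIA : IntegrableOn (fun x => η R x * η R x * Ag x) B volume :=
          (hηAg_int).integrableOn
        have hptB : ∀ x ∈ B, L ≤ η R x * η R x * Ag x := by
          intro y hy
          have hynorm : ‖y‖ ≤ R := by
            have h1 : dist y x₀ ≤ δ/2 := Metric.mem_closedBall.mp hy
            have h2 := dist_triangle y x₀ (0 : EuclideanSpace ℝ (Fin m))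
            rw [dist_zero_right, dist_zero_right] at h2
            linarith only [h1, h2, hR1, hδ0]
          rw [hη1 R hR0 y hynorm, one_mul, one_mul]
          exact hlow ε hε0 hετ y hy
        calc I = L * (volume B).toReal := hI_def
          _ = ∫ _ in B, L ∂volume := by rw [setIntegral_const, smul_eq_mul, mul_comm]; rfl
          _ ≤ ∫ x in B, η R x * η R x * Ag x := by
            exact setIntegral_mono_on hIB hIA measurableSet_closedBall hptB
      refine step1.trans ?_
      refine setIntegral_le_integral hηAg_int ?_
      filter_upwards with x
      exact mul_nonneg (mul_nonneg (χb.nonneg) (χb.nonneg)) (hAgn x)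
    -- contradiction
    have hW0 : 0 < I * R^2 := by positivity
    have hIR : I * R^2 ≤ 4*P*K + 4*P*(ε^q*V) := by
      have h1 := hdown.trans hup
      have h2 := mul_le_mul_of_nonneg_right h1 (sq_nonneg R)
      have h3 : 4*((M/R^2)*Cq*K + (M/R^2)*Cq*ε^q*V) * R^2 = 4*P*K + 4*P*(ε^q*V) := by
        rw [hP_def]
        field_simp
      rw [← h3]
      exact h2
    have hβpoly : 32*P*(V+1)*β = I*R^2 := by
      rw [hβ_def]
      field_simp
    exact contradiction_arith P K V β (I*R^2) (ε^q) hPpos hK0 hV0 hβ0 hW0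
      (Real.rpow_nonneg hε0.le q) hεq hIR hβpoly hR2
  -- conclude: f³ is constant
  have hf3 : ∀ x, fderiv ℝ (fun y => (f y)^3) x = 0 := by
    intro x
    have h3 : HasFDerivAt (fun y => (f y)^3) (((3:ℝ) * f x ^ 2) • fderiv ℝ f x) x := by
      have hd := hasDerivAt_pow 3 (f x)
      norm_num at hd
      exact hd.comp_hasFDerivAt x (hf.differentiable one_le_inf x).hasFDerivAt
    rw [h3.fderiv]
    rcases eq_or_ne (f x) 0 with h0 | h0
    · rw [h0]; simp
    · have hD : fderiv ℝ f x = 0 := by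
        apply clm_eq_zero_of
        intro i
        have := hkey x i
        rcases mul_eq_zero.mp this with h | h
        · exact absurd h h0
        · exact h
      rw [hD]; simp
  have hconst : ∀ x, (f x)^3 = (f 0)^3 := by
    intro x
    exact is_const_of_fderiv_eq_zero (𝕜 := ℝ)
      (fun y => ((hf.differentiable one_le_inf y).pow 3)) hf3 x 0
  have hfeq : ∀ x, f x = f 0 := by
    intro x
    have hodd : Odd 3 := by decide
    exact (hodd.strictMono_pow (R := ℝ)).injective (hconst x)
  -- a nonzero constant is not in L^q
  have hzero : f 0 = 0 := by
    by_contra h0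
    have hconst_int : Integrable (fun _ : EuclideanSpace ℝ (Fin m) => |f 0| ^ q) volume := by
      refine hLq.congr ?_
      filter_upwards with x
      rw [hfeq x]
    haveI : Nonempty (Fin m) := ⟨⟨0, hm⟩⟩
    haveI : Nontrivial (EuclideanSpace ℝ (Fin m)) := by
      refine ⟨EuclideanSpace.single ⟨0, hm⟩ (1:ℝ), 0, ?_⟩
      intro h
      have := congrArg (fun v => ‖v‖) h
      simp [EuclideanSpace.norm_single] at this
    have htop : volume (Set.univ : Set (EuclideanSpace ℝ (Fin m))) = ⊤ :=
      measure_univ_of_isAddLeftInvariant volume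
    rcases integrable_const_iff.mp hconst_int with h | h
    · have : |f 0| ^ q > 0 := Real.rpow_pos_of_pos (abs_pos.mpr h0) q
      rw [h] at this
      exact lt_irrefl 0 this
    · exact measure_ne_top volume Set.univ htop
  intro x
  rw [hfeq x, hzero]

end scalar

section assemble
variable {m n : ℕ}

lemma pD_clm_comp {F G : Type*} [NormedAddCommGroup F] [NormedSpace ℝ F]
    [NormedAddCommGroup G] [NormedSpace ℝ G]
    (π : F →L[ℝ] G) {u : EuclideanSpace ℝ (Fin m) → F} (hu : Differentiable ℝ u)
    (i : Fin m) (x : EuclideanSpace ℝ (Fin m)) :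
    pD i (fun y => π (u y)) x = π (pD i u x) := by
  have h : HasFDerivAt (fun y => π (u y)) (π.comp (fderiv ℝ u x)) x :=
    (π.hasFDerivAt).comp x (hu x).hasFDerivAt
  show fderiv ℝ (fun y => π (u y)) x (EuclideanSpace.single i 1) = _
  rw [h.fderiv]
  rfl

lemma lap_clm_comp {F G : Type*} [NormedAddCommGroup F] [NormedSpace ℝ F]
    [NormedAddCommGroup G] [NormedSpace ℝ G]
    (π : F →L[ℝ] G) {u : EuclideanSpace ℝ (Fin m) → F} (hu : ContDiff ℝ ∞ u)
    (x : EuclideanSpace ℝ (Fin m)) :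
    euclLaplacian (fun y => π (u y)) x = π (euclLaplacian u x) := by
  rw [euclLaplacian_eq, euclLaplacian_eq, map_sum]
  refine Finset.sum_congr rfl fun i _ => ?_
  have e1 : pD i (fun y => π (u y)) = fun y => π (pD i u y) :=
    funext fun y => pD_clm_comp π (hu.differentiable one_le_inf) i y
  rw [e1, pD_clm_comp π ((contDiff_pD i hu).differentiable one_le_inf) i x]

lemma contDiff_lap {F : Type*} [NormedAddCommGroup F] [NormedSpace ℝ F]
    {u : EuclideanSpace ℝ (Fin m) → F} (hu : ContDiff ℝ ∞ u) :
    ContDiff ℝ ∞ (euclLaplacian u) := by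
  show ContDiff ℝ ∞ (fun x => ∑ i : Fin m, pD i (pD i u) x)
  exact ContDiff.sum fun i _ => contDiff_pD i (contDiff_pD i hu)

lemma coord_le_norm (v : EuclideanSpace ℝ (Fin n)) (j : Fin n) : |v j| ≤ ‖v‖ := by
  rw [EuclideanSpace.norm_eq, ← Real.sqrt_sq_eq_abs]
  apply Real.sqrt_le_sqrt
  have := Finset.single_le_sum (f := fun i => ‖v i‖^2) (fun i _ => sq_nonneg _)
    (Finset.mem_univ j)
  simpa [Real.norm_eq_abs, sq_abs] using this

end assemble

end LiouAux

/-- If `ψ : ℝ^m → ℝ^n` is smooth with `Δ(Δψ) = 0` everywhere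
(HS-tensional/biharmonic), `∫ ‖Δψ‖^q < ∞` for some `2 ≤ q < ∞`, and the energy
`∫ ‖Dψ‖² < ∞` is finite (Hilbert–Schmidt norm of the total derivative), then `Δψ = 0`
everywhere, i.e. `ψ` is harmonic. -/
theorem HS_tensional_finite_Lq_tension_finite_energy_is_harmonic
    (m n : ℕ) (hm : 0 < m) (hn : 0 < n) (q : ℝ) (hq : 2 ≤ q)
    (ψ : EuclideanSpace ℝ (Fin m) → EuclideanSpace ℝ (Fin n)) (hψ : ContDiff ℝ (⊤ : ℕ∞) ψ)
    (hbi : ∀ x, euclLaplacian (euclLaplacian ψ) x = 0)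
    (hLq : Integrable (fun x => ‖euclLaplacian ψ x‖ ^ q) (volume))
    (hE : Integrable (fun x => hsNormSqFDeriv ψ x) (volume)) :
    ∀ x, euclLaplacian ψ x = 0 := by
  have hq0 : (0:ℝ) < q := by linarith
  set u := euclLaplacian ψ with hu_def
  have hψ' : ContDiff ℝ ∞ ψ := hψ.of_le (by simp)
  have husm : ContDiff ℝ ∞ u := LiouAux.contDiff_lap hψ'
  have hcomp : ∀ j : Fin n, ∀ x, (EuclideanSpace.proj j : EuclideanSpace ℝ (Fin n) →L[ℝ] ℝ)
      (u x) = 0 := by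
    intro j
    set π : EuclideanSpace ℝ (Fin n) →L[ℝ] ℝ := EuclideanSpace.proj j with hπ_def
    apply LiouAux.scalar_liouville hm hq (f := fun x => π (u x))
    · exact π.contDiff.comp husm
    · intro x
      rw [LiouAux.lap_clm_comp π husm x, hbi x]
      simp
    · have hgc : Continuous fun x => |π (u x)| :=
        continuous_abs.comp (π.continuous.comp husm.continuous)
      have hcont : Continuous fun x => |π (u x)| ^ q := by
        rw [continuous_iff_continuousAt]
        intro x
        exact (Real.continuousAt_rpow_const _ q (Or.inr hq0.le)).comp hgc.continuousAt
      apply hLq.mono hcont.aestronglyMeasurable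
      filter_upwards with x
      rw [Real.norm_eq_abs, Real.norm_eq_abs,
        abs_of_nonneg (Real.rpow_nonneg (abs_nonneg _) _),
        abs_of_nonneg (Real.rpow_nonneg (norm_nonneg _) _)]
      have hle : |π (u x)| ≤ ‖u x‖ := LiouAux.coord_le_norm (u x) j
      exact Real.rpow_le_rpow (abs_nonneg _) hle hq0.le
  intro x
  show u x = 0
  apply PiLp.ext
  intro j
  exact hcomp j x
end

section
/- Let m ≥ 2 be an integer and let c be a real number. Then there is no smooth function α : I → ℝ on a nonempty open interval I ⊆ ℝ that is everywhere positive and satisfies simultaneously the two differential equations α″ − (3(m−1)/(m+2))·(α′)²/α − (m²(m+8)/(4(m−1)))·α³ = 0 and α″ − ((m+5)/(m+2))·(α′)²/α + (m²(m+2)/(4(m−1)))·α³ − ((m+2)/3)·c·α = 0 on all of I. -/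
/-- For `m ≥ 2` and `c ∈ ℝ`, there is no positive smooth function `α` on a
nonempty open interval `I ⊆ ℝ` satisfying simultaneously
`α″ − (3(m−1)/(m+2)) (α′)²/α − (m²(m+8)/(4(m−1))) α³ = 0` and
`α″ − ((m+5)/(m+2)) (α′)²/α + (m²(m+2)/(4(m−1))) α³ − ((m+2)/3) c α = 0` on all of `I`.
(An open interval of `ℝ` is formalized as a nonempty open order-connected subset.) -/
theorem no_positive_solution_of_HS_tensional_ODE_system (m : ℕ) (hm : 2 ≤ m) (c : ℝ) :
    ¬ ∃ (I : Set ℝ) (α : ℝ → ℝ), I.Nonempty ∧ IsOpen I ∧ I.OrdConnected ∧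
        ContDiffOn ℝ (⊤ : ℕ∞) α I ∧ (∀ s ∈ I, 0 < α s) ∧
        (∀ s ∈ I,
          deriv (deriv α) s - (3 * ((m : ℝ) - 1) / ((m : ℝ) + 2)) * (deriv α s) ^ 2 / α s
            - ((m : ℝ) ^ 2 * ((m : ℝ) + 8) / (4 * ((m : ℝ) - 1))) * (α s) ^ 3 = 0) ∧
        (∀ s ∈ I,
          deriv (deriv α) s - (((m : ℝ) + 5) / ((m : ℝ) + 2)) * (deriv α s) ^ 2 / α s
            + ((m : ℝ) ^ 2 * ((m : ℝ) + 2) / (4 * ((m : ℝ) - 1))) * (α s) ^ 3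
            - (((m : ℝ) + 2) / 3) * c * α s = 0) := by
  rintro ⟨I, α, ⟨s₀, hs₀⟩, hIo, -, hsm, hpos, h1, h2⟩
  set a : ℝ := (m : ℝ) with ha_def
  have ha2 : (2:ℝ) ≤ a := by rw [ha_def]; exact_mod_cast hm
  have h1a : a - 1 ≠ 0 := by linarith
  have h2a : a + 2 ≠ 0 := by linarith
  -- differentiability facts
  have hderivC : ContDiffOn ℝ (⊤ : ℕ∞) (deriv α) I := hsm.deriv_of_isOpen hIo (by simp)
  have hdα : ∀ s ∈ I, HasDerivAt α (deriv α s) s := fun s hs =>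
    (((hsm.differentiableOn (by simp)) s hs).differentiableAt (hIo.mem_nhds hs)).hasDerivAt
  have hdu : ∀ s ∈ I, HasDerivAt (deriv α) (deriv (deriv α) s) s := fun s hs =>
    (((hderivC.differentiableOn (by simp)) s hs).differentiableAt (hIo.mem_nhds hs)).hasDerivAt
  -- locally-constant-square ⇒ derivative vanishes
  have key : ∀ (R : ℝ) (V : Set ℝ), IsOpen V → V ⊆ I → (∀ t ∈ V, (α t) ^ 2 = R) →
      ∀ s ∈ V, deriv α s = 0 := by
    intro R V hVo hVI hsq s hs
    have hev : α =ᶠ[nhds s] fun _ => Real.sqrt R := by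
      filter_upwards [hVo.mem_nhds hs] with t ht
      have h1 := hsq t ht
      have h2 := hpos t (hVI ht)
      rw [← h1, Real.sqrt_sq h2.le]
    rw [hev.deriv_eq, deriv_const]
  -- main step : deriv α vanishes on I
  have hu0 : ∀ s ∈ I, deriv α s = 0 := by
    by_cases hm4 : m = 4
    · -- m = 4 : α² is constant on I directly
      have ha4 : a = 4 := by rw [ha_def, hm4]; norm_num
      refine key (c / 12) I hIo (fun t => id) (fun t ht => ?_)
      have e1 := h1 t ht
      have e2 := h2 t ht
      rw [ha4] at e1 e2
      have hx := hpos t ht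
      have h : α t * ((α t) ^ 2 - c / 12) = 0 := by linear_combination (1/24) * (e2 - e1)
      rcases mul_eq_zero.1 h with h' | h'
      · exact absurd h' (ne_of_gt hx)
      · linarith
    · -- m ≠ 4
      have ha4 : a ≠ 4 := by
        simp only [ha_def]
        exact_mod_cast hm4
      -- relation (iii) on I
      have hF : ∀ t ∈ I, 12*(a-1)*(8-2*a)*(deriv α t)^2
          = 6*a^2*(a+5)*(a+2)*(α t)^4 - 4*(a-1)*(a+2)^2*c*(α t)^2 := by
        intro t ht
        have e1 := h1 t ht
        have e2 := h2 t ht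
        have hx : α t ≠ 0 := (hpos t ht).ne'
        field_simp at e1 e2
        linear_combination 3*e1 - e2
      -- differentiate (iii) : relation (G) on I
      have hG : ∀ t ∈ I, 12*(a-1)*(8-2*a)*(2*(deriv α t)*(deriv (deriv α) t))
          = (6*a^2*(a+5)*(a+2)*(4*(α t)^3) - 4*(a-1)*(a+2)^2*c*(2*(α t))) * deriv α t := by
        intro t ht
        have hGd : HasDerivAt (fun s => 12*(a-1)*(8-2*a)*(deriv α s)^2)
            (12*(a-1)*(8-2*a)*(2*(deriv α t)^1*(deriv (deriv α) t))) t :=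
          ((hdu t ht).pow 2).const_mul _
        have hHd : HasDerivAt (fun s => 6*a^2*(a+5)*(a+2)*(α s)^4 - 4*(a-1)*(a+2)^2*c*(α s)^2)
            (6*a^2*(a+5)*(a+2)*(4*(α t)^3*(deriv α t))
              - 4*(a-1)*(a+2)^2*c*(2*(α t)^1*(deriv α t))) t :=
          (((hdα t ht).pow 4).const_mul _).sub (((hdα t ht).pow 2).const_mul _)
        have hev : (fun s => 12*(a-1)*(8-2*a)*(deriv α s)^2)
            =ᶠ[nhds t] (fun s => 6*a^2*(a+5)*(a+2)*(α s)^4 - 4*(a-1)*(a+2)^2*c*(α s)^2) := by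
          filter_upwards [hIo.mem_nhds ht] with r hr
          exact hF r hr
        have := hev.deriv_eq
        rw [hGd.deriv, hHd.deriv] at this
        linear_combination this
      intro s hs
      by_contra hu
      -- open neighbourhood where deriv α ≠ 0
      set V : Set ℝ := I ∩ (deriv α) ⁻¹' {0}ᶜ with hV_def
      have hVo : IsOpen V :=
        (hderivC.continuousOn).isOpen_inter_preimage hIo isOpen_compl_singleton
      have hVI : V ⊆ I := Set.inter_subset_left
      have hsV : s ∈ V := ⟨hs, hu⟩
      have hC1 : 36*a^2*(a-1)*(a+2)*(12*a+6) ≠ 0 := by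
        have ha0 : (0:ℝ) < a := by linarith
        have : (0:ℝ) < 36*a^2*(a-1)*(a+2)*(12*a+6) :=
          mul_pos (mul_pos (mul_pos (mul_pos (by norm_num) (pow_pos ha0 2))
            (by linarith)) (by linarith)) (by linarith)
        exact this.ne'
      have hsq : ∀ t ∈ V, (α t) ^ 2
          = 12*(a-1)*(5-2*a)*(4*(a-1)*(a+2)^2*c) / (36*a^2*(a-1)*(a+2)*(12*a+6)) := by
        intro t ht
        have htI : t ∈ I := hVI ht
        have hut : deriv α t ≠ 0 := ht.2
        have hx : (0:ℝ) < α t := hpos t htI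
        have hx0 : α t ≠ 0 := hx.ne'
        -- (i) : cancel deriv α t in hG
        have hi : 12*(a-1)*(8-2*a)*(2*(deriv (deriv α) t))
            = 6*a^2*(a+5)*(a+2)*(4*(α t)^3) - 4*(a-1)*(a+2)^2*c*(2*(α t)) := by
          have h := hG t htI
          exact mul_right_cancel₀ hut (by linear_combination h)
        -- (ii) from e1
        have hii : 12*(a-1)*(a+2)*(α t)*(deriv (deriv α) t)
            = 36*(a-1)^2*(deriv α t)^2 + 3*a^2*(a+8)*(a+2)*(α t)^4 := by
          have e1 := h1 t htI
          field_simp at e1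
          linear_combination 3*e1
        have hiii := hF t htI
        have hx4 : 36*a^2*(a-1)*(a+2)*(12*a+6)*(α t)^4
            = 12*(a-1)*(5-2*a)*(4*(a-1)*(a+2)^2*c)*(α t)^2 := by
          linear_combination (12*(a-1)*(8-2*a))*hii + 36*(a-1)^2*hiii
            - (6*(a-1)*(a+2)*(α t))*hi
        have hx2 : (α t)^2 * (36*a^2*(a-1)*(a+2)*(12*a+6))
            = 12*(a-1)*(5-2*a)*(4*(a-1)*(a+2)^2*c) :=
          mul_right_cancel₀ (pow_ne_zero 2 hx0) (by linear_combination hx4)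
        exact eq_div_of_mul_eq hC1 hx2
      exact hu (key _ V hVo hVI hsq s hsV)
  -- second derivative also vanishes on I
  have hw0 : ∀ s ∈ I, deriv (deriv α) s = 0 := by
    intro s hs
    have hev : deriv α =ᶠ[nhds s] fun _ => (0:ℝ) := by
      filter_upwards [hIo.mem_nhds hs] with t ht
      exact hu0 t ht
    rw [hev.deriv_eq, deriv_const]
  -- plug into the first equation at s₀
  have e := h1 s₀ hs₀
  rw [hu0 s₀ hs₀, hw0 s₀ hs₀] at e
  have hx := hpos s₀ hs₀
  have hK : (0:ℝ) < a ^ 2 * (a + 8) / (4 * (a - 1)) :=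
    div_pos (by nlinarith) (by linarith)
  have hx3 : (0:ℝ) < (α s₀) ^ 3 := by positivity
  have e' : a ^ 2 * (a + 8) / (4 * (a - 1)) * (α s₀) ^ 3 = 0 := by linear_combination -e
  nlinarith [mul_pos hK hx3]
end
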